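/- arXiv:2401.05291 — 11 statements merged into one kernel-verified Lean document; each statement's English description precedes it below -/
import Mathlib

section
/- The map which assigns to each partial order ≼ on {1,…,n} the set A(≼) = {x ∈ ℝⁿ : x_i ≤ x_j for all pairs i ≼ j} is a bijection from the set of all partial orders on {1,…,n} onto the set of all cones of the arrangement A_n, i.e., onto the set of all nonempty convex subsets of ℝⁿ that are unions of closures of chambers of A_n. -/
/-- The complement of the union of the hyperplanes `H_{ij} = {x : x i = x j}` (`i ≠ j`)
of the braid arrangement `A_n` in `ℝⁿ`. -/
def hypComplement (n : ℕ) : Set (Fin n → ℝ) :=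
  {x | ∀ i j : Fin n, i ≠ j → x i ≠ x j}

/-- A chamber of the arrangement `A_n`: a connected component of the complement of the
union of the hyperplanes. -/
def IsChamber (n : ℕ) (C : Set (Fin n → ℝ)) : Prop :=
  ∃ x ∈ hypComplement n, C = connectedComponentIn (hypComplement n) x

/-- A cone of the arrangement `A_n`: a nonempty convex subset of `ℝⁿ` which is a union of
closures of chambers. -/
def IsCone (n : ℕ) (A : Set (Fin n → ℝ)) : Prop :=
  A.Nonempty ∧ Convex ℝ A ∧
    ∃ 𝒞 : Set (Set (Fin n → ℝ)), (∀ C ∈ 𝒞, IsChamber n C) ∧ A = ⋃ C ∈ 𝒞, closure C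

namespace Braid

attribute [local instance] Classical.propDecidable

variable {n : ℕ}

/-- open chamber determined by a point's strict pattern -/
def Sx (x : Fin n → ℝ) : Set (Fin n → ℝ) := {y | ∀ i j, x i < x j → y i < y j}

/-- its closure -/
def Tx (x : Fin n → ℝ) : Set (Fin n → ℝ) := {y | ∀ i j, x i < x j → y i ≤ y j}

lemma mem_Sx_self (x : Fin n → ℝ) : x ∈ Sx x := fun _ _ h => h

lemma Sx_subset_Tx (x : Fin n → ℝ) : Sx x ⊆ Tx x := fun _ h i j hij => (h i j hij).le

lemma convex_Sx (x : Fin n → ℝ) : Convex ℝ (Sx x) := by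
  intro y hy z hz a b ha hb hab i j hij
  rcases eq_or_lt_of_le ha with h0 | hpos
  · have hb1 : b = 1 := by linarith
    simp only [← h0, hb1, Pi.add_apply, Pi.smul_apply, smul_eq_mul, zero_mul, one_mul, zero_add]
    exact hz i j hij
  · have h1 : a * y i < a * y j := by
      exact (mul_lt_mul_iff_right₀ hpos).2 (hy i j hij)
    have h2 : b * z i ≤ b * z j := mul_le_mul_of_nonneg_left (hz i j hij).le hb
    simp only [Pi.add_apply, Pi.smul_apply, smul_eq_mul]
    linarith

lemma isOpen_Sx (x : Fin n → ℝ) : IsOpen (Sx x) := by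
  have : Sx x = ⋂ i, ⋂ j, {y : Fin n → ℝ | x i < x j → y i < y j} := by
    ext y; simp [Sx]
  rw [this]
  refine isOpen_iInter_of_finite fun i => isOpen_iInter_of_finite fun j => ?_
  by_cases h : x i < x j
  · simp only [h, forall_true_left]
    exact isOpen_lt (continuous_apply i) (continuous_apply j)
  · simp only [h]
    simpa using isOpen_univ

lemma isClosed_Tx (x : Fin n → ℝ) : IsClosed (Tx x) := by
  have : Tx x = ⋂ i, ⋂ j, {y : Fin n → ℝ | x i < x j → y i ≤ y j} := by
    ext y; simp [Tx]
  rw [this]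
  refine isClosed_iInter fun i => isClosed_iInter fun j => ?_
  by_cases h : x i < x j
  · simp only [h, forall_true_left]
    exact isClosed_le (continuous_apply i) (continuous_apply j)
  · simp only [h]
    simpa using isClosed_univ

lemma closure_Sx (x : Fin n → ℝ) : closure (Sx x) = Tx x := by
  refine le_antisymm (closure_minimal (Sx_subset_Tx x) (isClosed_Tx x)) ?_
  intro y hy
  have hseq : Filter.Tendsto (fun m : ℕ => (fun k => (1 - 1/(m+1 : ℝ)) * y k + (1/(m+1 : ℝ)) * x k))
      Filter.atTop (nhds y) := by
    have h0 : Filter.Tendsto (fun m : ℕ => 1/(m+1 : ℝ)) Filter.atTop (nhds 0) :=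
      tendsto_one_div_add_atTop_nhds_zero_nat
    rw [tendsto_pi_nhds]
    intro k
    have : Filter.Tendsto (fun m : ℕ => (1 - 1/(m+1 : ℝ)) * y k + (1/(m+1 : ℝ)) * x k)
        Filter.atTop (nhds ((1 - 0) * y k + 0 * x k)) := by
      exact (((tendsto_const_nhds.sub h0).mul tendsto_const_nhds).add (h0.mul tendsto_const_nhds))
    simpa using this
  refine mem_closure_of_tendsto hseq (Filter.Eventually.of_forall fun m => ?_)
  intro i j hij
  have hc0 : (0:ℝ) < 1/(m+1 : ℝ) := by positivity
  have hc1 : 1/(m+1 : ℝ) ≤ 1 := by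
    rw [div_le_one (by positivity)]; linarith [Nat.cast_nonneg (α := ℝ) m]
  have h1 : (1 - 1/(m+1:ℝ)) * y i ≤ (1 - 1/(m+1:ℝ)) * y j :=
    mul_le_mul_of_nonneg_left (hy i j hij) (by linarith)
  have h2 : (1/(m+1:ℝ)) * x i < (1/(m+1:ℝ)) * x j := (mul_lt_mul_iff_right₀ hc0).2 hij
  show _ < _
  linarith

lemma Sx_subset_hyp {x : Fin n → ℝ} (hx : x ∈ hypComplement n) : Sx x ⊆ hypComplement n := by
  intro y hy i j hij
  rcases lt_or_gt_of_ne (hx i j hij) with h | h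
  · exact (hy i j h).ne
  · exact (hy j i h).ne'

/-- the chamber of a point of the complement is exactly its pattern set -/
lemma connectedComponentIn_eq_Sx {x : Fin n → ℝ} (hx : x ∈ hypComplement n) :
    connectedComponentIn (hypComplement n) x = Sx x := by
  apply le_antisymm
  · -- component ⊆ Sx x
    set U : Set (Fin n → ℝ) := ⋃ p : Fin n × Fin n, {y | x p.1 < x p.2 ∧ y p.2 < y p.1} with hU
    have hUopen : IsOpen U := by
      refine isOpen_iUnion fun p => ?_
      by_cases h : x p.1 < x p.2
      · have : {y : Fin n → ℝ | x p.1 < x p.2 ∧ y p.2 < y p.1} = {y | y p.2 < y p.1} := by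
          ext y; simp [h]
        rw [this]; exact isOpen_lt (continuous_apply p.2) (continuous_apply p.1)
      · have : {y : Fin n → ℝ | x p.1 < x p.2 ∧ y p.2 < y p.1} = ∅ := by
          ext y; simp [h]
        rw [this]; exact isOpen_empty
    have hdisj : Disjoint (Sx x) U := by
      rw [Set.disjoint_left]
      rintro y hy hyU
      simp only [hU, Set.mem_iUnion] at hyU
      obtain ⟨p, h1, h2⟩ := hyU
      exact absurd (hy p.1 p.2 h1) (not_lt.2 h2.le)
    have hsub : connectedComponentIn (hypComplement n) x ⊆ Sx x ∪ U := by
      intro y hy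
      have hyh : y ∈ hypComplement n := connectedComponentIn_subset _ _ hy
      by_cases h : y ∈ Sx x
      · exact Or.inl h
      · right
        simp only [Sx, Set.mem_setOf_eq, not_forall] at h
        obtain ⟨i, j, hij, hnot⟩ := h
        have hij' : i ≠ j := by rintro rfl; exact lt_irrefl _ hij
        have hne : y i ≠ y j := hyh i j hij'
        have : y j < y i := lt_of_le_of_ne (not_lt.1 hnot) (Ne.symm hne)
        exact Set.mem_iUnion.2 ⟨(i, j), hij, this⟩
    exact (isPreconnected_connectedComponentIn).subset_left_of_subset_union
      (isOpen_Sx x) hUopen hdisj hsub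
      ⟨x, mem_connectedComponentIn hx, mem_Sx_self x⟩
  · exact ((convex_Sx x).isPreconnected).subset_connectedComponentIn (mem_Sx_self x)
      (Sx_subset_hyp hx)

lemma isChamber_Sx {x : Fin n → ℝ} (hx : x ∈ hypComplement n) : IsChamber n (Sx x) :=
  ⟨x, hx, (connectedComponentIn_eq_Sx hx).symm⟩

lemma isChamber_iff {C : Set (Fin n → ℝ)} :
    IsChamber n C ↔ ∃ x ∈ hypComplement n, C = Sx x := by
  constructor
  · rintro ⟨x, hx, rfl⟩; exact ⟨x, hx, connectedComponentIn_eq_Sx hx⟩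
  · rintro ⟨x, hx, rfl⟩; exact isChamber_Sx hx



lemma isLinearOrder_mk {α : Type*} {r : α → α → Prop} (hrefl : ∀ a, r a a)
    (htrans : ∀ a b c, r a b → r b c → r a c) (hanti : ∀ a b, r a b → r b a → a = b)
    (htot : ∀ a b, r a b ∨ r b a) : IsLinearOrder α r := by
  haveI : IsRefl _ r := ⟨hrefl⟩
  haveI : IsTrans _ r := ⟨htrans⟩
  haveI : IsPreorder _ r := {}
  haveI : IsAntisymm _ r := ⟨hanti⟩
  haveI : IsPartialOrder _ r := {}
  haveI : IsTotal _ r := ⟨htot⟩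
  exact {}

/-- chamber of a linear order relation -/
def S (r : Fin n → Fin n → Prop) : Set (Fin n → ℝ) := {y | ∀ i j, r i j → i ≠ j → y i < y j}

/-- closed chamber / order cone of a relation -/
def T (r : Fin n → Fin n → Prop) : Set (Fin n → ℝ) := {y | ∀ i j, r i j → y i ≤ y j}

/-- rank realizer of a relation -/
noncomputable def pt (r : Fin n → Fin n → Prop) : Fin n → ℝ :=
  fun k => ((Finset.univ.filter (fun m => r m k)).card : ℝ)

section real
variable {r : Fin n → Fin n → Prop} (hr : IsLinearOrder (Fin n) r)
include hr

lemma pt_lt_pt {i j : Fin n} (h : r i j) (hne : i ≠ j) : pt r i + 1 ≤ pt r j := by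
  have hsub : Finset.univ.filter (fun m => r m i) ⊂ Finset.univ.filter (fun m => r m j) := by
    constructor
    · intro k hk
      simp only [Finset.mem_filter, Finset.mem_univ, true_and] at hk ⊢
      exact hr.trans _ _ _ hk h
    · intro hs
      have := hs (Finset.mem_filter.2 ⟨Finset.mem_univ j, hr.refl j⟩)
      simp only [Finset.mem_filter, Finset.mem_univ, true_and] at this
      exact hne (hr.antisymm _ _ h this)
  have hcard := Finset.card_lt_card hsub
  have : (Finset.univ.filter (fun m => r m i)).card + 1 ≤
      (Finset.univ.filter (fun m => r m j)).card := hcard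
  unfold pt
  exact_mod_cast this

lemma pt_lt_iff {i j : Fin n} (hne : i ≠ j) : pt r i < pt r j ↔ r i j := by
  constructor
  · intro h
    by_contra hn
    have : r j i := (hr.total j i).resolve_right hn
    have := pt_lt_pt hr this hne.symm
    linarith
  · intro h; linarith [pt_lt_pt hr h hne]

lemma pt_mem_hyp : pt r ∈ hypComplement n := by
  intro i j hne
  rcases hr.total i j with h | h
  · exact ne_of_lt (by linarith [pt_lt_pt hr h hne])
  · exact ne_of_gt (by linarith [pt_lt_pt hr h hne.symm])

lemma pt_mem_S : pt r ∈ S r := fun i j h hne => by linarith [pt_lt_pt hr h hne]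

lemma Sx_pt_eq : Sx (pt r) = S r := by
  ext y
  constructor
  · intro hy i j h hne
    exact hy i j ((pt_lt_iff hr hne).2 h)
  · intro hy i j h
    have hne : i ≠ j := by rintro rfl; exact lt_irrefl _ h
    exact hy i j ((pt_lt_iff hr hne).1 h) hne

lemma Tx_pt_eq : Tx (pt r) = T r := by
  ext y
  constructor
  · intro hy i j h
    rcases eq_or_ne i j with rfl | hne
    · exact le_refl _
    · exact hy i j ((pt_lt_iff hr hne).2 h)
  · intro hy i j h
    have hne : i ≠ j := by rintro rfl; exact lt_irrefl _ h
    exact (hy i j ((pt_lt_iff hr hne).1 h))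

lemma closure_S : closure (S r) = T r := by
  rw [← Sx_pt_eq hr, closure_Sx, Tx_pt_eq hr]

lemma isChamber_S : IsChamber n (S r) := by
  rw [← Sx_pt_eq hr]; exact isChamber_Sx (pt_mem_hyp hr)

/-- a point in the open chamber of a linear order has pattern exactly `r` -/
lemma Sx_eq_S_of_mem {u : Fin n → ℝ} (hu : u ∈ S r) : Sx u = S r := by
  have key : ∀ a b, u a < u b ↔ (r a b ∧ a ≠ b) := by
    intro a b
    constructor
    · intro h
      have hab : a ≠ b := by rintro rfl; exact lt_irrefl _ h
      refine ⟨?_, hab⟩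
      by_contra hn
      have : r b a := (hr.total a b).resolve_left hn
      exact absurd (hu b a this hab.symm) (not_lt.2 h.le)
    · rintro ⟨h, hne⟩; exact hu a b h hne
  ext y
  constructor
  · intro hy a b h hne
    exact hy a b ((key a b).2 ⟨h, hne⟩)
  · intro hy a b h
    obtain ⟨h1, h2⟩ := (key a b).1 h
    exact hy a b h1 h2

end real

lemma isClosed_T (r : Fin n → Fin n → Prop) : IsClosed (T r) := by
  have : T r = ⋂ i, ⋂ j, {y : Fin n → ℝ | r i j → y i ≤ y j} := by
    ext y; simp [T]
  rw [this]
  refine isClosed_iInter fun i => isClosed_iInter fun j => ?_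
  by_cases h : r i j
  · simp only [h, forall_true_left]
    exact isClosed_le (continuous_apply i) (continuous_apply j)
  · simp only [h]
    simp

lemma convex_T (r : Fin n → Fin n → Prop) : Convex ℝ (T r) := by
  intro y hy z hz a b ha hb hab i j hij
  have h1 : a * y i ≤ a * y j := mul_le_mul_of_nonneg_left (hy i j hij) ha
  have h2 : b * z i ≤ b * z j := mul_le_mul_of_nonneg_left (hz i j hij) hb
  simp only [Pi.add_apply, Pi.smul_apply, smul_eq_mul]
  linarith

/-- extend a partial order to a linear order compatible with a point of its cone -/
lemma exists_linear_extension_compatible (po : PartialOrder (Fin n)) {y : Fin n → ℝ}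
    (hy : y ∈ T po.le) :
    ∃ r : Fin n → Fin n → Prop, IsLinearOrder (Fin n) r ∧ (∀ a b, po.le a b → r a b) ∧
      (∀ a b, r a b → y a ≤ y b) := by
  haveI : IsPartialOrder (Fin n) po.le := by
    letI := po
    exact ⟨⟩
  obtain ⟨L, hL, hpoL⟩ := extend_partialOrder po.le
  refine ⟨fun a b => y a < y b ∨ (y a = y b ∧ L a b), isLinearOrder_mk ?_ ?_ ?_ ?_, ?_, ?_⟩
  · intro a; exact Or.inr ⟨rfl, hL.refl a⟩
  · rintro a b c (h1 | ⟨h1, h1'⟩) (h2 | ⟨h2, h2'⟩)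
    · exact Or.inl (h1.trans h2)
    · exact Or.inl (h2 ▸ h1)
    · exact Or.inl (h1 ▸ h2)
    · exact Or.inr ⟨h1.trans h2, hL.trans _ _ _ h1' h2'⟩
  · rintro a b (h1 | ⟨h1, h1'⟩) (h2 | ⟨h2, h2'⟩)
    · exact absurd (h1.trans h2) (lt_irrefl _)
    · exact absurd h1 (h2 ▸ lt_irrefl _)
    · exact absurd h2 (h1 ▸ lt_irrefl _)
    · exact hL.antisymm _ _ h1' h2'
  · intro a b
    rcases lt_trichotomy (y a) (y b) with h | h | h
    · exact Or.inl (Or.inl h)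
    · rcases hL.total a b with h' | h'
      · exact Or.inl (Or.inr ⟨h, h'⟩)
      · exact Or.inr (Or.inr ⟨h.symm, h'⟩)
    · exact Or.inr (Or.inl h)
  · intro a b hab
    have h1 : y a ≤ y b := hy a b hab
    have h2 : L a b := hpoL a b hab
    rcases eq_or_lt_of_le h1 with h | h
    · exact Or.inr ⟨h, h2⟩
    · exact Or.inl h
  · rintro a b (h | ⟨h, _⟩)
    · exact h.le
    · exact h.le

/-- natural-number rank -/
lemma rk_lt_rk {r : Fin n → Fin n → Prop} (hr : IsLinearOrder (Fin n) r) {i j : Fin n}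
    (h : r i j) (hne : i ≠ j) :
    (Finset.univ.filter (fun m => r m i)).card < (Finset.univ.filter (fun m => r m j)).card := by
  have := pt_lt_pt hr h hne
  unfold pt at this
  exact_mod_cast (by linarith : ((Finset.univ.filter (fun m => r m i)).card : ℝ) <
    ((Finset.univ.filter (fun m => r m j)).card : ℝ))

lemma finite_chambers : {C : Set (Fin n → ℝ) | IsChamber n C}.Finite := by
  apply Set.Finite.subset (Set.finite_range
    (fun r : Fin n → Fin n → Prop => {y : Fin n → ℝ | ∀ i j, r i j → y i < y j}))
  intro C hC
  obtain ⟨x, hx, rfl⟩ := isChamber_iff.1 hC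
  exact ⟨fun i j => x i < x j, rfl⟩

section walk

variable {A : Set (Fin n → ℝ)}

/-- absorption: if a point of A has all-distinct coordinates, the closed chamber around it
is contained in A -/
lemma absorb (𝒞 : Set (Set (Fin n → ℝ))) (h𝒞 : ∀ C ∈ 𝒞, IsChamber n C)
    (hA : A = ⋃ C ∈ 𝒞, closure C) {z : Fin n → ℝ} (hz : z ∈ A) (hzh : z ∈ hypComplement n) :
    closure (Sx z) ⊆ A := by
  rw [hA] at hz
  obtain ⟨C, hC, hzC⟩ := Set.mem_iUnion₂.1 hz
  obtain ⟨w, hw, rfl⟩ := isChamber_iff.1 (h𝒞 C hC)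
  rw [closure_Sx] at hzC
  have key : ∀ a b, w a < w b ↔ z a < z b := by
    intro a b
    constructor
    · intro h
      have hne : a ≠ b := by rintro rfl; exact lt_irrefl _ h
      exact lt_of_le_of_ne (hzC a b h) (hzh a b hne)
    · intro h
      have hne : a ≠ b := by rintro rfl; exact lt_irrefl _ h
      rcases lt_or_gt_of_ne (hw a b hne) with h' | h'
      · exact h'
      · exact absurd (hzC b a h') (not_le.2 h)
  have hSeq : Sx z = Sx w := by
    ext y
    exact ⟨fun hy a b h => hy a b ((key a b).1 h), fun hy a b h => hy a b ((key a b).2 h)⟩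
  rw [hSeq, hA]
  exact Set.subset_biUnion_of_mem hC

/-- the inversion count of `m` against target `l` -/
noncomputable def inv (l m : Fin n → Fin n → Prop) : ℕ :=
  (Finset.univ.filter (fun p : Fin n × Fin n => m p.1 p.2 ∧ p.1 ≠ p.2 ∧ ¬ l p.1 p.2)).card

lemma walk (hconv : Convex ℝ A)
    (habs : ∀ z ∈ A, z ∈ hypComplement n → closure (Sx z) ⊆ A)
    {l : Fin n → Fin n → Prop} (hl : IsLinearOrder (Fin n) l)
    (hlpo : ∀ a b, (∀ x ∈ A, x a ≤ x b) → l a b) :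
    ∀ (k : ℕ) (m : Fin n → Fin n → Prop), IsLinearOrder (Fin n) m →
      (∀ a b, (∀ x ∈ A, x a ≤ x b) → m a b) → pt m ∈ A → inv l m = k → pt l ∈ A := by
  intro k
  induction k with
  | zero =>
    intro m hm _ hmA hk
    -- m = l on distinct pairs, so S m = S l
    have hml : ∀ a b, a ≠ b → (m a b ↔ l a b) := by
      intro a b hne
      constructor
      · intro h
        by_contra hn
        have : ((a, b) : Fin n × Fin n) ∈
            Finset.univ.filter (fun p : Fin n × Fin n => m p.1 p.2 ∧ p.1 ≠ p.2 ∧ ¬ l p.1 p.2) :=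
          Finset.mem_filter.2 ⟨Finset.mem_univ _, h, hne, hn⟩
        have hpos := Finset.card_pos.2 ⟨_, this⟩
        unfold inv at hk
        omega
      · intro h
        by_contra hn
        have hba : m b a := (hm.total a b).resolve_left hn
        have : ¬ l b a := fun h' => hne (hl.antisymm _ _ h h')
        have hmem : ((b, a) : Fin n × Fin n) ∈
            Finset.univ.filter (fun p : Fin n × Fin n => m p.1 p.2 ∧ p.1 ≠ p.2 ∧ ¬ l p.1 p.2) :=
          Finset.mem_filter.2 ⟨Finset.mem_univ _, hba, hne.symm, this⟩
        have hpos := Finset.card_pos.2 ⟨_, hmem⟩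
        unfold inv at hk
        omega
    have hS : S m = S l := by
      ext y
      constructor
      · intro hy a b h hne; exact hy a b ((hml a b hne).2 h) hne
      · intro hy a b h hne; exact hy a b ((hml a b hne).1 h) hne
    have h1 : closure (Sx (pt m)) ⊆ A := habs _ hmA (pt_mem_hyp hm)
    have h2 : pt l ∈ Sx (pt m) := by
      rw [Sx_pt_eq hm, hS]
      exact pt_mem_S hl
    exact h1 (subset_closure h2)
  | succ k ih =>
    intro m hm hmpo hmA hk
    set D := Finset.univ.filter (fun p : Fin n × Fin n => m p.1 p.2 ∧ p.1 ≠ p.2 ∧ ¬ l p.1 p.2)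
      with hD
    have hkD : D.card = k + 1 := by unfold inv at hk; rw [← hD] at hk; exact hk
    have hDne : D.Nonempty := by rw [← Finset.card_pos]; omega
    set rk : Fin n → ℕ := fun a => (Finset.univ.filter (fun c => m c a)).card with hrk
    obtain ⟨p, hpD, hpmin⟩ := Finset.exists_min_image D (fun p => rk p.2 - rk p.1) hDne
    obtain ⟨i, j⟩ := p
    rw [hD, Finset.mem_filter] at hpD
    obtain ⟨-, hmij, hijne, hlij⟩ := hpD
    have hrkij : rk i < rk j := rk_lt_rk hm hmij hijne
    have hlji : l j i := (hl.total i j).resolve_left hlij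
    have hadj : ∀ c, ¬ (m i c ∧ c ≠ i ∧ m c j ∧ c ≠ j) := by
      rintro c ⟨h1, h2, h3, h4⟩
      have hric : rk i < rk c := rk_lt_rk hm h1 (Ne.symm h2)
      have hrcj : rk c < rk j := rk_lt_rk hm h3 h4
      rcases Classical.em (l i c) with hic | hic
      · have hlcj : ¬ l c j := fun h => hlij (hl.trans _ _ _ hic h)
        have hmem : ((c, j) : Fin n × Fin n) ∈ D := by
          rw [hD, Finset.mem_filter]; exact ⟨Finset.mem_univ _, h3, h4, hlcj⟩
        have := hpmin _ hmem
        simp only at this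
        omega
      · have hmem : ((i, c) : Fin n × Fin n) ∈ D := by
          rw [hD, Finset.mem_filter]; exact ⟨Finset.mem_univ _, h1, Ne.symm h2, hic⟩
        have := hpmin _ hmem
        simp only at this
        omega
    have lad1 : ∀ c, c ≠ i → c ≠ j → (m i c ↔ m j c) := by
      intro c hci hcj
      constructor
      · intro h
        by_contra hn
        exact hadj c ⟨h, hci, (hm.total j c).resolve_left hn, hcj⟩
      · intro h; exact hm.trans _ _ _ hmij h
    have lad2 : ∀ c, c ≠ i → c ≠ j → (m c j ↔ m c i) := by
      intro c hci hcj
      constructor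
      · intro h
        by_contra hn
        exact hadj c ⟨(hm.total c i).resolve_left hn, hci, h, hcj⟩
      · intro h; exact hm.trans _ _ _ h hmij
    set σ := Equiv.swap i j with hσ
    set m' : Fin n → Fin n → Prop := fun a b => m (σ a) (σ b) with hm'def
    have hm' : IsLinearOrder (Fin n) m' := isLinearOrder_mk
      (fun a => hm.refl _) (fun a b c h1 h2 => hm.trans _ _ _ h1 h2)
      (fun a b h1 h2 => σ.injective (hm.antisymm _ _ h1 h2))
      (fun a b => hm.total _ _)
    have hσi : σ i = j := Equiv.swap_apply_left i j
    have hσj : σ j = i := Equiv.swap_apply_right i j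
    have hσc : ∀ c, c ≠ i → c ≠ j → σ c = c := fun c h1 h2 => Equiv.swap_apply_of_ne_of_ne h1 h2
    have hpat : ∀ a b, ¬(a = i ∧ b = j) → ¬(a = j ∧ b = i) → (m' a b ↔ m a b) := by
      intro a b h1 h2
      show m (σ a) (σ b) ↔ m a b
      by_cases hai : a = i
      · by_cases hbi : b = i
        · rw [hai, hbi]; exact iff_of_true (hm.refl _) (hm.refl _)
        · by_cases hbj : b = j
          · exact absurd ⟨hai, hbj⟩ h1
          · rw [hai, hσi, hσc b hbi hbj]; exact (lad1 b hbi hbj).symm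
      · by_cases haj : a = j
        · by_cases hbi : b = i
          · exact absurd ⟨haj, hbi⟩ h2
          · by_cases hbj : b = j
            · rw [haj, hbj]; exact iff_of_true (hm.refl _) (hm.refl _)
            · rw [haj, hσj, hσc b hbi hbj]; exact lad1 b hbi hbj
        · by_cases hbi : b = i
          · rw [hbi, hσi, hσc a hai haj]; exact lad2 a hai haj
          · by_cases hbj : b = j
            · rw [hbj, hσj, hσc a hai haj]; exact (lad2 a hai haj).symm
            · rw [hσc a hai haj, hσc b hbi hbj]
    have hm'ij : ¬ m' i j := by
      show ¬ m (σ i) (σ j)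
      rw [hσi, hσj]
      intro h
      exact hijne (hm.antisymm _ _ hmij h)
    have hm'po : ∀ a b, (∀ x ∈ A, x a ≤ x b) → m' a b := by
      intro a b hab
      have hmab : m a b := hmpo a b hab
      have hlab : l a b := hlpo a b hab
      by_cases h1 : a = i ∧ b = j
      · obtain ⟨rfl, rfl⟩ := h1; exact absurd hlab hlij
      · by_cases h2 : a = j ∧ b = i
        · obtain ⟨rfl, rfl⟩ := h2
          exact absurd (hm.antisymm _ _ hmab hmij) (Ne.symm hijne)
        · exact (hpat a b h1 h2).2 hmab
    have hq : ∃ q ∈ A, q j < q i := by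
      by_contra hn
      push_neg at hn
      exact hlij (hlpo i j hn)
    obtain ⟨q, hqA, hqji⟩ := hq
    set z : Fin n → ℝ := fun c => if c = i then pt m j else pt m c with hzdef
    have hzval : ∀ c, c ≠ i → z c = pt m c := by intro c h; rw [hzdef]; simp [h]
    have hzi : z i = pt m j := by rw [hzdef]; simp
    have hzT : z ∈ Tx (pt m) := by
      intro a b hab
      have hne : a ≠ b := by rintro rfl; exact lt_irrefl _ hab
      have hmab : m a b := (pt_lt_iff hm hne).1 hab
      by_cases hai : a = i
      · by_cases hbj : b = j
        · rw [hai, hbj, hzi, hzval j (Ne.symm hijne)]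
        · have hbi : b ≠ i := fun h => hne (hai.trans h.symm)
          have hmib : m i b := by rw [← hai]; exact hmab
          have h1 : m j b := (lad1 b hbi hbj).1 hmib
          rw [hai, hzi, hzval b hbi]
          linarith [pt_lt_pt hm h1 (Ne.symm hbj)]
      · by_cases hbi : b = i
        · have h1 : pt m a < pt m i := by rw [← hbi]; exact hab
          rw [hzval a hai, hbi, hzi]
          linarith [pt_lt_pt hm hmij hijne, h1]
        · rw [hzval a hai, hzval b hbi]; exact hab.le
    have hzA : z ∈ A := by
      have h1 := habs _ hmA (pt_mem_hyp hm)
      rw [closure_Sx] at h1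
      exact h1 hzT
    have huniv : (Finset.univ : Finset (Fin n × Fin n)).Nonempty := ⟨(i, i), Finset.mem_univ _⟩
    set Q := Finset.univ.image (fun p : Fin n × Fin n => |q p.1 - q p.2|) with hQ
    have hQne : Q.Nonempty := huniv.image _
    set M := 1 + Q.max' hQne with hM
    have hMbound : ∀ a b, |q a - q b| ≤ M - 1 := by
      intro a b
      have h1 : |q a - q b| ∈ Q := by rw [hQ]; exact Finset.mem_image.2 ⟨(a, b), Finset.mem_univ _, rfl⟩
      have := Q.le_max' _ h1
      rw [hM]; linarith
    have hM1 : 1 ≤ M := by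
      have h1 := hMbound i i
      simp only [sub_self, abs_zero] at h1
      linarith
    set t : ℝ := 1/(2*M) with ht
    have htpos : 0 < t := by rw [ht]; positivity
    have htM : t * M = 1/2 := by
      have hM0 : M ≠ 0 := by linarith
      rw [ht]
      field_simp
    have hthalf : t ≤ 1/2 := by
      rw [ht, div_le_div_iff₀ (by positivity) (by norm_num)]
      linarith
    set u : Fin n → ℝ := fun c => (1 - t) * z c + t * q c with hu
    have huA : u ∈ A := by
      have h := hconv hzA hqA (by linarith : (0:ℝ) ≤ 1 - t) (le_of_lt htpos) (by ring)
      have heq : u = (1 - t) • z + t • q := by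
        funext c
        simp [hu, smul_eq_mul]
      rw [heq]; exact h
    have huS : u ∈ S m' := by
      intro a b hab hne
      by_cases hji' : a = j ∧ b = i
      · obtain ⟨haj, hbi⟩ := hji'
        have hzz : z b - z a = 0 := by
          rw [hbi, haj, hzi, hzval j (Ne.symm hijne), sub_self]
        have he : u b - u a = (1 - t) * (z b - z a) + t * (q b - q a) := by
          simp only [hu]; ring
        rw [hzz, mul_zero, zero_add] at he
        have hq' : (0:ℝ) < q b - q a := by rw [hbi, haj]; linarith
        have := mul_pos htpos hq'
        linarith
      · by_cases hij' : a = i ∧ b = j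
        · obtain ⟨rfl, rfl⟩ := hij'; exact absurd hab hm'ij
        · have hab' : m (σ a) (σ b) := hab
          have key : z a + 1 ≤ z b := by
            by_cases hai : a = i
            · have hbi : b ≠ i := fun h => hne (hai.trans h.symm)
              have hbj : b ≠ j := fun h => hij' ⟨hai, h⟩
              have h1 : m j b := by rw [hai, hσi, hσc b hbi hbj] at hab'; exact hab'
              rw [hai, hzi, hzval b hbi]
              exact pt_lt_pt hm h1 (Ne.symm hbj)
            · by_cases haj : a = j
              · have hbj : b ≠ j := fun h => hne (haj.trans h.symm)
                have hbi : b ≠ i := fun h => hji' ⟨haj, h⟩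
                have h1 : m i b := by rw [haj, hσj, hσc b hbi hbj] at hab'; exact hab'
                have h2 : m j b := (lad1 b hbi hbj).1 h1
                rw [haj, hzval j (Ne.symm hijne), hzval b hbi]
                exact pt_lt_pt hm h2 (Ne.symm hbj)
              · by_cases hbi : b = i
                · have h1 : m a j := by rw [hbi, hσi, hσc a hai haj] at hab'; exact hab'
                  rw [hbi, hzval a hai, hzi]
                  exact pt_lt_pt hm h1 haj
                · by_cases hbj : b = j
                  · have h1 : m a i := by rw [hbj, hσj, hσc a hai haj] at hab'; exact hab'
                    have h2 : m a j := hm.trans _ _ _ h1 hmij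
                    rw [hbj, hzval a hai, hzval j (Ne.symm hijne)]
                    exact pt_lt_pt hm h2 haj
                  · have h1 : m a b := by
                      rw [hσc a hai haj, hσc b hbi hbj] at hab'; exact hab'
                    rw [hzval a hai, hzval b hbi]
                    exact pt_lt_pt hm h1 hne
          have e1 : (1 - t) * 1 ≤ (1 - t) * (z b - z a) :=
            mul_le_mul_of_nonneg_left (by linarith) (by linarith)
          have e2 : -(M - 1) ≤ q b - q a := by
            have := (abs_le.1 (hMbound a b)).2
            linarith
          have e3 : t * (-(M - 1)) ≤ t * (q b - q a) :=
            mul_le_mul_of_nonneg_left e2 htpos.le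
          have he : u b - u a = (1 - t) * (z b - z a) + t * (q b - q a) := by
            simp only [hu]; ring
          nlinarith [e1, e3, htM, he]
    have huhyp : u ∈ hypComplement n := by
      intro a b hne
      rcases hm'.total a b with h | h
      · exact (huS a b h hne).ne
      · exact (huS b a h (Ne.symm hne)).ne'
    have hptm' : pt m' ∈ A := by
      have h1 := habs u huA huhyp
      rw [Sx_eq_S_of_mem hm' huS] at h1
      exact h1 (subset_closure (pt_mem_S hm'))
    have hDnew : Finset.univ.filter
        (fun p : Fin n × Fin n => m' p.1 p.2 ∧ p.1 ≠ p.2 ∧ ¬ l p.1 p.2) = D.erase (i, j) := by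
      ext ⟨a, b⟩
      rw [hD]
      simp only [Finset.mem_filter, Finset.mem_erase, Finset.mem_univ, true_and]
      constructor
      · rintro ⟨h1, h2, h3⟩
        by_cases hij' : a = i ∧ b = j
        · obtain ⟨rfl, rfl⟩ := hij'; exact absurd h1 hm'ij
        · by_cases hji' : a = j ∧ b = i
          · obtain ⟨rfl, rfl⟩ := hji'; exact absurd hlji h3
          · refine ⟨?_, (hpat a b hij' hji').1 h1, h2, h3⟩
            intro h
            rw [Prod.mk.injEq] at h
            exact hij' h
      · rintro ⟨hne', h1, h2, h3⟩
        by_cases hji' : a = j ∧ b = i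
        · obtain ⟨rfl, rfl⟩ := hji'
          exact absurd (hm.antisymm _ _ hmij h1) hijne
        · have hij' : ¬(a = i ∧ b = j) := by rintro ⟨rfl, rfl⟩; exact hne' rfl
          exact ⟨(hpat a b hij' hji').2 h1, h2, h3⟩
    have hk' : inv l m' = k := by
      unfold inv
      rw [hDnew, Finset.card_erase_of_mem]
      · omega
      · rw [hD, Finset.mem_filter]; exact ⟨Finset.mem_univ _, hmij, hijne, hlij⟩
    exact ih m' hm' hm'po hptm' hk'

end walk

lemma isCone_T (po : PartialOrder (Fin n)) : IsCone n (T po.le) := by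
  refine ⟨⟨fun _ => 0, fun i j _ => le_refl _⟩, convex_T _,
    {C | IsChamber n C ∧ C ⊆ T po.le}, fun C hC => hC.1, ?_⟩
  apply Set.Subset.antisymm
  · intro y hy
    obtain ⟨r, hr, hrpo, hry⟩ := exists_linear_extension_compatible po hy
    have hsub : S r ⊆ T po.le := by
      intro w hw i j hij
      rcases eq_or_ne i j with rfl | hne
      · exact le_refl _
      · exact (hw i j (hrpo i j hij) hne).le
    refine Set.mem_biUnion (⟨isChamber_S hr, hsub⟩ :
      S r ∈ {C | IsChamber n C ∧ C ⊆ T po.le}) ?_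
    rw [closure_S hr]
    exact fun i j hij => hry i j hij
  · intro y hy
    obtain ⟨C, hC, hyC⟩ := Set.mem_iUnion₂.1 hy
    have h1 := closure_mono hC.2
    rw [(isClosed_T po.le).closure_eq] at h1
    exact h1 hyC

lemma exists_point_reverse (po : PartialOrder (Fin n)) {a b : Fin n} (h : ¬ po.le a b) :
    ∃ x ∈ T po.le, x b < x a := by
  have hab : a ≠ b := fun he => h (he ▸ po.le_refl a)
  set s : Fin n → Fin n → Prop := fun u v => po.le u v ∨ (po.le u b ∧ po.le a v) with hs
  haveI h1 : IsRefl (Fin n) s := ⟨fun u => Or.inl (po.le_refl u)⟩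
  haveI h2 : IsTrans (Fin n) s := ⟨by
    rintro u v w (h1 | ⟨h1, h1'⟩) (h2 | ⟨h2, h2'⟩)
    · exact Or.inl (po.le_trans _ _ _ h1 h2)
    · exact Or.inr ⟨po.le_trans _ _ _ h1 h2, h2'⟩
    · exact Or.inr ⟨h1, po.le_trans _ _ _ h1' h2⟩
    · exact Or.inr ⟨h1, h2'⟩⟩
  haveI h3 : IsPreorder (Fin n) s := {}
  haveI h4 : IsAntisymm (Fin n) s := ⟨by
    rintro u v (h1 | ⟨h1, h1'⟩) (h2 | ⟨h2, h2'⟩)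
    · exact po.le_antisymm _ _ h1 h2
    · exact absurd (po.le_trans _ _ _ h2' (po.le_trans _ _ _ h1 h2)) h
    · exact absurd (po.le_trans _ _ _ h1' (po.le_trans _ _ _ h2 h1)) h
    · exact absurd (po.le_trans _ _ _ h1' h2) h⟩
  haveI h5 : IsPartialOrder (Fin n) s := {}
  obtain ⟨L, hL, hsL⟩ := extend_partialOrder s
  refine ⟨pt L, ?_, ?_⟩
  · intro u v huv
    have hLuv : L u v := hsL u v (Or.inl huv)
    rcases eq_or_ne u v with rfl | hne
    · exact le_refl _
    · linarith only [pt_lt_pt hL hLuv hne]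
  · have hba : L b a := hsL b a (Or.inr ⟨po.le_refl b, po.le_refl a⟩)
    linarith only [pt_lt_pt hL hba (Ne.symm hab)]

lemma exists_po_of_isCone {A : Set (Fin n → ℝ)} (hA : IsCone n A) :
    ∃ po : PartialOrder (Fin n), T po.le = A := by
  obtain ⟨hne, hconv, 𝒞, h𝒞, hAeq⟩ := hA
  have hwit : ∃ w ∈ A, w ∈ hypComplement n := by
    obtain ⟨x, hx⟩ := hne
    rw [hAeq] at hx
    obtain ⟨C, hC, hxC⟩ := Set.mem_iUnion₂.1 hx
    obtain ⟨w, hw, rfl⟩ := isChamber_iff.1 (h𝒞 C hC)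
    refine ⟨w, ?_, hw⟩
    rw [hAeq]
    exact Set.mem_biUnion hC (subset_closure (mem_Sx_self w))
  obtain ⟨w, hwA, hwh⟩ := hwit
  have habs : ∀ z ∈ A, z ∈ hypComplement n → closure (Sx z) ⊆ A :=
    fun z hz hzh => absorb 𝒞 h𝒞 hAeq hz hzh
  set po : PartialOrder (Fin n) := {
    le := fun a b => ∀ x ∈ A, x a ≤ x b
    lt := fun a b => (∀ x ∈ A, x a ≤ x b) ∧ ¬(∀ x ∈ A, x b ≤ x a)
    lt_iff_le_not_ge := fun _ _ => Iff.rfl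
    le_refl := fun a x _ => le_refl _
    le_trans := fun a b c h1 h2 x hx => (h1 x hx).trans (h2 x hx)
    le_antisymm := by
      intro a b h1 h2
      by_contra hne
      exact hwh a b hne (le_antisymm (h1 w hwA) (h2 w hwA)) } with hpodef
  refine ⟨po, ?_⟩
  have hle : ∀ a b : Fin n, po.le a b ↔ (∀ x ∈ A, x a ≤ x b) := fun a b => Iff.rfl
  apply Set.Subset.antisymm
  · intro y hy
    obtain ⟨r, hr, hrpo, hry⟩ := exists_linear_extension_compatible po hy
    set m0 : Fin n → Fin n → Prop := fun a b => w a ≤ w b with hm0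
    have hm0lin : IsLinearOrder (Fin n) m0 := isLinearOrder_mk
      (fun a => le_refl _) (fun a b c h1 h2 => h1.trans h2)
      (fun a b h1 h2 => by by_contra hne; exact hwh a b hne (le_antisymm h1 h2))
      (fun a b => le_total _ _)
    have hwS : w ∈ S m0 := fun a b hab hne => lt_of_le_of_ne hab (hwh a b hne)
    have hptm0 : pt m0 ∈ A := by
      have h1 := habs w hwA hwh
      rw [Sx_eq_S_of_mem hm0lin hwS] at h1
      exact h1 (subset_closure (pt_mem_S hm0lin))
    have hm0po : ∀ a b, (∀ x ∈ A, x a ≤ x b) → m0 a b := fun a b h => h w hwA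
    have hptl : pt r ∈ A :=
      walk hconv habs hr (fun a b h => hrpo a b h) (inv r m0) m0 hm0lin hm0po hptm0 rfl
    have h1 := habs _ hptl (pt_mem_hyp hr)
    rw [closure_Sx, Tx_pt_eq hr] at h1
    exact h1 (fun a b hab => hry a b hab)
  · exact fun x hx a b hab => hab x hx

end Braid

/-- The map sending a partial order `≼` on `{1,…,n}` to the cone
`A(≼) = {x ∈ ℝⁿ : x i ≤ x j whenever i ≼ j}` is a bijection from the set of all partial
orders on `{1,…,n}` onto the set of all cones of the arrangement `A_n`. -/
theorem partialOrder_cone_bijection (n : ℕ) :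
    Set.BijOn
      (fun po : PartialOrder (Fin n) => {x : Fin n → ℝ | ∀ i j : Fin n, po.le i j → x i ≤ x j})
      Set.univ {A : Set (Fin n → ℝ) | IsCone n A} := by
  refine ⟨?_, ?_, ?_⟩
  · intro po _
    exact Braid.isCone_T po
  · intro po₁ _ po₂ _ hEq
    simp only at hEq
    apply PartialOrder.ext
    intro x y
    constructor
    · intro h
      by_contra hn
      obtain ⟨v, hvT, hv⟩ := Braid.exists_point_reverse po₂ hn
      have hv1 : v ∈ {x : Fin n → ℝ | ∀ i j : Fin n, po₁.le i j → x i ≤ x j} := by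
        rw [hEq]; exact hvT
      exact absurd (hv1 x y h) (not_le.2 hv)
    · intro h
      by_contra hn
      obtain ⟨v, hvT, hv⟩ := Braid.exists_point_reverse po₁ hn
      have hv1 : v ∈ {x : Fin n → ℝ | ∀ i j : Fin n, po₂.le i j → x i ≤ x j} := by
        rw [← hEq]; exact hvT
      exact absurd (hv1 x y h) (not_le.2 hv)
  · intro A hA
    obtain ⟨po, hpo⟩ := Braid.exists_po_of_isCone hA
    exact ⟨po, Set.mem_univ _, hpo⟩
end

section
/- For any two filters F′ and F″ on a finite poset X there exist a unique k ≥ 1 and a unique filter F : X → {1,…,k} of rank k such that: (i) whenever F″(u) < F″(v) one has F(u) < F(v), and (ii) whenever F″(u) = F″(v) one has F(u) < F(v) if and only if F′(u) < F′(v). -/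
/-- A filter on a poset `X`: a surjective order-preserving map `F : X → {1,…,rank}`
(we use `Fin rank` for `{1,…,rank}`). -/
structure PFilter (X : Type*) [PartialOrder X] where
  rank : ℕ
  toFun : X → Fin rank
  surjective : Function.Surjective toFun
  mono : ∀ a b : X, a ≤ b → toFun a ≤ toFun b

/-- `F` is the filter product `F″·F′`: (i) `F″(u) < F″(v)` implies `F(u) < F(v)`, and
(ii) if `F″(u) = F″(v)` then `F(u) < F(v)` iff `F′(u) < F′(v)`. -/
def IsFilterProd {X : Type*} [PartialOrder X] (F'' F' F : PFilter X) : Prop :=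
  (∀ u v : X, F''.toFun u < F''.toFun v → F.toFun u < F.toFun v) ∧
  (∀ u v : X, F''.toFun u = F''.toFun v → (F.toFun u < F.toFun v ↔ F'.toFun u < F'.toFun v))

/-!
A filter is determined, up to the labelling of its values, by its strict comparisons, and the
labelling is forced because an order isomorphism `Fin n ≃o Fin m` is the identity. Conditions (i)
and (ii) say exactly that `F` compares points as the lexicographic pair `(F″, F′)` does, so the
unique candidate is the rank function of that pair on its (finite) set of values.
-/

theorem exists_orderIso_comp_eq_of_lt_iff_lt {X α β : Type*} [LinearOrder α] [LinearOrder β]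
    {f : X → α} {g : X → β} (hf : Function.Surjective f) (hg : Function.Surjective g)
    (h : ∀ u v, f u < f v ↔ g u < g v) : ∃ e : α ≃o β, ∀ x, e (f x) = g x := by
  have eq_of_eq : ∀ u v, f u = f v → g u = g v := fun u v huv =>
    le_antisymm (not_lt.1 fun hlt => (h v u).2 hlt |>.ne' huv)
      (not_lt.1 fun hlt => (h u v).2 hlt |>.ne huv)
  set s := Function.surjInv hf
  have hs : ∀ a, f (s a) = a := Function.surjInv_eq hf
  have comp_eq : ∀ x, g (s (f x)) = g x := fun x => eq_of_eq _ _ (hs _)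
  have mono : StrictMono (g ∘ s) := fun a b hab => (h _ _).1 (by rwa [hs, hs])
  have surj : Function.Surjective (g ∘ s) := fun b => by
    obtain ⟨x, rfl⟩ := hg b
    exact ⟨f x, comp_eq x⟩
  exact ⟨mono.orderIsoOfSurjective _ surj, comp_eq⟩

namespace PFilter

variable {X : Type*} [PartialOrder X]

theorem rank_pos [Nonempty X] (F : PFilter X) : 0 < F.rank :=
  (F.toFun (Classical.arbitrary X)).pos

theorem ext_of_rank_eq_of_val_eq {F G : PFilter X} (hrank : F.rank = G.rank)
    (hval : ∀ x, (F.toFun x : ℕ) = G.toFun x) : F = G := by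
  obtain ⟨n, f, _, _⟩ := F
  obtain ⟨m, g, _, _⟩ := G
  subst hrank
  congr
  exact funext fun x => Fin.ext (hval x)

theorem ext_of_lt_iff {F G : PFilter X}
    (h : ∀ u v, F.toFun u < F.toFun v ↔ G.toFun u < G.toFun v) : F = G := by
  obtain ⟨e, he⟩ := exists_orderIso_comp_eq_of_lt_iff_lt F.surjective G.surjective h
  refine ext_of_rank_eq_of_val_eq (Fin.equiv_iff_eq.1 ⟨e.toEquiv⟩) fun x => ?_
  rw [← he, Fin.coe_orderIso_apply]

noncomputable def ofMonotone {α : Type*} [LinearOrder α] [Finite α] (φ : X → α)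
    (hφ : Monotone φ) : PFilter X :=
  letI := Fintype.ofFinite (Set.range φ)
  let e := monoEquivOfFin (Set.range φ) rfl
  { rank := Fintype.card (Set.range φ)
    toFun := e.symm ∘ Set.rangeFactorization φ
    surjective := e.symm.surjective.comp Set.rangeFactorization_surjective
    mono := fun _ _ hab => e.symm.monotone (hφ hab) }

theorem ofMonotone_lt_iff {α : Type*} [LinearOrder α] [Finite α] (φ : X → α) (hφ : Monotone φ)
    (u v : X) : (ofMonotone φ hφ).toFun u < (ofMonotone φ hφ).toFun v ↔ φ u < φ v :=
  OrderIso.lt_iff_lt _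

theorem monotone (F : PFilter X) : Monotone F.toFun := fun a b => F.mono a b

noncomputable def lexProd (F'' F' : PFilter X) : PFilter X :=
  ofMonotone (fun x => toLex (F''.toFun x, F'.toFun x))
    (Prod.Lex.toLex_mono.comp (F''.monotone.prodMk F'.monotone))

theorem lexProd_lt_iff (F'' F' : PFilter X) (u v : X) :
    (lexProd F'' F').toFun u < (lexProd F'' F').toFun v ↔
      toLex (F''.toFun u, F'.toFun u) < toLex (F''.toFun v, F'.toFun v) :=
  ofMonotone_lt_iff _ _ u v

end PFilter

open PFilter

theorem isFilterProd_iff_lt_iff {X : Type*} [PartialOrder X] {F'' F' F : PFilter X} :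
    IsFilterProd F'' F' F ↔ ∀ u v, F.toFun u < F.toFun v ↔
      toLex (F''.toFun u, F'.toFun u) < toLex (F''.toFun v, F'.toFun v) := by
  simp only [Prod.Lex.toLex_lt_toLex]
  constructor
  · rintro ⟨hlt, heq⟩ u v
    rcases lt_trichotomy (F''.toFun u) (F''.toFun v) with huv | huv | huv
    · simp [huv, hlt u v huv]
    · simp [huv, heq u v huv]
    · simp [huv.not_gt, huv.ne', (hlt v u huv).not_gt]
  · intro h
    exact ⟨fun u v huv => (h u v).2 (Or.inl huv),
      fun u v huv => by simp [h u v, huv]⟩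

theorem filterProd_existsUnique_general {X : Type*} [PartialOrder X] [Nonempty X]
    (F' F'' : PFilter X) :
    ∃! F : PFilter X, 1 ≤ F.rank ∧ IsFilterProd F'' F' F := by
  refine ⟨lexProd F'' F', ⟨(lexProd F'' F').rank_pos, ?_⟩, ?_⟩
  · exact isFilterProd_iff_lt_iff.2 (lexProd_lt_iff F'' F')
  · rintro G ⟨-, hG⟩
    exact ext_of_lt_iff fun u v =>
      (isFilterProd_iff_lt_iff.1 hG u v).trans (lexProd_lt_iff F'' F' u v).symm

/-- For any two filters `F′`, `F″` on a finite poset `X` there is a unique `k ≥ 1` and a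
unique filter `F : X → {1,…,k}` satisfying the two filter-product conditions. -/
theorem filterProd_existsUnique {X : Type*} [PartialOrder X] [Finite X] [Nonempty X]
    (F' F'' : PFilter X) :
    ∃! F : PFilter X, 1 ≤ F.rank ∧ IsFilterProd F'' F' F :=
  filterProd_existsUnique_general F' F''
end

section
/- The filter product on the set of all filters on a finite poset X satisfies, for all filters f, g, h on X: associativity f(gh) = (fg)h, idempotence ff = f, and the left-regular band identity fgf = fg. -/
private lemma fin_strictMono_le {n m : ℕ} {φ : Fin n → Fin m} (hφ : StrictMono φ)
    (k : Fin n) : (k : ℕ) ≤ (φ k : ℕ) := by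
  have hs : (Finset.Iio k).image φ ⊆ Finset.Iio (φ k) := by
    intro x hx
    simp only [Finset.mem_image, Finset.mem_Iio] at hx ⊢
    obtain ⟨y, hy, rfl⟩ := hx
    exact hφ hy
  have hc := Finset.card_le_card hs
  rwa [Finset.card_image_of_injective _ hφ.injective, Fin.card_Iio, Fin.card_Iio] at hc

private lemma pfilter_ext' {X : Type*} [PartialOrder X] {F G : PFilter X}
    (hr : F.rank = G.rank) (hv : ∀ x, (F.toFun x : ℕ) = (G.toFun x : ℕ)) : F = G := by
  obtain ⟨n, Ff, hFs, hFm⟩ := F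
  obtain ⟨m, Gf, hGs, hGm⟩ := G
  dsimp at hr hv
  subst hr
  have : Ff = Gf := funext fun x => Fin.ext (hv x)
  subst this
  rfl

private lemma pfilter_ext {X : Type*} [PartialOrder X] {F G : PFilter X}
    (h : ∀ u v : X, F.toFun u < F.toFun v ↔ G.toFun u < G.toFun v) : F = G := by
  have hle : ∀ u v : X, F.toFun u ≤ F.toFun v ↔ G.toFun u ≤ G.toFun v := fun u v => by
    rw [← not_lt, ← not_lt, h]
  have heq : ∀ u v : X, F.toFun u = F.toFun v ↔ G.toFun u = G.toFun v := fun u v => by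
    rw [le_antisymm_iff, le_antisymm_iff, hle, hle]
  set φ : Fin F.rank → Fin G.rank := fun k => G.toFun (F.surjective k).choose with hφdef
  set ψ : Fin G.rank → Fin F.rank := fun k => F.toFun (G.surjective k).choose with hψdef
  have hφ : ∀ w : X, φ (F.toFun w) = G.toFun w := fun w =>
    (heq _ w).1 (F.surjective (F.toFun w)).choose_spec
  have hψ : ∀ w : X, ψ (G.toFun w) = F.toFun w := fun w =>
    (heq _ w).2 (G.surjective (G.toFun w)).choose_spec
  have hφm : StrictMono φ := by
    intro k k' hk
    have s1 := (F.surjective k).choose_spec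
    have s2 := (F.surjective k').choose_spec
    exact (h _ _).1 (by rw [s1, s2]; exact hk)
  have hψm : StrictMono ψ := by
    intro k k' hk
    have s1 := (G.surjective k).choose_spec
    have s2 := (G.surjective k').choose_spec
    exact (h _ _).2 (by rw [s1, s2]; exact hk)
  have hrank : F.rank = G.rank := by
    have h1 : F.rank ≤ G.rank := by
      simpa using Fintype.card_le_of_injective φ hφm.injective
    have h2 : G.rank ≤ F.rank := by
      simpa using Fintype.card_le_of_injective ψ hψm.injective
    omega
  refine pfilter_ext' hrank (fun x => ?_)
  have h1 : (F.toFun x : ℕ) ≤ (G.toFun x : ℕ) := by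
    have := fin_strictMono_le hφm (F.toFun x)
    rwa [hφ x] at this
  have h2 : (G.toFun x : ℕ) ≤ (F.toFun x : ℕ) := by
    have := fin_strictMono_le hψm (G.toFun x)
    rwa [hψ x] at this
  omega

private lemma prod_lt_iff {X : Type*} [PartialOrder X] {prod : PFilter X → PFilter X → PFilter X}
    (hprod : ∀ F'' F' : PFilter X, IsFilterProd F'' F' (prod F'' F'))
    (f g : PFilter X) (u v : X) :
    (prod f g).toFun u < (prod f g).toFun v ↔
      f.toFun u < f.toFun v ∨ (f.toFun u = f.toFun v ∧ g.toFun u < g.toFun v) := by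
  obtain ⟨h1, h2⟩ := hprod f g
  constructor
  · intro hlt
    rcases lt_trichotomy (f.toFun u) (f.toFun v) with hf | hf | hf
    · exact Or.inl hf
    · exact Or.inr ⟨hf, (h2 u v hf).1 hlt⟩
    · exact absurd (h1 v u hf) (asymm hlt)
  · rintro (hf | ⟨hf, hg⟩)
    · exact h1 u v hf
    · exact (h2 u v hf).2 hg

private lemma prod_eq_iff {X : Type*} [PartialOrder X] {prod : PFilter X → PFilter X → PFilter X}
    (hprod : ∀ F'' F' : PFilter X, IsFilterProd F'' F' (prod F'' F'))
    (f g : PFilter X) (u v : X) :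
    (prod f g).toFun u = (prod f g).toFun v ↔
      f.toFun u = f.toFun v ∧ g.toFun u = g.toFun v := by
  have h1 := prod_lt_iff hprod f g u v
  have h2 := prod_lt_iff hprod f g v u
  simp only [Fin.lt_def, Fin.ext_iff] at h1 h2 ⊢
  omega

/-- The filter product (i.e. any binary operation on filters satisfying the defining
characterization of the filter product, which determines it uniquely) is associative,
idempotent, and satisfies the left-regular band identity `fgf = fg`. -/
theorem filterProd_leftRegularBand {X : Type*} [PartialOrder X] [Finite X]
    (prod : PFilter X → PFilter X → PFilter X)
    (hprod : ∀ F'' F' : PFilter X, IsFilterProd F'' F' (prod F'' F')) :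
    (∀ f g h : PFilter X, prod f (prod g h) = prod (prod f g) h) ∧
    (∀ f : PFilter X, prod f f = f) ∧
    (∀ f g : PFilter X, prod (prod f g) f = prod f g) := by
  refine ⟨fun f g h => ?_, fun f => ?_, fun f g => ?_⟩
  · refine pfilter_ext (fun u v => ?_)
    rw [prod_lt_iff hprod, prod_lt_iff hprod, prod_lt_iff hprod, prod_lt_iff hprod,
      prod_eq_iff hprod]
    simp only [Fin.lt_def, Fin.ext_iff]
    omega
  · refine pfilter_ext (fun u v => ?_)
    rw [prod_lt_iff hprod]
    simp only [Fin.lt_def, Fin.ext_iff]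
    omega
  · refine pfilter_ext (fun u v => ?_)
    rw [prod_lt_iff hprod, prod_eq_iff hprod, prod_lt_iff hprod]
    simp only [Fin.lt_def, Fin.ext_iff]
    omega
end

section
/- Let X be a finite poset with n elements and let ε : {1,…,n−1} → {0,1} be a function with B_{X,ε} ≠ 0. Let l_1 < l_2 < … < l_{r−1} be the positions in {1,…,n−1} where ε takes value 1 (so r = 1 + Σ_j ε(j)), set l_0 = 0 and l_r = n, and let c_i = l_i − l_{i−1} for i = 1,…,r, so that (c_1,…,c_r) is a composition of n. Then the following inclusion–exclusion identity holds: B_{X,ε} = Σ_{S ⊆ {1,…,r−1}} (−1)^{|S|} Σ_{F ∈ 𝓕_{c(S)}} M_F^X, where c(S) is the composition of n into r − |S| parts obtained from (c_1,…,c_r) by merging the adjacent parts c_i and c_{i+1} across each divider i ∈ S (i.e., by removing the dividers at the partial sums l_i for i ∈ S). -/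
attribute [local instance] Classical.propDecidable

/-- A linear extension of a partially ordered set `X` with `n` elements:
an order-preserving bijection `X ≃ Fin n`. -/
def LinExt (X : Type*) [PartialOrder X] (n : ℕ) : Type _ :=
  {P : X ≃ Fin n // ∀ a b : X, a ≤ b → P a ≤ P b}

/-- `eps P Q k = true` iff `Q⁻¹(k+2)` (1-based) is a `(P,Q)`-disagreement node, i.e.
`ε_{PQ}(k+1) = 1` in 1-based indexing. -/
def eps {X : Type*} [PartialOrder X] {n : ℕ} (P Q : LinExt X n) (k : Fin (n - 1)) : Bool :=
  decide (P.1 (Q.1.symm ⟨k.1 + 1, by have := k.2; omega⟩) <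
          P.1 (Q.1.symm ⟨k.1, by have := k.2; omega⟩))

/-- The 0-1 matrix `B_{X,ε}`, with `(B_{X,ε})_{PQ} = 1` iff `ε_{PQ} = ε`. -/
noncomputable def Bmat (X : Type*) [PartialOrder X] (n : ℕ) (ε : Fin (n - 1) → Bool) :
    Matrix (LinExt X n) (LinExt X n) ℤ :=
  fun P Q => if eps P Q = ε then 1 else 0

/-- A linear extension, viewed as a filter of rank `n`. -/
def LinExt.toFilter {X : Type*} [PartialOrder X] {n : ℕ} (P : LinExt X n) : PFilter X :=
  ⟨n, P.1, P.1.surjective, P.2⟩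

/-- The matrix `M_F^X`, indexed by linear extensions, with `(M_F^X)_{PQ} = 1` if
`Q = F·P` (equivalently, `Q` satisfies the filter-product characterization of `F·P`,
which determines `F·P` uniquely) and `0` otherwise. -/
noncomputable def filterMatrix {X : Type*} [PartialOrder X] (n : ℕ) (F : PFilter X) :
    Matrix (LinExt X n) (LinExt X n) ℤ :=
  fun P Q => if IsFilterProd F P.toFilter Q.toFilter then 1 else 0

/-- The set of partial sums `{c_1, c_1+c_2, …, c_1+⋯+c_{r-1}}` of the sizes of the floors
of a filter `F` of rank `r` (the full sum `n` being removed).  A filter `F` belongs to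
`𝓕_{c_1,…,c_r}` precisely when `dividerSet F` is the set of proper partial sums of
`(c_1,…,c_r)`. -/
noncomputable def dividerSet {X : Type*} [PartialOrder X] [Fintype X] (F : PFilter X) :
    Finset ℕ :=
  (Finset.image (fun i : Fin F.rank =>
    (Finset.univ.filter (fun x : X => F.toFun x ≤ i)).card) Finset.univ).erase (Fintype.card X)

/-- The set of 1-based positions `l ∈ {1,…,n-1}` where `ε` takes the value `1`; these are
the proper partial sums of the composition `(c_1,…,c_r)` of `n` associated with `ε`. -/
def epsDividers (n : ℕ) (ε : Fin (n - 1) → Bool) : Finset ℕ :=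
  (Finset.univ.filter (fun k : Fin (n - 1) => ε k = true)).image (fun k => k.1 + 1)


namespace BmatIE

/-- number of elements of `T` that are `≤ y`. -/
def ctn (T : Finset ℕ) (y : ℕ) : ℕ := (T.filter (· ≤ y)).card

lemma ctn_mono {T : Finset ℕ} {y z : ℕ} (h : y ≤ z) : ctn T y ≤ ctn T z := by
  apply Finset.card_le_card
  intro a ha
  simp only [Finset.mem_filter] at *
  exact ⟨ha.1, ha.2.trans h⟩

lemma ctn_le (T : Finset ℕ) (y : ℕ) : ctn T y ≤ T.card :=
  Finset.card_le_card (Finset.filter_subset _ _)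

lemma ctn_step (T : Finset ℕ) (y : ℕ) : ctn T (y + 1) ≤ ctn T y + 1 := by
  have h : T.filter (· ≤ y + 1) ⊆ insert (y + 1) (T.filter (· ≤ y)) := by
    intro a ha
    simp only [Finset.mem_filter, Finset.mem_insert] at *
    rcases Nat.lt_or_ge a (y + 1) with h' | h'
    · exact Or.inr ⟨ha.1, by omega⟩
    · exact Or.inl (by omega)
  exact le_trans (Finset.card_le_card h) (Finset.card_insert_le _ _)

lemma ctn_mem_iff {T : Finset ℕ} {l : ℕ} (hl : l ≠ 0) : l ∈ T ↔ ctn T (l - 1) < ctn T l := by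
  constructor
  · intro h
    apply Finset.card_lt_card
    rw [Finset.ssubset_iff_of_subset]
    · exact ⟨l, by simp [Finset.mem_filter, h], by simp [Finset.mem_filter]; omega⟩
    · intro a ha
      simp only [Finset.mem_filter] at *
      exact ⟨ha.1, by omega⟩
  · intro h
    by_contra hnot
    have hsub : T.filter (· ≤ l) ⊆ T.filter (· ≤ l - 1) := by
      intro a ha
      simp only [Finset.mem_filter] at *
      refine ⟨ha.1, ?_⟩
      have : a ≠ l := fun h' => hnot (h' ▸ ha.1)
      omega
    exact absurd (Finset.card_le_card hsub) (by unfold ctn at h; omega)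

lemma ctn_eq_of_forall {n : ℕ} {T T' : Finset ℕ} (hT : ∀ l ∈ T, 0 < l ∧ l < n)
    (hT' : ∀ l ∈ T', 0 < l ∧ l < n)
    (h : ∀ y, y < n → ctn T y = ctn T' y) : T = T' := by
  have key : ∀ (A B : Finset ℕ), (∀ l ∈ A, 0 < l ∧ l < n) →
      (∀ y, y < n → ctn A y = ctn B y) → A ⊆ B := by
    intro A B hA hAB l hl
    obtain ⟨h0, hln⟩ := hA l hl
    have h1 := (ctn_mem_iff (by omega)).mp hl
    rw [hAB _ (by omega), hAB _ hln] at h1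
    exact (ctn_mem_iff (by omega)).mpr h1
  exact Finset.Subset.antisymm (key T T' hT h) (key T' T hT' (fun y hy => (h y hy).symm))

lemma nat_ivt (f : ℕ → ℕ) (h0 : f 0 = 0) (hstep : ∀ y, f (y + 1) ≤ f y + 1) :
    ∀ N i, i ≤ f N → ∃ y, y ≤ N ∧ f y = i := by
  intro N
  induction N with
  | zero => intro i hi; exact ⟨0, le_refl 0, by omega⟩
  | succ N ih =>
    intro i hi
    by_cases h : i ≤ f N
    · obtain ⟨y, hy, hfy⟩ := ih i h
      exact ⟨y, by omega, hfy⟩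
    · have := hstep N
      exact ⟨N + 1, le_refl _, by omega⟩

lemma downclosed_eq_range (S : Finset ℕ) (h : ∀ a ∈ S, ∀ b ≤ a, b ∈ S) :
    S = Finset.range S.card := by
  have hsub : S ⊆ Finset.range S.card := by
    intro a ha
    rw [Finset.mem_range]
    have hsub2 : Finset.range (a + 1) ⊆ S := by
      intro b hb
      rw [Finset.mem_range] at hb
      exact h a ha b (by omega)
    have := Finset.card_le_card hsub2
    rw [Finset.card_range] at this
    omega
  exact Finset.eq_of_subset_of_card_le hsub (by simp)


section
variable {X : Type*} [PartialOrder X]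

lemma PFilter.ext' {F G : PFilter X} (h1 : F.rank = G.rank)
    (h2 : ∀ x, (F.toFun x).1 = (G.toFun x).1) : F = G := by
  obtain ⟨r, f, hs, hm⟩ := F
  obtain ⟨r', f', hs', hm'⟩ := G
  dsimp at h1 h2
  subst h1
  have : f = f' := funext fun x => Fin.ext (h2 x)
  subst this
  rfl

variable [Fintype X] {n : ℕ}

lemma dividerSet_bounds (hn : Fintype.card X = n) (F : PFilter X) :
    ∀ l ∈ dividerSet F, 0 < l ∧ l < n := by
  subst hn
  intro l hl
  rw [dividerSet, Finset.mem_erase, Finset.mem_image] at hl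
  obtain ⟨hne, i, -, rfl⟩ := hl
  refine ⟨?_, ?_⟩
  · obtain ⟨x, hx⟩ := F.surjective i
    apply Finset.card_pos.mpr
    exact ⟨x, by simp [hx]⟩
  · have h1 : (Finset.univ.filter (fun x : X => F.toFun x ≤ i)).card ≤ Fintype.card X := by
      rw [← Finset.card_univ]
      exact Finset.card_le_card (Finset.filter_subset _ _)
    omega

/-- The main structural formula: any filter satisfying condition (i) w.r.t. `Q` has
values computed by counting dividers below the `Q`-position. -/
lemma filter_val_formula (hn : Fintype.card X = n) (Q : LinExt X n) (F : PFilter X)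
    (hF : ∀ u v : X, F.toFun u < F.toFun v → Q.1 u < Q.1 v) (x : X) :
    (F.toFun x).1 = ctn (dividerSet F) (Q.1 x).1 := by
  subst hn
  set c : Fin F.rank → ℕ :=
    fun i => (Finset.univ.filter (fun x : X => F.toFun x ≤ i)).card with hc
  have hmono : ∀ u v : X, Q.1 u ≤ Q.1 v → F.toFun u ≤ F.toFun v := by
    intro u v h
    by_contra hlt
    push_neg at hlt
    exact absurd (hF v u hlt) (not_lt.mpr h)
  have hchar : ∀ (z : X) (i : Fin F.rank), (F.toFun z ≤ i ↔ (Q.1 z).1 < c i) := by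
    intro z i
    set S := (Finset.univ.filter (fun x : X => F.toFun x ≤ i)).image
      (fun x => (Q.1 x).1) with hS
    have hScard : S.card = c i :=
      Finset.card_image_of_injective _ (fun a b hab => Q.1.injective (Fin.ext hab))
    have hdc : ∀ a ∈ S, ∀ b ≤ a, b ∈ S := by
      intro a ha b hb
      simp only [hS, Finset.mem_image, Finset.mem_filter, Finset.mem_univ, true_and]
        at ha ⊢
      obtain ⟨u, hu, rfl⟩ := ha
      have hbn : b < Fintype.card X := lt_of_le_of_lt hb (Q.1 u).2
      refine ⟨Q.1.symm ⟨b, hbn⟩, le_trans (hmono _ u ?_) hu, by simp⟩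
      rw [Equiv.apply_symm_apply]
      exact hb
    have hrange := downclosed_eq_range S hdc
    constructor
    · intro h
      have h2 : (Q.1 z).1 ∈ S := Finset.mem_image_of_mem _ (by simp [h])
      rw [hrange, Finset.mem_range, hScard] at h2
      exact h2
    · intro h
      have h2 : (Q.1 z).1 ∈ S := by rw [hrange, Finset.mem_range, hScard]; exact h
      simp only [hS, Finset.mem_image, Finset.mem_filter, Finset.mem_univ, true_and] at h2
      obtain ⟨u, hu, hqu⟩ := h2
      rwa [Q.1.injective (Fin.ext hqu)] at hu
  have hsm : StrictMono c := by
    intro i j hij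
    apply Finset.card_lt_card
    rw [Finset.ssubset_iff_of_subset]
    · obtain ⟨x, hx⟩ := F.surjective j
      exact ⟨x, by simp [hx], by simp [hx]; exact hij⟩
    · intro a ha
      simp only [Finset.mem_filter, Finset.mem_univ, true_and] at *
      exact le_trans ha hij.le
  have hcinj : Function.Injective c := hsm.injective
  have hylt : (Q.1 x).1 < Fintype.card X := (Q.1 x).2
  have key : (dividerSet F).filter (· ≤ (Q.1 x).1) =
      (Finset.univ.filter (fun i : Fin F.rank => c i ≤ (Q.1 x).1)).image c := by
    ext l
    simp only [dividerSet, Finset.mem_filter, Finset.mem_erase, Finset.mem_image,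
      Finset.mem_univ, true_and]
    constructor
    · rintro ⟨⟨hne, i, rfl⟩, hle⟩
      exact ⟨i, hle, rfl⟩
    · rintro ⟨i, hle, rfl⟩
      exact ⟨⟨by omega, i, rfl⟩, hle⟩
  rw [ctn, key, Finset.card_image_of_injective _ hcinj]
  have hiff : ∀ i : Fin F.rank, (c i ≤ (Q.1 x).1 ↔ i < F.toFun x) := by
    intro i
    constructor
    · intro h
      by_contra h2
      push_neg at h2
      exact absurd ((hchar x i).mp h2) (not_lt.mpr h)
    · intro h
      by_contra h2
      push_neg at h2
      exact absurd ((hchar x i).mpr h2) (not_le.mpr h)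
  have heq : (Finset.univ.filter (fun i : Fin F.rank => c i ≤ (Q.1 x).1)) =
      Finset.Iio (F.toFun x) := by
    ext i
    simp [hiff i]
  rw [heq, Fin.card_Iio]

lemma filter_rank_formula (hn : Fintype.card X = n) (hn1 : 1 ≤ n) (F : PFilter X) :
    F.rank = (dividerSet F).card + 1 := by
  subst hn
  have hne : Nonempty X := Fintype.card_pos_iff.mp (by omega)
  obtain ⟨x0⟩ := hne
  have hr1 : 1 ≤ F.rank := by
    have := (F.toFun x0).2
    omega
  set c : Fin F.rank → ℕ :=
    fun i => (Finset.univ.filter (fun x : X => F.toFun x ≤ i)).card with hc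
  have hsm : StrictMono c := by
    intro i j hij
    apply Finset.card_lt_card
    rw [Finset.ssubset_iff_of_subset]
    · obtain ⟨x, hx⟩ := F.surjective j
      exact ⟨x, by simp [hx], by simp [hx]; exact hij⟩
    · intro a ha
      simp only [Finset.mem_filter, Finset.mem_univ, true_and] at *
      exact le_trans ha hij.le
  have htop : c ⟨F.rank - 1, by omega⟩ = Fintype.card X := by
    simp only [hc]
    rw [← Finset.card_univ]
    congr 1
    rw [Finset.filter_true_of_mem]
    intro x _
    have := (F.toFun x).2
    rw [Fin.le_def]
    simp
    omega
  have hmem : Fintype.card X ∈ Finset.image c Finset.univ := by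
    rw [Finset.mem_image]
    exact ⟨_, Finset.mem_univ _, htop⟩
  have : dividerSet F = (Finset.image c Finset.univ).erase (Fintype.card X) := rfl
  rw [this, Finset.card_erase_of_mem hmem,
    Finset.card_image_of_injective _ hsm.injective, Finset.card_univ, Fintype.card_fin]
  omega


/-- The canonical filter associated with a divider set `T`. -/
noncomputable def FofT (hn : Fintype.card X = n) (hn1 : 1 ≤ n) (Q : LinExt X n)
    (T : Finset ℕ) (hT : ∀ l ∈ T, 0 < l ∧ l < n) : PFilter X where
  rank := T.card + 1
  toFun x := ⟨ctn T (Q.1 x).1, by have := ctn_le T (Q.1 x).1; omega⟩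
  surjective := by
    intro i
    have hall : ctn T (n - 1) = T.card := by
      unfold ctn
      rw [Finset.filter_true_of_mem]
      intro l hl
      have := hT l hl
      omega
    have h0 : ctn T 0 = 0 := by
      unfold ctn
      rw [Finset.card_eq_zero, Finset.filter_eq_empty_iff]
      intro l hl
      have := hT l hl
      omega
    obtain ⟨y, hy, hfy⟩ := nat_ivt (ctn T) h0 (ctn_step T) (n - 1) i.1
      (by rw [hall]; have := i.2; omega)
    refine ⟨Q.1.symm ⟨y, by omega⟩, ?_⟩
    apply Fin.ext
    simp only [Equiv.apply_symm_apply]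
    exact hfy
  mono := by
    intro a b hab
    rw [Fin.mk_le_mk]
    exact ctn_mono (Q.2 a b hab)

lemma FofT_condi (hn : Fintype.card X = n) (hn1 : 1 ≤ n) (Q : LinExt X n)
    (T : Finset ℕ) (hT : ∀ l ∈ T, 0 < l ∧ l < n) :
    ∀ u v : X, (FofT hn hn1 Q T hT).toFun u < (FofT hn hn1 Q T hT).toFun v →
      Q.1 u < Q.1 v := by
  intro u v h
  by_contra h2
  push_neg at h2
  have h3 : (Q.1 v).1 ≤ (Q.1 u).1 := h2
  exact absurd h (not_lt.mpr (ctn_mono h3))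

lemma FofT_dividerSet (hn : Fintype.card X = n) (hn1 : 1 ≤ n) (Q : LinExt X n)
    (T : Finset ℕ) (hT : ∀ l ∈ T, 0 < l ∧ l < n) :
    dividerSet (FofT hn hn1 Q T hT) = T := by
  set F := FofT hn hn1 Q T hT with hFdef
  have hval : ∀ x, (F.toFun x).1 = ctn (dividerSet F) (Q.1 x).1 :=
    filter_val_formula hn Q F (FofT_condi hn hn1 Q T hT)
  have hval2 : ∀ x, (F.toFun x).1 = ctn T (Q.1 x).1 := fun x => rfl
  refine ctn_eq_of_forall (dividerSet_bounds hn F) hT ?_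
  intro y hy
  have h1 := hval (Q.1.symm ⟨y, hy⟩)
  have h2 := hval2 (Q.1.symm ⟨y, hy⟩)
  rw [Equiv.apply_symm_apply] at h1 h2
  simp only [] at h1 h2
  omega

lemma chain_step (P Q : LinExt X n) (T : Finset ℕ)
    (hDT : ∀ k : Fin (n - 1), eps P Q k = true → k.1 + 1 ∈ T)
    (a : ℕ) (ha : a + 1 < n) (hctn : ctn T a = ctn T (a + 1)) :
    P.1 (Q.1.symm ⟨a, by omega⟩) < P.1 (Q.1.symm ⟨a + 1, ha⟩) := by
  have hnotT : a + 1 ∉ T := by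
    intro h
    have h2 := (ctn_mem_iff (l := a + 1) (by omega)).mp h
    simp only [Nat.add_sub_cancel] at h2
    omega
  have heps : eps P Q ⟨a, by omega⟩ = false := by
    rcases Bool.eq_false_or_eq_true (eps P Q ⟨a, by omega⟩) with h | h
    · exact absurd (hDT _ h) hnotT
    · exact h
  rw [eps, decide_eq_false_iff_not] at heps
  have hne : Q.1.symm ⟨a, by omega⟩ ≠ Q.1.symm ⟨a + 1, ha⟩ := by
    intro h
    have := Q.1.symm.injective h
    simp [Fin.ext_iff] at this
  have hpne : P.1 (Q.1.symm ⟨a, by omega⟩) ≠ P.1 (Q.1.symm ⟨a + 1, ha⟩) :=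
    fun h => hne (P.1.injective h)
  exact lt_of_le_of_ne (not_lt.mp heps) hpne

lemma chain (P Q : LinExt X n) (T : Finset ℕ)
    (hDT : ∀ k : Fin (n - 1), eps P Q k = true → k.1 + 1 ∈ T) :
    ∀ m a, ∀ h : a + m + 1 < n, ctn T a = ctn T (a + m + 1) →
      P.1 (Q.1.symm ⟨a, by omega⟩) < P.1 (Q.1.symm ⟨a + m + 1, h⟩) := by
  intro m
  induction m with
  | zero =>
    intro a h hctn
    exact chain_step P Q T hDT a h hctn
  | succ m ih =>
    intro a h hctn
    have h1 : ctn T a = ctn T (a + m + 1) :=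
      le_antisymm (ctn_mono (by omega)) (hctn ▸ ctn_mono (by omega))
    have hctn' : ctn T a = ctn T (a + m + 1 + 1) := by
      have he : a + (m + 1) + 1 = a + m + 1 + 1 := by omega
      rw [← he]; exact hctn
    have h2 : ctn T (a + m + 1) = ctn T (a + m + 1 + 1) := by
      have hA := ctn_mono (T := T) (show a ≤ a + m + 1 by omega)
      have hB := ctn_mono (T := T) (show a + m + 1 ≤ a + m + 1 + 1 by omega)
      omega
    have p1 := ih a (by omega) h1
    have p2 := chain_step P Q T hDT (a + m + 1) (by omega) h2
    have : (⟨a + m + 1 + 1, by omega⟩ : Fin n) = ⟨a + (m + 1) + 1, h⟩ := by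
      apply Fin.ext; simp; omega
    rw [this] at p2
    exact lt_trans p1 p2

lemma FofT_isFilterProd (hn : Fintype.card X = n) (hn1 : 1 ≤ n) (P Q : LinExt X n)
    (T : Finset ℕ) (hT : ∀ l ∈ T, 0 < l ∧ l < n)
    (hDT : ∀ k : Fin (n - 1), eps P Q k = true → k.1 + 1 ∈ T) :
    IsFilterProd (FofT hn hn1 Q T hT) P.toFilter Q.toFilter := by
  have hchain : ∀ u v : X, Q.1 u < Q.1 v → ctn T (Q.1 u).1 = ctn T (Q.1 v).1 →
      P.1 u < P.1 v := by
    intro u v hq hctn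
    have hlt : (Q.1 u).1 < (Q.1 v).1 := hq
    have hvn : (Q.1 v).1 < n := (Q.1 v).2
    have := chain P Q T hDT ((Q.1 v).1 - (Q.1 u).1 - 1) (Q.1 u).1
      (by omega) (by rw [hctn]; congr 1; omega)
    have e1 : Q.1.symm ⟨(Q.1 u).1, by omega⟩ = u := by
      rw [show (⟨(Q.1 u).1, by omega⟩ : Fin n) = Q.1 u from rfl, Equiv.symm_apply_apply]
    have e2 : Q.1.symm ⟨(Q.1 u).1 + ((Q.1 v).1 - (Q.1 u).1 - 1) + 1, by omega⟩ = v := by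
      rw [show (⟨(Q.1 u).1 + ((Q.1 v).1 - (Q.1 u).1 - 1) + 1, by omega⟩ : Fin n)
        = Q.1 v by apply Fin.ext; simp; omega, Equiv.symm_apply_apply]
    rw [e1, e2] at this
    exact this
  constructor
  · exact FofT_condi hn hn1 Q T hT
  · intro u v huv
    have hctn : ctn T (Q.1 u).1 = ctn T (Q.1 v).1 := congrArg Fin.val huv
    constructor
    · intro hq
      exact hchain u v hq hctn
    · intro hp
      rcases lt_trichotomy (Q.1 u) (Q.1 v) with h | h | h
      · exact h
      · exact absurd hp (by rw [show u = v from Q.1.injective h]; exact lt_irrefl _)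
      · exact absurd hp (not_lt.mpr (le_of_lt (hchain v u h hctn.symm)))

lemma mem_imp_subset (hn : Fintype.card X = n) (P Q : LinExt X n)
    (F : PFilter X) (T : Finset ℕ) (hdiv : dividerSet F = T)
    (hprod : IsFilterProd F P.toFilter Q.toFilter) :
    ∀ k : Fin (n - 1), eps P Q k = true → k.1 + 1 ∈ T := by
  intro k hk
  have hF := hprod.1
  have hval := filter_val_formula hn Q F hF
  have han : k.1 + 1 < n := by have := k.2; omega
  set u := Q.1.symm ⟨k.1, by omega⟩ with hu
  set v := Q.1.symm ⟨k.1 + 1, han⟩ with hv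
  rw [eps, decide_eq_true_eq] at hk
  by_contra hnot
  have hctn : ctn T k.1 = ctn T (k.1 + 1) := by
    have h1 := mt (ctn_mem_iff (l := k.1 + 1) (show k.1 + 1 ≠ 0 by omega)).mpr hnot
    simp only [Nat.add_sub_cancel] at h1
    have := ctn_mono (T := T) (show k.1 ≤ k.1 + 1 by omega)
    omega
  have hQu : Q.1 u = ⟨k.1, by omega⟩ := Equiv.apply_symm_apply _ _
  have hQv : Q.1 v = ⟨k.1 + 1, han⟩ := Equiv.apply_symm_apply _ _
  have hFeq : F.toFun u = F.toFun v := by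
    apply Fin.ext
    rw [hval u, hval v, hdiv, hQu, hQv]
    exact hctn
  have hQuv : Q.1 u < Q.1 v := by
    rw [hQu, hQv]
    exact Fin.mk_lt_mk.mpr (by omega)
  have := (hprod.2 u v hFeq).mp hQuv
  exact absurd this (not_lt.mpr (le_of_lt hk))


lemma sum_incl_excl (D D' : Finset ℕ) :
    ∑ T ∈ D.powerset, (-1 : ℤ) ^ (D.card - T.card) * (if D' ⊆ T then 1 else 0)
      = if D' = D then 1 else 0 := by
  by_cases hDD : D' ⊆ D
  · have hterm : ∀ T ∈ D.powerset, (-1 : ℤ) ^ (D.card - T.card) * (if D' ⊆ T then 1 else 0)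
        = if D' ⊆ T then (-1 : ℤ) ^ (D.card - T.card) else 0 := by
      intro T _
      split_ifs <;> ring
    rw [Finset.sum_congr rfl hterm, ← Finset.sum_filter]
    have hbij : ∑ T ∈ D.powerset.filter (fun T => D' ⊆ T), (-1 : ℤ) ^ (D.card - T.card)
        = ∑ S ∈ (D \ D').powerset, (-1 : ℤ) ^ ((D \ D').card - S.card) := by
      apply Finset.sum_nbij' (i := fun T => T \ D') (j := fun S => S ∪ D')
      · intro T hT
        simp only [Finset.mem_filter, Finset.mem_powerset] at hT
        rw [Finset.mem_powerset]
        exact Finset.sdiff_subset_sdiff hT.1 (Finset.Subset.refl _)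
      · intro S hS
        rw [Finset.mem_powerset] at hS
        simp only [Finset.mem_filter, Finset.mem_powerset]
        constructor
        · exact Finset.union_subset (hS.trans (Finset.sdiff_subset)) hDD
        · exact Finset.subset_union_right
      · intro T hT
        simp only [Finset.mem_filter, Finset.mem_powerset] at hT
        exact Finset.sdiff_union_of_subset hT.2
      · intro S hS
        rw [Finset.mem_powerset] at hS
        have hdisj : Disjoint S D' := Finset.disjoint_of_subset_left hS Finset.sdiff_disjoint
        rw [Finset.union_sdiff_right, Finset.sdiff_eq_self_of_disjoint hdisj]
      · intro T hT
        simp only [Finset.mem_filter, Finset.mem_powerset] at hT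
        congr 1
        have h1 : (T \ D').card = T.card - D'.card := Finset.card_sdiff_of_subset hT.2
        have h2 : (D \ D').card = D.card - D'.card := Finset.card_sdiff_of_subset hDD
        have h3 : D'.card ≤ T.card := Finset.card_le_card hT.2
        have h4 : T.card ≤ D.card := Finset.card_le_card hT.1
        omega
    rw [hbij]
    have hsplit : ∀ S ∈ (D \ D').powerset, (-1 : ℤ) ^ ((D \ D').card - S.card)
        = (-1 : ℤ) ^ (D \ D').card * (-1 : ℤ) ^ S.card := by
      intro S hS
      rw [Finset.mem_powerset] at hS
      have hc : S.card ≤ (D \ D').card := Finset.card_le_card hS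
      have key : (-1 : ℤ) ^ ((D \ D').card - S.card) * (-1 : ℤ) ^ S.card
          = (-1 : ℤ) ^ (D \ D').card := by
        rw [← pow_add]
        congr 1
        omega
      have hsq : (-1 : ℤ) ^ S.card * (-1 : ℤ) ^ S.card = 1 := by
        rw [← pow_add, Even.neg_one_pow ⟨S.card, rfl⟩]
      calc (-1 : ℤ) ^ ((D \ D').card - S.card)
          = (-1 : ℤ) ^ ((D \ D').card - S.card) * ((-1 : ℤ) ^ S.card * (-1 : ℤ) ^ S.card) := by
            rw [hsq, mul_one]
        _ = ((-1 : ℤ) ^ ((D \ D').card - S.card) * (-1 : ℤ) ^ S.card) * (-1 : ℤ) ^ S.card := by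
            ring
        _ = (-1 : ℤ) ^ (D \ D').card * (-1 : ℤ) ^ S.card := by rw [key]
    rw [Finset.sum_congr rfl hsplit, ← Finset.mul_sum,
      Finset.sum_powerset_neg_one_pow_card]
    by_cases he : D \ D' = ∅
    · have : D' = D := Finset.Subset.antisymm hDD (by
        intro a ha
        by_contra hna
        exact absurd (Finset.mem_sdiff.mpr ⟨ha, hna⟩) (by rw [he]; simp))
      rw [if_pos he, if_pos this, Finset.card_eq_zero.mpr he]
      ring
    · have : D' ≠ D := by
        intro h
        exact he (by rw [h]; simp)
      rw [if_neg he, if_neg this, mul_zero]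
  · rw [Finset.sum_congr rfl (fun T hT => ?_), Finset.sum_const_zero]
    · rw [if_neg (fun h : D' = D => hDD (le_of_eq h))]
    · rw [Finset.mem_powerset] at hT
      rw [if_neg (fun h => hDD (h.trans hT)), mul_zero]


lemma epsDividers_mem_iff (f : Fin (n - 1) → Bool) (k : Fin (n - 1)) :
    k.1 + 1 ∈ epsDividers n f ↔ f k = true := by
  simp only [epsDividers, Finset.mem_image, Finset.mem_filter, Finset.mem_univ, true_and]
  constructor
  · rintro ⟨k', hk', hkk⟩
    have : k' = k := Fin.ext (by omega)
    exact this ▸ hk'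
  · intro hk
    exact ⟨k, hk, rfl⟩

lemma epsDividers_subset_iff (f : Fin (n - 1) → Bool) (T : Finset ℕ) :
    epsDividers n f ⊆ T ↔ ∀ k : Fin (n - 1), f k = true → k.1 + 1 ∈ T := by
  rw [epsDividers, Finset.image_subset_iff]
  constructor
  · intro h k hk
    exact h k (by simp [hk])
  · intro h k hk
    simp only [Finset.mem_filter, Finset.mem_univ, true_and] at hk
    exact h k hk

lemma epsDividers_eq_iff (f g : Fin (n - 1) → Bool) :
    epsDividers n f = epsDividers n g ↔ f = g := by
  constructor
  · intro h
    funext k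
    have hiff : (f k = true) ↔ (g k = true) := by
      rw [← epsDividers_mem_iff f k, h, epsDividers_mem_iff]
    cases hf : f k <;> cases hg : g k <;> simp_all
  · rintro rfl; rfl

lemma epsDividers_bounds (hn1 : 1 ≤ n) (f : Fin (n - 1) → Bool) :
    ∀ l ∈ epsDividers n f, 0 < l ∧ l < n := by
  intro l hl
  simp only [epsDividers, Finset.mem_image, Finset.mem_filter, Finset.mem_univ, true_and] at hl
  obtain ⟨k, -, rfl⟩ := hl
  have := k.2
  omega

lemma count_lemma [Fintype (PFilter X)] (hn : Fintype.card X = n) (hn1 : 1 ≤ n)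
    (P Q : LinExt X n) (T : Finset ℕ) (hT : ∀ l ∈ T, 0 < l ∧ l < n) :
    ((Finset.univ.filter (fun F : PFilter X =>
        dividerSet F = T ∧ IsFilterProd F P.toFilter Q.toFilter)).card : ℤ)
      = if epsDividers n (eps P Q) ⊆ T then 1 else 0 := by
  by_cases hDT' : epsDividers n (eps P Q) ⊆ T
  case pos =>
    have hDT := (epsDividers_subset_iff _ _).mp hDT'
    rw [if_pos hDT']
    rw [Finset.card_eq_one.mpr ⟨FofT hn hn1 Q T hT, ?_⟩]
    · norm_num
    · ext F
      simp only [Finset.mem_filter, Finset.mem_univ, true_and, Finset.mem_singleton]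
      constructor
      · rintro ⟨hdiv, hprod⟩
        apply PFilter.ext'
        · rw [filter_rank_formula hn hn1 F, filter_rank_formula hn hn1 (FofT hn hn1 Q T hT),
            hdiv, FofT_dividerSet hn hn1 Q T hT]
        · intro x
          rw [filter_val_formula hn Q F hprod.1,
            filter_val_formula hn Q _ (FofT_condi hn hn1 Q T hT), hdiv,
            FofT_dividerSet hn hn1 Q T hT]
      · rintro rfl
        exact ⟨FofT_dividerSet hn hn1 Q T hT, FofT_isFilterProd hn hn1 P Q T hT hDT⟩
  case neg =>
    have hDT : ¬ ∀ k : Fin (n - 1), eps P Q k = true → k.1 + 1 ∈ T :=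
      fun h => hDT' ((epsDividers_subset_iff _ _).mpr h)
    rw [if_neg hDT']
    rw [Finset.card_eq_zero.mpr ?_]
    · norm_num
    · rw [Finset.filter_eq_empty_iff]
      intro F _
      rintro ⟨hdiv, hprod⟩
      exact hDT (mem_imp_subset hn P Q F T hdiv hprod)

end

end BmatIE

open BmatIE

/-- The inclusion-exclusion identity expressing `B_{X,ε}` via the matrices `M_F^X`:
summing over all subsets `T` of the divider set of `ε` (i.e. over all mergers of
neighboring parts of the composition `(c_1,…,c_r)`), with sign `(-1)^{#mergers}`, the
inner sum running over all filters whose floor sizes give the merged composition. -/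
theorem Bmat_inclusion_exclusion {X : Type*} [PartialOrder X] [Fintype X]
    [Fintype (PFilter X)] {n : ℕ} (hn : Fintype.card X = n)
    (ε : Fin (n - 1) → Bool) (hB : Bmat X n ε ≠ 0) :
    Bmat X n ε =
      ∑ T ∈ (epsDividers n ε).powerset,
        (-1 : ℤ) ^ ((epsDividers n ε).card - T.card) •
          ∑ F ∈ Finset.univ.filter (fun F : PFilter X => dividerSet F = T),
            filterMatrix n F := by
  ext P Q
  rw [Matrix.sum_apply]
  simp only [Matrix.smul_apply, Matrix.sum_apply, smul_eq_mul, filterMatrix, Bmat]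
  rcases Nat.eq_zero_or_pos n with hn0 | hn1
  · -- degenerate case n = 0
    subst hn0
    have hX : IsEmpty X := Fintype.card_eq_zero_iff.mp hn
    have hr : ∀ H : PFilter X, H.rank = 0 := by
      intro H
      by_contra h
      obtain ⟨x, -⟩ := H.surjective ⟨0, Nat.pos_of_ne_zero h⟩
      exact hX.elim x
    have hsub : ∀ F G : PFilter X, F = G := by
      intro F G
      apply PFilter.ext' ((hr F).trans (hr G).symm)
      intro x
      exact hX.elim x
    have hdivF : ∀ F : PFilter X, dividerSet F = ∅ := by
      intro F
      rw [Finset.eq_empty_iff_forall_notMem]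
      intro l hl
      rw [dividerSet, Finset.mem_erase, Finset.mem_image] at hl
      obtain ⟨-, i, -, -⟩ := hl
      have hi := i.2
      have h0 := hr F
      omega
    obtain ⟨F0⟩ : Nonempty (PFilter X) :=
      ⟨⟨0, fun x => hX.elim x, fun i => i.elim0, fun a => hX.elim a⟩⟩
    have hD : epsDividers 0 ε = ∅ := by
      rw [Finset.eq_empty_iff_forall_notMem]
      intro l hl
      simp only [epsDividers, Finset.mem_image, Finset.mem_filter, Finset.mem_univ,
        true_and] at hl
      obtain ⟨k, -, -⟩ := hl
      have := k.2
      omega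
    rw [hD, Finset.powerset_empty, Finset.sum_singleton]
    have heps : eps P Q = ε := by
      funext k
      exact absurd k.2 (by omega)
    rw [if_pos heps]
    have hset : Finset.univ.filter (fun F : PFilter X => dividerSet F = (∅ : Finset ℕ))
        = {F0} := by
      ext F
      simp only [Finset.mem_filter, Finset.mem_univ, true_and, Finset.mem_singleton]
      constructor
      · intro _
        exact hsub F F0
      · intro h
        rw [h]
        exact hdivF F0
    rw [hset, Finset.sum_singleton]
    have hprod : IsFilterProd F0 P.toFilter Q.toFilter :=
      ⟨fun u => hX.elim u, fun u => hX.elim u⟩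
    rw [if_pos hprod]
    norm_num
  · -- main case
    have hstep1 : ∀ T ∈ (epsDividers n ε).powerset,
        (-1 : ℤ) ^ ((epsDividers n ε).card - T.card) *
          (∑ F ∈ Finset.univ.filter (fun F : PFilter X => dividerSet F = T),
            (if IsFilterProd F P.toFilter Q.toFilter then (1 : ℤ) else 0))
        = (-1 : ℤ) ^ ((epsDividers n ε).card - T.card) *
          (if epsDividers n (eps P Q) ⊆ T then 1 else 0) := by
      intro T hTmem
      rw [Finset.mem_powerset] at hTmem
      congr 1
      rw [Finset.sum_boole, Finset.filter_filter]
      exact count_lemma hn hn1 P Q T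
        (fun l hl => epsDividers_bounds hn1 ε l (hTmem hl))
    rw [Finset.sum_congr rfl hstep1, sum_incl_excl]
    by_cases h : eps P Q = ε
    · rw [if_pos h, if_pos (by rw [h])]
    · rw [if_neg h, if_neg (fun he => h ((epsDividers_eq_iff _ _).mp he))]
end

section
/- For every finite poset X and every filter F on X, every complex eigenvalue of the 0–1 matrix M_F^X is an integer; equivalently, the characteristic polynomial of M_F^X splits over ℤ into linear factors with integer roots. -/
attribute [local instance] Classical.propDecidable

/-!
`M_F^X` is the matrix of the self-map `P ↦ F·P` of the linear extensions. The product `F·P` is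
unique, because a linear extension is determined by the strict order it induces, and it exists:
list `X` lexicographically by `(F, P)`. By uniqueness the map is idempotent, since `F·P` itself
satisfies the defining conditions of `F·(F·P)`. The matrix of an idempotent self-map `g` is
triangular once the points moved by `g` precede the fixed points, so its eigenvalues are its
diagonal entries `0` and `1`.
-/

open Polynomial

namespace Matrix

variable {ι R : Type*} [Fintype ι] [DecidableEq ι] [CommRing R]

theorem charpoly_eq_prod_of_blockTriangular_of_injective {α : Type*} [LinearOrder α]
    {M : Matrix ι ι R} {b : ι → α} (hb : Function.Injective b) (hM : M.BlockTriangular b) :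
    M.charpoly = ∏ i, (X - C (M i i)) :=
  letI := LinearOrder.lift' b hb
  charpoly_of_isUpperTriangular M hM

theorem charpoly_of_idempotent (g : ι → ι) (hg : ∀ x, g (g x) = g x) :
    (of fun x y => if g x = y then (1 : R) else 0).charpoly =
      ∏ x, (X - C (if g x = x then (1 : R) else 0)) := by
  let b : ι → Bool ×ₗ Fin (Fintype.card ι) :=
    fun x => toLex (decide (g x = x), Fintype.equivFin ι x)
  have hb : Function.Injective b := fun x y hxy =>
    (Fintype.equivFin ι).injective (congrArg (fun p => (ofLex p).2) hxy)
  refine charpoly_eq_prod_of_blockTriangular_of_injective hb fun x y hyx => ?_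
  rw [of_apply, if_neg]
  rintro rfl
  by_cases hx : g x = x
  · rw [hx] at hyx
    exact lt_irrefl _ hyx
  · have : b x < b (g x) := Prod.Lex.toLex_lt_toLex.2 (Or.inl (by simp [hx, hg]))
    exact lt_asymm hyx this

end Matrix

theorem exists_equivFin_lt_iff {X α : Type*} [Fintype X] [LinearOrder α] {κ : X → α}
    (hκ : Function.Injective κ) :
    ∃ f : X ≃ Fin (Fintype.card X), ∀ u v, f u < f v ↔ κ u < κ v := by
  let e := Fintype.orderIsoFinOfCardEq (Set.range κ) (Set.card_range_of_injective hκ)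
  refine ⟨(Equiv.ofInjective κ hκ).trans e.symm.toEquiv, fun u v => ?_⟩
  simp [← Subtype.coe_lt_coe]

theorem Equiv.eq_of_lt_iff {X : Type*} {n : ℕ} {e e' : X ≃ Fin n}
    (h : ∀ u v, e u < e v ↔ e' u < e' v) : e = e' := by
  have hmono : StrictMono (e.symm.trans e') := fun i j hij => by
    simpa using (h (e.symm i) (e.symm j)).1 (by simpa using hij)
  exact Equiv.ext fun x => by simpa using (congrFun hmono.eq_id (e x)).symm

section

variable {X : Type*} [PartialOrder X]

theorem LinExt.eq_of_isFilterProd {n : ℕ} {F : PFilter X} {P Q Q' : LinExt X n}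
    (h : IsFilterProd F P.toFilter Q.toFilter) (h' : IsFilterProd F P.toFilter Q'.toFilter) :
    Q = Q' := by
  refine Subtype.ext (Equiv.eq_of_lt_iff fun u v => ?_)
  rcases lt_trichotomy (F.toFun u) (F.toFun v) with hlt | heq | hgt
  · exact iff_of_true (h.1 u v hlt) (h'.1 u v hlt)
  · exact (h.2 u v heq).trans (h'.2 u v heq).symm
  · exact iff_of_false (h.1 v u hgt).asymm (h'.1 v u hgt).asymm

theorem LinExt.exists_isFilterProd [Fintype X] (F : PFilter X) (P : LinExt X (Fintype.card X)) :
    ∃ Q : LinExt X (Fintype.card X), IsFilterProd F P.toFilter Q.toFilter := by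
  let κ : X → Fin F.rank ×ₗ Fin (Fintype.card X) := fun x => toLex (F.toFun x, P.1 x)
  have hκ : Function.Injective κ := fun x y hxy =>
    P.1.injective (congrArg (fun p => (ofLex p).2) hxy)
  have hκ_lt : ∀ u v, κ u < κ v ↔
      F.toFun u < F.toFun v ∨ F.toFun u = F.toFun v ∧ P.1 u < P.1 v :=
    fun u v => Prod.Lex.toLex_lt_toLex
  obtain ⟨f, hf⟩ := exists_equivFin_lt_iff hκ
  have hmono : ∀ a b, a ≤ b → f a ≤ f b := by
    intro a b hab
    rcases eq_or_ne a b with rfl | hne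
    · rfl
    refine ((hf a b).2 ((hκ_lt a b).2 ?_)).le
    rcases (F.mono a b hab).lt_or_eq with hlt | heq
    exacts [Or.inl hlt, Or.inr ⟨heq, (P.2 a b hab).lt_of_ne (P.1.injective.ne hne)⟩]
  refine ⟨⟨f, hmono⟩, fun u v huv => (hf u v).2 ((hκ_lt u v).2 (Or.inl huv)),
    fun u v huv => ?_⟩
  show f u < f v ↔ P.1 u < P.1 v
  simp [hf, hκ_lt, huv]

variable [Fintype X]

noncomputable def PFilter.mulLinExt (F : PFilter X) (P : LinExt X (Fintype.card X)) :
    LinExt X (Fintype.card X) :=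
  (LinExt.exists_isFilterProd F P).choose

theorem PFilter.isFilterProd_mulLinExt (F : PFilter X) (P : LinExt X (Fintype.card X)) :
    IsFilterProd F P.toFilter (F.mulLinExt P).toFilter :=
  (LinExt.exists_isFilterProd F P).choose_spec

theorem PFilter.isFilterProd_iff_mulLinExt_eq (F : PFilter X) (P Q : LinExt X (Fintype.card X)) :
    IsFilterProd F P.toFilter Q.toFilter ↔ F.mulLinExt P = Q :=
  ⟨fun h => LinExt.eq_of_isFilterProd (F.isFilterProd_mulLinExt P) h,
    fun h => h ▸ F.isFilterProd_mulLinExt P⟩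

theorem PFilter.mulLinExt_idem (F : PFilter X) (P : LinExt X (Fintype.card X)) :
    F.mulLinExt (F.mulLinExt P) = F.mulLinExt P :=
  (F.isFilterProd_iff_mulLinExt_eq _ _).1 ⟨(F.isFilterProd_mulLinExt P).1, fun _ _ _ => Iff.rfl⟩

theorem filterMatrix_eq_of_mulLinExt [DecidableEq (LinExt X (Fintype.card X))]
    (F : PFilter X) :
    filterMatrix (Fintype.card X) F = .of fun P Q => if F.mulLinExt P = Q then 1 else 0 := by
  ext P Q
  simp only [filterMatrix, Matrix.of_apply, F.isFilterProd_iff_mulLinExt_eq]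

end

/-- For every filter `F` on a finite poset `X`, the characteristic polynomial of the 0-1
matrix `M_F^X` splits over `ℤ` into linear factors with integer roots; equivalently,
every complex eigenvalue of `M_F^X` is an integer. -/
theorem filterMatrix_charpoly_splits {X : Type*} [PartialOrder X] [Fintype X]
    [Fintype (LinExt X (Fintype.card X))] [DecidableEq (LinExt X (Fintype.card X))]
    (F : PFilter X) :
    ∃ d : LinExt X (Fintype.card X) → ℤ,
      Matrix.charpoly (filterMatrix (Fintype.card X) F) =
        ∏ P : LinExt X (Fintype.card X), (Polynomial.X - Polynomial.C (d P)) := by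
  refine ⟨fun P => if F.mulLinExt P = P then 1 else 0, ?_⟩
  rw [filterMatrix_eq_of_mulLinExt, Matrix.charpoly_of_idempotent _ F.mulLinExt_idem]
end

section
/- Let X̄ be the antichain on n elements (the poset with no order relations), so that Tot_{X̄} is the set of all n! linear orders on {1,…,n}. There exist an invertible matrix U with rational entries indexed by Tot_{X̄}, and a linear ordering of the index set Tot_{X̄}, such that for every filter F on X̄ the conjugated matrix U M_F^{X̄} U^{−1} is upper triangular with respect to that ordering and has integer entries on the diagonal. -/
attribute [local instance] Classical.propDecidable

/-- On the antichain `{1,…,n}` (no order relations), linear extensions are just the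
bijections, i.e. permutations of `Fin n`.  `AProd F P Q` says that the linear order `Q` is
the filter product `F·P`: (i) `F(u) < F(v)` implies `Q(u) < Q(v)`, and (ii) if
`F(u) = F(v)` then `Q(u) < Q(v)` iff `P(u) < P(v)`. -/
def AProd {n k : ℕ} (F : Fin n → Fin k) (P Q : Equiv.Perm (Fin n)) : Prop :=
  (∀ u v : Fin n, F u < F v → Q u < Q v) ∧
  (∀ u v : Fin n, F u = F v → (Q u < Q v ↔ P u < P v))

/-- The matrix `M_F^{X̄}` for a filter `F` on the `n`-element antichain `X̄`, indexed by
the `n!` linear orders on `X̄`, with `(M_F)_{PQ} = 1` if `Q = F·P` and `0` otherwise. -/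
noncomputable def AMat {n k : ℕ} (F : Fin n → Fin k) :
    Matrix (Equiv.Perm (Fin n)) (Equiv.Perm (Fin n)) ℚ :=
  fun P Q => if AProd F P Q then 1 else 0

/-!
Pulling functions on linear orders back along `P ↦ F·P` is the linear map whose matrix in the
standard basis is `M_F`. For a set `E` of pairs let `y_E` be the indicator of the orders `P`
with `P u < P v` for all `(u, v) ∈ E`. Pulling back sends `y_E` to `0` if `F` reverses a pair of
`E`, and otherwise to `y_{E'}`, where `E' ⊆ E` keeps the pairs on which `F` is constant. The
`y_E` span, since the indicator of a single order is one of them. Walking along a linear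
extension of inclusion and keeping each `y_E` that is not in the span of the earlier ones gives
a basis in which every such map is upper triangular with diagonal entries `0` or `1`.
-/

open Submodule Set

section GreedyBasis

variable {K V ι : Type*} [Field K] [AddCommGroup V] [Module K V] [LinearOrder ι] [Finite ι]

variable (K) in
def greedyIndices (y : ι → V) : Set ι :=
  {i | y i ∉ span K (y '' Iio i)}

variable {y : ι → V}

theorem linearIndepOn_greedyIndices : LinearIndepOn K y (greedyIndices K y) := by
  suffices ∀ s : Finset ι, ↑s ⊆ greedyIndices K y → LinearIndepOn K y s by
    obtain ⟨s, hs⟩ := (Set.toFinite (greedyIndices K y)).exists_finset_coe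
    exact hs ▸ this s hs.le
  intro s
  induction s using Finset.induction_on_max with
  | empty => simp
  | insert a s hlt ih =>
    intro hsub
    rw [Finset.coe_insert] at hsub ⊢
    rw [insert_subset_iff] at hsub
    have has : a ∉ (s : Set ι) := fun h => (hlt a h).false
    refine (linearIndepOn_insert has).mpr ⟨ih hsub.2, fun h => hsub.1 ?_⟩
    exact span_mono (image_mono fun x hx => hlt x hx) h

theorem mem_span_greedyIndices_le (i : ι) :
    y i ∈ span K ((fun j : greedyIndices K y => y j) '' {j | (j : ι) ≤ i}) := by
  induction i using WellFoundedLT.induction with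
  | _ i ih =>
  by_cases hi : i ∈ greedyIndices K y
  · exact subset_span ⟨⟨i, hi⟩, le_rfl, rfl⟩
  · refine span_le.mpr ?_ (not_not.mp hi)
    rintro _ ⟨j, hji, rfl⟩
    refine span_mono (image_mono ?_) (ih j hji)
    exact fun l (hl : (l : ι) ≤ j) => show (l : ι) ≤ i from hl.trans hji.le

noncomputable def greedyBasis (hy : span K (range y) = ⊤) :
    Module.Basis (greedyIndices K y) K V :=
  Module.Basis.mk (v := fun i : greedyIndices K y => y i) linearIndepOn_greedyIndices (by
    rw [← hy, span_le]
    rintro _ ⟨i, rfl⟩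
    exact span_mono (image_subset_range _ _) (mem_span_greedyIndices_le i))

variable (hy : span K (range y) = ⊤)

theorem greedyBasis_apply (i : greedyIndices K y) : greedyBasis hy i = y i :=
  Module.Basis.mk_apply _ _ _

theorem greedyBasis_repr_eq_zero {i : ι} {j : greedyIndices K y} (h : i < j) :
    (greedyBasis hy).repr (y i) j = 0 := by
  have hspan := mem_span_greedyIndices_le (K := K) (y := y) i
  rw [← funext (greedyBasis_apply hy)] at hspan
  by_contra hne
  exact h.not_ge ((greedyBasis hy).repr_support_subset_of_mem_span _ hspan
    (Finsupp.mem_support_iff.mpr hne))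

variable {T : V →ₗ[K] V} (hT : ∀ i, T (y i) = 0 ∨ ∃ i' ≤ i, T (y i) = y i')
include hT

theorem greedyBasis_repr_map_eq_zero {i j : greedyIndices K y} (h : i < j) :
    (greedyBasis hy).repr (T (greedyBasis hy i)) j = 0 := by
  rw [greedyBasis_apply]
  obtain hzero | ⟨i', hi', hi'eq⟩ := hT i
  · simp [hzero]
  · rw [hi'eq]
    exact greedyBasis_repr_eq_zero hy (hi'.trans_lt h)

theorem greedyBasis_repr_map_self (i : greedyIndices K y) :
    (greedyBasis hy).repr (T (greedyBasis hy i)) i = 0 ∨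
      (greedyBasis hy).repr (T (greedyBasis hy i)) i = 1 := by
  rw [greedyBasis_apply]
  obtain hzero | ⟨i', hi', hi'eq⟩ := hT i
  · simp [hzero]
  rw [hi'eq]
  obtain hlt | rfl := hi'.lt_or_eq
  · exact .inl (greedyBasis_repr_eq_zero hy hlt)
  · right
    rw [← greedyBasis_apply hy, Module.Basis.repr_self, Finsupp.single_eq_same]

end GreedyBasis

theorem exists_basis_forall_toMatrix_triangular {K V ι κ : Type*} [Field K] [AddCommGroup V]
    [Module K V] [PartialOrder ι] [Finite ι] [Fintype κ] [DecidableEq κ] (y : ι → V)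
    (hy : span K (range y) = ⊤) (b₀ : Module.Basis κ K V) :
    ∃ (b : Module.Basis κ K V) (r : LinearOrder κ), ∀ T : V →ₗ[K] V,
      (∀ i, T (y i) = 0 ∨ ∃ j ≤ i, T (y i) = y j) →
        (∀ p q, r.lt q p → LinearMap.toMatrix b b T p q = 0) ∧
        ∀ p, LinearMap.toMatrix b b T p p = 0 ∨ LinearMap.toMatrix b b T p p = 1 := by
  let y' : LinearExtension ι → V := y
  have : Finite (LinearExtension ι) := ‹Finite ι›
  let B := greedyBasis (y := y') hy
  let e := b₀.indexEquiv B
  refine ⟨B.reindex e.symm, LinearOrder.lift' (fun p => (e p : LinearExtension ι))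
    (Subtype.val_injective.comp e.injective), fun T hT => ?_⟩
  have hT' : ∀ i, T (y' i) = 0 ∨ ∃ j ≤ i, T (y' i) = y' j := fun i =>
    (hT i).imp_right fun ⟨j, hj, h⟩ =>
      ⟨toLinearExtension j, toLinearExtension.monotone hj, h⟩
  simp only [LinearMap.toMatrix_apply, Module.Basis.reindex_apply,
    Module.Basis.repr_reindex_apply, Equiv.symm_symm]
  exact ⟨fun p q h => greedyBasis_repr_map_eq_zero (y := y') hy hT' h,
    fun p => greedyBasis_repr_map_self (y := y') hy hT' _⟩

theorem Fin.perm_eq_of_lt_imp_lt {n : ℕ} {Q Q' : Equiv.Perm (Fin n)}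
    (h : ∀ u v, Q u < Q v → Q' u < Q' v) : Q = Q' := by
  have hmono : StrictMono (Q.symm.trans Q') := fun a b hab => by
    simpa using h (Q.symm a) (Q.symm b) (by simpa using hab)
  have hid := congrArg DFunLike.coe
    (Subsingleton.elim (hmono.orderIsoOfSurjective _ (Q.symm.trans Q').surjective) (.refl _))
  refine Equiv.ext fun u => ?_
  simpa using (congrFun hid (Q u)).symm

theorem Fin.exists_perm_lt_iff_lt {α : Type*} [LinearOrder α] {n : ℕ} {f : Fin n → α}
    (hf : Function.Injective f) : ∃ Q : Equiv.Perm (Fin n), ∀ u v, Q u < Q v ↔ f u < f v := by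
  have hmono : StrictMono (f ∘ Tuple.sort f) :=
    (Tuple.monotone_sort f).strictMono_of_injective (hf.comp (Tuple.sort f).injective)
  refine ⟨(Tuple.sort f).symm, fun u v => ?_⟩
  rw [← hmono.lt_iff_lt]
  simp

section FilterProduct

variable {n k : ℕ}

theorem aProd_iff_lt_iff_lex {F : Fin n → Fin k} {P Q : Equiv.Perm (Fin n)} :
    AProd F P Q ↔ ∀ u v, Q u < Q v ↔ toLex (F u, P u) < toLex (F v, P v) := by
  simp only [Prod.Lex.toLex_lt_toLex]
  refine ⟨fun ⟨hlt, heq⟩ u v => ?_, fun h => ⟨fun u v huv => ?_, fun u v huv => ?_⟩⟩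
  · rcases lt_trichotomy (F u) (F v) with huv | huv | huv
    · exact iff_of_true (hlt u v huv) (.inl huv)
    · simp [heq u v huv, huv]
    · exact iff_of_false (hlt v u huv).not_gt (by simp [huv.not_gt, huv.ne'])
  · exact (h u v).mpr (.inl huv)
  · simp [h u v, huv]

theorem existsUnique_aProd (F : Fin n → Fin k) (P : Equiv.Perm (Fin n)) :
    ∃! Q, AProd F P Q := by
  simp_rw [aProd_iff_lt_iff_lex]
  obtain ⟨Q, hQ⟩ := Fin.exists_perm_lt_iff_lt (f := fun u => toLex (F u, P u))
    fun u v h => P.injective (congrArg Prod.snd (toLex.injective h))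
  refine ⟨Q, hQ, fun Q' hQ' => Fin.perm_eq_of_lt_imp_lt fun u v h => ?_⟩
  exact (hQ u v).mpr ((hQ' u v).mp h)

noncomputable def filterMul (F : Fin n → Fin k) (P : Equiv.Perm (Fin n)) : Equiv.Perm (Fin n) :=
  (existsUnique_aProd F P).exists.choose

theorem aProd_filterMul (F : Fin n → Fin k) (P : Equiv.Perm (Fin n)) :
    AProd F P (filterMul F P) :=
  (existsUnique_aProd F P).exists.choose_spec

theorem aProd_iff_eq_filterMul {F : Fin n → Fin k} {P Q : Equiv.Perm (Fin n)} :
    AProd F P Q ↔ Q = filterMul F P :=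
  ⟨fun h => (existsUnique_aProd F P).unique h (aProd_filterMul F P),
    fun h => h ▸ aProd_filterMul F P⟩

theorem aMat_eq_toMatrix' (F : Fin n → Fin k) :
    AMat F = LinearMap.toMatrix' (LinearMap.funLeft ℚ ℚ (filterMul F)) := by
  ext P Q
  simp [AMat, LinearMap.funLeft_apply, Pi.single_apply, aProd_iff_eq_filterMul, eq_comm]

noncomputable def orderIndicator (E : Finset (Fin n × Fin n)) (P : Equiv.Perm (Fin n)) :
    ℚ :=
  if ∀ e ∈ E, P e.1 < P e.2 then 1 else 0

theorem funLeft_filterMul_orderIndicator (F : Fin n → Fin k) (E : Finset (Fin n × Fin n)) :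
    LinearMap.funLeft ℚ ℚ (filterMul F) (orderIndicator E) = 0 ∨
      ∃ E' ⊆ E,
        LinearMap.funLeft ℚ ℚ (filterMul F) (orderIndicator E) = orderIndicator E' := by
  by_cases hrev : ∃ e ∈ E, F e.2 < F e.1
  · obtain ⟨e, he, hlt⟩ := hrev
    left
    ext P
    simp only [LinearMap.funLeft_apply, orderIndicator, Pi.zero_apply, ite_eq_right_iff]
    exact fun h => absurd ((aProd_filterMul F P).1 _ _ hlt) (h e he).not_gt
  · refine .inr ⟨E.filter fun e => F e.1 = F e.2, Finset.filter_subset _ _, ?_⟩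
    ext P
    simp only [LinearMap.funLeft_apply, orderIndicator, Finset.mem_filter, and_imp]
    refine if_congr (forall₂_congr fun e he => ?_) rfl rfl
    rcases lt_trichotomy (F e.1) (F e.2) with hlt | heq | hgt
    · simp [(aProd_filterMul F P).1 _ _ hlt, hlt.ne]
    · simp [(aProd_filterMul F P).2 _ _ heq, heq]
    · exact absurd ⟨e, he, hgt⟩ hrev

theorem single_eq_orderIndicator (τ : Equiv.Perm (Fin n)) :
    Pi.single τ 1 = orderIndicator {e | τ e.1 < τ e.2} := by
  ext P
  have : (∀ u v, τ u < τ v → P u < P v) ↔ P = τ :=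
    ⟨fun h => (Fin.perm_eq_of_lt_imp_lt h).symm, fun h _ _ => h ▸ id⟩
  simp [orderIndicator, Pi.single_apply, this]

theorem span_range_orderIndicator :
    span ℚ (range (orderIndicator (n := n))) = ⊤ := by
  rw [eq_top_iff, ← (Pi.basisFun ℚ _).span_eq, span_le]
  rintro _ ⟨τ, rfl⟩
  rw [Pi.basisFun_apply, single_eq_orderIndicator]
  exact subset_span (mem_range_self _)

end FilterProduct

/-- There is a single invertible rational matrix `U` and a single linear ordering of the
set of linear orders on the `n`-element antichain such that for every filter `F` the
conjugate `U · M_F · U⁻¹` is upper triangular with integer diagonal entries. -/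
theorem antichain_simultaneous_triangularization (n : ℕ) :
    ∃ (U V : Matrix (Equiv.Perm (Fin n)) (Equiv.Perm (Fin n)) ℚ)
      (r : LinearOrder (Equiv.Perm (Fin n))),
      U * V = 1 ∧ V * U = 1 ∧
      ∀ (k : ℕ) (F : Fin n → Fin k), Function.Surjective F →
        (∀ P Q : Equiv.Perm (Fin n), r.lt Q P → (U * AMat F * V) P Q = 0) ∧
        (∀ P : Equiv.Perm (Fin n), ∃ z : ℤ, (U * AMat F * V) P P = (z : ℚ)) := by
  let std := Pi.basisFun ℚ (Equiv.Perm (Fin n))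
  obtain ⟨b, r, hb⟩ :=
    exists_basis_forall_toMatrix_triangular _ span_range_orderIndicator std
  refine ⟨b.toMatrix std, std.toMatrix b, r, b.toMatrix_mul_toMatrix_flip std,
    std.toMatrix_mul_toMatrix_flip b, fun k F _ => ?_⟩
  rw [aMat_eq_toMatrix', ← LinearMap.toMatrix_eq_toMatrix',
    basis_toMatrix_mul_linearMap_toMatrix_mul_basis_toMatrix]
  obtain ⟨hlt, hdiag⟩ := hb _ (funLeft_filterMul_orderIndicator F)
  refine ⟨hlt, fun P => ?_⟩
  rcases hdiag P with h | h
  · exact ⟨0, by simp [h]⟩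
  · exact ⟨1, by simp [h]⟩
end

section
/- Let m = n(n−1)/2, let H = (1/√2)·[[1,1],[1,−1]] be the 2×2 discrete Fourier transform matrix, and let U = H^{⊗m} be its m-fold tensor (Kronecker) power, acting on the space ℝ^{{−1,+1}^m} of functions on tournaments. Then for every filter F on the n-element antichain, the matrix U N_F U^{−1} is upper triangular with respect to any linear ordering of the monomial basis {∏_{p∈S} x_p : S a subset of the set of pairs} that refines the ordering by increasing cardinality |S|, and all its diagonal entries lie in {0,1}. -/
attribute [local instance] Classical.propDecidable

/-- The set of unordered pairs `{i,j}`, `i < j`, of elements of `{1,…,n}`;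
it has `m = n(n-1)/2` elements. -/
abbrev TPairs (n : ℕ) := {p : Fin n × Fin n // p.1 < p.2}

/-- A tournament on `{1,…,n}`: an independent choice of one of the two strict orders for
each pair `i < j` (`T p = true` means `p.1 ≺ p.2`).  Tournaments are identified with the
vertices `{-1,+1}^m` of the cube, `true ↦ +1`, `false ↦ -1`. -/
abbrev Tournament (n : ℕ) := TPairs n → Bool

/-- The tournament `≺_F`: `i ≺_F j` iff `F i < F j`, or `F i = F j` and `i ≺ j`. -/
def tAct {n k : ℕ} (F : Fin n → Fin k) (T : Tournament n) : Tournament n :=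
  fun p => if F p.1.1 < F p.1.2 then true else if F p.1.2 < F p.1.1 then false else T p

/-- The 0-1 matrix `N_F` indexed by tournaments: `(N_F)_{T T'} = 1` iff `T' = T_F`. -/
noncomputable def NMat {n k : ℕ} (F : Fin n → Fin k) :
    Matrix (Tournament n) (Tournament n) ℝ :=
  fun T T' => if T' = tAct F T then 1 else 0

/-- The 2×2 discrete Fourier transform matrix `H = (1/√2)·[[1,1],[1,−1]]`, with rows and
columns indexed by `{-1,+1} ≃ Bool` (`false` first). -/
noncomputable def Hmat : Matrix Bool Bool ℝ :=
  fun b c => (Real.sqrt 2)⁻¹ * (if b && c then -1 else 1)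

/-- The `m`-fold Kronecker power `U = H^{⊗m}` acting on `ℝ^{{-1,+1}^m}`; under the
identification of tournaments with subsets `S = {p : T p = true}` its rows and columns
correspond to the monomials `∏_{p ∈ S} x_p`. -/
noncomputable def Umat (n : ℕ) : Matrix (Tournament n) (Tournament n) ℝ :=
  fun T T' => ∏ p : TPairs n, Hmat (T p) (T' p)

lemma sum_prod_bool {n : ℕ} (g : TPairs n → Bool → ℝ) :
    ∑ T : Tournament n, ∏ p, g p (T p) = ∏ p, (g p false + g p true) := by
  classical
  have h1 : ∀ p : TPairs n, g p false + g p true = ∑ b : Bool, g p b := by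
    intro p; rw [Fintype.sum_bool]; ring
  simp only [h1]
  rw [Finset.prod_univ_sum]
  refine Finset.sum_congr ?_ fun x _ => rfl
  ext x; simp [Fintype.mem_piFinset]

lemma hsq : (Real.sqrt 2)⁻¹ * (Real.sqrt 2)⁻¹ = 2⁻¹ := by
  rw [← mul_inv, Real.mul_self_sqrt (by norm_num)]

lemma Hmat_sum (a c : Bool) : Hmat a false * Hmat false c + Hmat a true * Hmat true c
    = if a = c then 1 else 0 := by
  cases a <;> cases c <;> simp [Hmat] <;> nlinarith [hsq, Real.sqrt_nonneg 2]

lemma UU (n : ℕ) : Umat n * Umat n = 1 := by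
  classical
  ext S S'
  rw [Matrix.mul_apply]
  simp only [Umat, ← Finset.prod_mul_distrib]
  refine (sum_prod_bool (fun p t => Hmat (S p) t * Hmat t (S' p))).trans ?_
  by_cases h : S = S'
  · subst h
    simp [Hmat_sum, Matrix.one_apply]
  · rw [Matrix.one_apply_ne h]
    obtain ⟨p, hp⟩ : ∃ p, S p ≠ S' p := by
      by_contra hc; push_neg at hc; exact h (funext hc)
    exact Finset.prod_eq_zero (Finset.mem_univ p) (by rw [Hmat_sum]; simp [hp])

noncomputable def Aent {n k : ℕ} (F : Fin n → Fin k) (S S' : Tournament n) (p : TPairs n) : ℝ :=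
  if F p.1.1 = F p.1.2 then (if S p = S' p then 1 else 0)
  else if S p then 0 else (if F p.1.1 < F p.1.2 ∧ S' p = true then -1 else 1)

lemma entry_eq {n k : ℕ} (F : Fin n → Fin k) (S S' : Tournament n) :
    (Umat n * NMat F * (Umat n)⁻¹) S S' = ∏ p, Aent F S S' p := by
  classical
  rw [Matrix.inv_eq_right_inv (UU n)]
  rw [Matrix.mul_apply]
  simp only [Matrix.mul_apply, Finset.sum_mul]
  rw [Finset.sum_comm]
  have collapse : ∀ T : Tournament n,
      (∑ T' : Tournament n, Umat n S T * NMat F T T' * Umat n T' S')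
      = Umat n S T * Umat n (tAct F T) S' := by
    intro T
    rw [Finset.sum_eq_single (tAct F T)]
    · simp [NMat]
    · intro b _ hb; simp [NMat, hb]
    · intro h; exact absurd (Finset.mem_univ _) h
  simp only [collapse]
  have expand : ∀ T : Tournament n, Umat n S T * Umat n (tAct F T) S'
      = ∏ p, (fun p t => Hmat (S p) t * Hmat (if F p.1.1 < F p.1.2 then true
          else if F p.1.2 < F p.1.1 then false else t) (S' p)) p (T p) := by
    intro T
    rw [Umat, Umat, ← Finset.prod_mul_distrib]
    exact Finset.prod_congr rfl fun p _ => rfl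
  simp only [expand]
  refine (sum_prod_bool (fun p t => Hmat (S p) t * Hmat (if F p.1.1 < F p.1.2 then true
      else if F p.1.2 < F p.1.1 then false else t) (S' p))).trans ?_
  refine Finset.prod_congr rfl fun p _ => ?_
  rcases lt_trichotomy (F p.1.1) (F p.1.2) with h | h | h
  · have h2 : ¬ F p.1.2 < F p.1.1 := asymm h
    simp only [if_pos h, Aent, if_neg (ne_of_lt h)]
    cases hS : S p <;> cases hS' : S' p <;>
      simp [Hmat, h] <;> nlinarith [hsq, Real.sqrt_nonneg 2]
  · have h1 : ¬ F p.1.1 < F p.1.2 := by simp [h]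
    have h2 : ¬ F p.1.2 < F p.1.1 := by simp [h]
    simp only [if_neg h1, if_neg h2, Aent, if_pos h]
    cases hS : S p <;> cases hS' : S' p <;>
      simp [Hmat] <;> nlinarith [hsq, Real.sqrt_nonneg 2]
  · have h1 : ¬ F p.1.1 < F p.1.2 := asymm h
    simp only [if_neg h1, if_pos h, Aent, if_neg (ne_of_gt h)]
    cases hS : S p <;> cases hS' : S' p <;>
      simp [Hmat, h1] <;> nlinarith [hsq, Real.sqrt_nonneg 2]

/-- For every filter `F` on the `n`-element antichain, `U N_F U⁻¹` is upper triangular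
with respect to any linear ordering of the monomial basis refining the ordering by
increasing cardinality, and its diagonal entries lie in `{0,1}`. -/
theorem fourier_conjugate_NMat_upper_triangular (n : ℕ)
    (r : LinearOrder (Tournament n))
    (hr : ∀ T T' : Tournament n,
      (Finset.univ.filter fun p => T p = true).card <
        (Finset.univ.filter fun p => T' p = true).card → r.lt T T') :
    ∀ (k : ℕ) (F : Fin n → Fin k), Function.Surjective F →
      (∀ T T' : Tournament n, r.lt T' T → (Umat n * NMat F * (Umat n)⁻¹) T T' = 0) ∧
      (∀ T : Tournament n,
        (Umat n * NMat F * (Umat n)⁻¹) T T = 0 ∨ (Umat n * NMat F * (Umat n)⁻¹) T T = 1) := by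
  intro k F _
  constructor
  · intro T T' hlt
    rw [entry_eq]
    by_contra h0
    have hall : ∀ p, Aent F T T' p ≠ 0 := by
      intro p hp
      exact h0 (Finset.prod_eq_zero (Finset.mem_univ p) hp)
    have hsub : (Finset.univ.filter fun p => T p = true) ⊆
        (Finset.univ.filter fun p => T' p = true) := by
      intro p hp
      simp only [Finset.mem_filter, Finset.mem_univ, true_and] at hp ⊢
      have hA := hall p
      unfold Aent at hA
      by_cases hE : F p.1.1 = F p.1.2
      · rw [if_pos hE] at hA
        by_cases he : T p = T' p
        · rw [← he]; exact hp
        · simp [he] at hA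
      · rw [if_neg hE, hp] at hA; simp at hA
    rcases lt_or_eq_of_le (Finset.card_le_card hsub) with hc | hc
    · exact @lt_asymm _ r.toPreorder _ _ (hr T T' hc) hlt
    · have heq : (Finset.univ.filter fun p => T p = true) =
          (Finset.univ.filter fun p => T' p = true) :=
        Finset.eq_of_subset_of_card_le hsub (le_of_eq hc.symm)
      have : T = T' := by
        funext p
        have := Finset.ext_iff.mp heq p
        simp only [Finset.mem_filter, Finset.mem_univ, true_and] at this
        cases hT : T p
        · cases hT' : T' p
          · rfl
          · exact absurd (this.mpr hT') (by simp [hT])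
        · exact (this.mp hT).symm
      rw [this] at hlt
      exact @lt_irrefl _ r.toPreorder _ hlt
  · intro T
    rw [entry_eq]
    have hvals : ∀ p, Aent F T T p = 0 ∨ Aent F T T p = 1 := by
      intro p
      unfold Aent
      by_cases hE : F p.1.1 = F p.1.2
      · simp [hE]
      · rw [if_neg hE]
        cases hT : T p
        · right; simp [hT]
        · left; simp [hT]
    by_cases hall : ∀ p, Aent F T T p = 1
    · right; exact Finset.prod_eq_one fun p _ => hall p
    · left
      push_neg at hall
      obtain ⟨p, hp⟩ := hall
      exact Finset.prod_eq_zero (Finset.mem_univ p) ((hvals p).resolve_right hp)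
end

section
/- For all filters F and G on the n-element antichain and every k ≥ 0, the commutator N_F ∘ N_G − N_G ∘ N_F maps Φ_T^{≤k} into Φ_T^{≤k−1} (with the convention Φ_T^{≤−1} = {0}); that is, the operators N_F commute with each other on the associated graded space ⊕_k Φ_T^{≤k}/Φ_T^{≤k−1}. -/
/-- `Φ_T^{≤k}`: the space of real-valued functions on tournaments which are restrictions
to the vertices `{-1,+1}^m` of the cube of polynomials of total degree at most `k`. -/
def PhiLe (n k : ℕ) : Set (Tournament n → ℝ) :=
  {f | ∃ q : MvPolynomial (TPairs n) ℝ, q.totalDegree ≤ k ∧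
    ∀ T : Tournament n, f T = MvPolynomial.eval (fun p => if T p then (1 : ℝ) else -1) q}

/-! Both composites `N_G ∘ N_F` and `N_F ∘ N_G` keep the orientation of a pair whose ends lie in
a common block of `F` and of `G`, and overwrite every other pair by a constant that does not depend
on the tournament. On the cube they are therefore partial evaluations at the same set of
coordinates, differing only in the constants. Such a partial evaluation fixes the monomials
supported on the free coordinates, so these cancel in the difference, while every other monomial
loses at least one degree. -/

namespace MvPolynomial

variable {σ R : Type*} [CommRing R]

noncomputable def evalOutside (A : Set σ) [DecidablePred (· ∈ A)] (c : σ → R) :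
    MvPolynomial σ R →ₐ[R] MvPolynomial σ R :=
  bind₁ (A.piecewise X fun i => C (c i))

variable (A : Set σ) [DecidablePred (· ∈ A)]

theorem eval_evalOutside (c x : σ → R) (q : MvPolynomial σ R) :
    eval x (evalOutside A c q) = eval (A.piecewise x c) q := by
  rw [evalOutside, eval, eval₂Hom_bind₁]
  congr 2
  funext i
  by_cases hi : i ∈ A <;> simp [hi]

theorem evalOutside_monomial (c : σ → R) (d : σ →₀ ℕ) (a : R) :
    evalOutside A c (monomial d a) =
      monomial (d.filter (· ∈ A)) (a * (d.filter (· ∉ A)).prod fun i e => c i ^ e) := by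
  rw [evalOutside, monomial_eq, map_mul, bind₁_C_right, map_finsuppProd,
    ← Finsupp.prod_filter_mul_prod_filter_not (· ∈ A), monomial_eq, map_mul, map_finsuppProd]
  have hin : ((d.filter (· ∈ A)).prod fun i e => bind₁ (A.piecewise X fun i => C (c i)) (X i ^ e))
      = (d.filter (· ∈ A)).prod fun i e => X i ^ e :=
    Finsupp.prod_congr fun i hi => by simp_all [Finsupp.support_filter]
  have hout : ((d.filter (· ∉ A)).prod fun i e => bind₁ (A.piecewise X fun i => C (c i)) (X i ^ e))
      = (d.filter (· ∉ A)).prod fun i e => C (c i ^ e) :=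
    Finsupp.prod_congr fun i hi => by simp_all [Finsupp.support_filter]
  rw [hin, hout]
  ring

theorem evalOutside_eq_of_totalDegree_eq_zero (c₁ c₂ : σ → R) {q : MvPolynomial σ R}
    (hq : q.totalDegree = 0) : evalOutside A c₁ q = evalOutside A c₂ q := by
  rw [totalDegree_eq_zero_iff_eq_C.mp hq, algHom_C, algHom_C]

theorem totalDegree_evalOutside_sub_le (c₁ c₂ : σ → R) {q : MvPolynomial σ R} {k : ℕ}
    (hq : q.totalDegree ≤ k + 1) :
    (evalOutside A c₁ q - evalOutside A c₂ q).totalDegree ≤ k := by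
  rw [q.as_sum, map_sum, map_sum, ← Finset.sum_sub_distrib]
  refine totalDegree_finsetSum_le fun d hd => ?_
  rw [evalOutside_monomial, evalOutside_monomial, ← map_sub, ← mul_sub]
  by_cases hA : d.filter (· ∉ A) = 0
  · simp [hA]
  · have hdeg : (d.filter (· ∈ A)).degree < d.degree := by
      conv_rhs => rw [← Finsupp.filter_add_filter_not d (· ∈ A), map_add]
      exact Nat.lt_add_of_pos_right (Nat.pos_of_ne_zero ((Finsupp.degree_eq_zero_iff _).not.mpr hA))
    have htot : d.degree ≤ q.totalDegree := le_totalDegree hd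
    calc _ ≤ (d.filter (· ∈ A)).degree := totalDegree_monomial_le _ _
      _ ≤ k := by omega

end MvPolynomial

open MvPolynomial

def commonBlockPairs {n k k' : ℕ} (F : Fin n → Fin k) (G : Fin n → Fin k') : Set (TPairs n) :=
  {p | F p.1.1 = F p.1.2 ∧ G p.1.1 = G p.1.2}

theorem commonBlockPairs_comm {n k k' : ℕ} (F : Fin n → Fin k) (G : Fin n → Fin k') :
    commonBlockPairs F G = commonBlockPairs G F := by
  ext p
  exact and_comm

section tAct

variable {n k : ℕ} (F : Fin n → Fin k) {p : TPairs n}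

theorem tAct_apply_of_eq (hp : F p.1.1 = F p.1.2) (T : Tournament n) : tAct F T p = T p := by
  simp [tAct, hp]

theorem tAct_apply_of_ne (hp : F p.1.1 ≠ F p.1.2) (T T' : Tournament n) :
    tAct F T p = tAct F T' p := by
  rcases hp.lt_or_gt with h | h <;> simp [tAct, h, h.not_gt]

theorem tAct_tAct_eq_piecewise {k' : ℕ} (G : Fin n → Fin k')
    [DecidablePred (· ∈ commonBlockPairs F G)] (T T₀ : Tournament n) :
    tAct G (tAct F T) = (commonBlockPairs F G).piecewise T (tAct G (tAct F T₀)) := by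
  funext p
  by_cases hG : G p.1.1 = G p.1.2
  · by_cases hF : F p.1.1 = F p.1.2
    · rw [Set.piecewise_eq_of_mem _ _ _ (show p ∈ commonBlockPairs F G from ⟨hF, hG⟩),
        tAct_apply_of_eq G hG, tAct_apply_of_eq F hF]
    · rw [Set.piecewise_eq_of_notMem _ _ _ fun h => hF h.1, tAct_apply_of_eq G hG,
        tAct_apply_of_eq G hG, tAct_apply_of_ne F hF]
  · rw [Set.piecewise_eq_of_notMem _ _ _ fun h => hG h.2, tAct_apply_of_ne G hG]

end tAct

def signVector {n : ℕ} (T : Tournament n) : TPairs n → ℝ := fun p => if T p then 1 else -1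

theorem signVector_piecewise {n : ℕ} (A : Set (TPairs n)) [DecidablePred (· ∈ A)]
    (T T' : Tournament n) :
    signVector (A.piecewise T T') = A.piecewise (signVector T) (signVector T') := by
  funext p
  by_cases hp : p ∈ A <;> simp [signVector, hp]

theorem NF_commute_on_graded_general (n : ℕ) {kF kG : ℕ} (F : Fin n → Fin kF) (G : Fin n → Fin kG)
    (k : ℕ) (f : Tournament n → ℝ) (hf : f ∈ PhiLe n k) :
    (k = 0 → (fun T : Tournament n =>
        f (tAct G (tAct F T)) - f (tAct F (tAct G T))) = 0) ∧
    (1 ≤ k → (fun T : Tournament n =>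
        f (tAct G (tAct F T)) - f (tAct F (tAct G T))) ∈ PhiLe n (k - 1)) := by
  classical
  obtain ⟨q, hq, hfq⟩ := hf
  replace hfq : ∀ T, f T = eval (signVector T) q := hfq
  set A := commonBlockPairs F G
  set c₁ := signVector (tAct G (tAct F fun _ => true))
  set c₂ := signVector (tAct F (tAct G fun _ => true))
  have hcomm : ∀ T, f (tAct G (tAct F T)) - f (tAct F (tAct G T)) =
      eval (signVector T) (evalOutside A c₁ q - evalOutside A c₂ q) := fun T => by
    rw [hfq, hfq, tAct_tAct_eq_piecewise F G T (fun _ => true),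
      tAct_tAct_eq_piecewise G F T (fun _ => true), commonBlockPairs_comm G F,
      signVector_piecewise, signVector_piecewise, map_sub, eval_evalOutside, eval_evalOutside]
  refine ⟨fun hk => funext fun T => ?_,
    fun hk => ⟨_, totalDegree_evalOutside_sub_le A c₁ c₂ (by omega), hcomm⟩⟩
  rw [hcomm, evalOutside_eq_of_totalDegree_eq_zero A c₁ c₂ (by omega), sub_self, map_zero,
    Pi.zero_apply]

/-- The commutator `N_F ∘ N_G − N_G ∘ N_F` (where `(N_F f)(≺) = f(≺_F)`) maps `Φ_T^{≤k}`
into `Φ_T^{≤k-1}` (with `Φ_T^{≤-1} = {0}`): the operators `N_F` commute on the associated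
graded space. -/
theorem NF_commute_on_graded (n : ℕ) {kF kG : ℕ} (F : Fin n → Fin kF) (G : Fin n → Fin kG)
    (hF : Function.Surjective F) (hG : Function.Surjective G)
    (k : ℕ) (f : Tournament n → ℝ) (hf : f ∈ PhiLe n k) :
    (k = 0 → (fun T : Tournament n =>
        f (tAct G (tAct F T)) - f (tAct F (tAct G T))) = 0) ∧
    (1 ≤ k → (fun T : Tournament n =>
        f (tAct G (tAct F T)) - f (tAct F (tAct G T))) ∈ PhiLe n (k - 1)) :=
  NF_commute_on_graded_general n F G k f hf
end

section
/- For every finite poset X with n elements, the row sums of the matrix M^X are all equal: the element Σ_{Q ∈ Tot_X} a_{ε_{PQ}} of the ring R = ℤ[a_ε] does not depend on the choice of P ∈ Tot_X. Consequently, the column vector (1,1,…,1)ᵀ is a right eigenvector of M^X with eigenvalue Π_X({a_ε}) := Σ_{Q ∈ Tot_X} a_{ε_{PQ}}. -/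
/-- The matrix `M^X` over the polynomial ring `ℤ[a_ε]`, with rows and columns indexed
by the linear extensions of `X`, and `(M^X)_{PQ} = a_{ε_{PQ}}`. -/
noncomputable def pedMatrix (X : Type*) [PartialOrder X] (n : ℕ) :
    Matrix (LinExt X n) (LinExt X n) (MvPolynomial (Fin (n - 1) → Bool) ℤ) :=
  fun P Q => MvPolynomial.X (eps P Q)

/-!
Swapping two incomparable elements `a, b` that occupy adjacent positions of `P` gives a linear
extension `P₁`, and `Q ↦ Q₁` (swap `a, b` in `Q` if they are adjacent in `Q`, otherwise keep `Q`)
is an involution of the linear extensions with `ε_{P₁Q₁} = ε_{PQ}`: in the adjacent case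
`P₁ ∘ Q₁⁻¹ = P ∘ Q⁻¹`, and otherwise exchanging the consecutive values `P a, P b` of `P ∘ Q⁻¹`
changes no comparison between neighbouring positions. So the rows of `P` and `P₁` are
permutations of each other. Any `P` is joined to any `P'` by such swaps, each of them removing one
inversion between `P` and `P'`.
-/

open Finset

section SwapCovBy

variable {α : Type*} [LinearOrder α] {u v x y : α}

theorem Equiv.swap_lt_swap_iff_of_covBy (huv : u ⋖ v) (h₁ : ¬(x = u ∧ y = v))
    (h₂ : ¬(x = v ∧ y = u)) : Equiv.swap u v x < Equiv.swap u v y ↔ x < y := by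
  have hlt := huv.lt
  have hgap : ∀ z, ¬(u < z ∧ z < v) := fun z h => huv.2 h.1 h.2
  rw [Equiv.swap_apply_def, Equiv.swap_apply_def]
  split_ifs <;> grind

theorem Equiv.apply_swap_lt_apply_swap_iff {X : Type*} [DecidableEq X] (e : X ≃ α) {a b x y : X}
    (hab : e a ⋖ e b) (h₁ : ¬(x = a ∧ y = b)) (h₂ : ¬(x = b ∧ y = a)) :
    e (Equiv.swap a b x) < e (Equiv.swap a b y) ↔ e x < e y := by
  rw [← e.injective.swap_apply, ← e.injective.swap_apply]
  exact Equiv.swap_lt_swap_iff_of_covBy hab (by simpa using h₁) (by simpa using h₂)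

end SwapCovBy

def descents {α : Type*} [LinearOrder α] {n : ℕ} (f : Fin n → α) (k : Fin (n - 1)) : Bool :=
  decide (f ⟨k + 1, by omega⟩ < f ⟨k, by omega⟩)

theorem descents_swap_comp {α : Type*} [LinearOrder α] {n : ℕ} {f : Fin n → α} {u v : α}
    (huv : u ⋖ v) (hf : ∀ i j : Fin n, i ⋖ j → ¬(f i = u ∧ f j = v) ∧ ¬(f i = v ∧ f j = u)) :
    descents (Equiv.swap u v ∘ f) = descents f := by
  funext k
  have hk : (⟨k, by omega⟩ : Fin n) ⋖ ⟨k + 1, by omega⟩ := by simp [Fin.covBy_iff]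
  obtain ⟨h₁, h₂⟩ := hf _ _ hk
  simp only [descents, Function.comp_apply, decide_eq_decide]
  exact Equiv.swap_lt_swap_iff_of_covBy huv (fun h => h₂ h.symm) (fun h => h₁ h.symm)

namespace LinExt

variable {X : Type*} [PartialOrder X] {n : ℕ}

theorem eps_eq_descents (P Q : LinExt X n) : eps P Q = descents (P.1 ∘ Q.1.symm) := rfl

theorem strictMono (P : LinExt X n) : StrictMono P.1 := fun _ _ h =>
  (P.2 _ _ h.le).lt_of_ne (P.1.injective.ne h.ne)

def inversions [Fintype X] (P P' : LinExt X n) : Finset (X × X) :=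
  univ.filter fun p => P.1 p.1 < P.1 p.2 ∧ P'.1 p.2 < P'.1 p.1

section Swap

variable [DecidableEq X] {a b : X}

def swap (Q : LinExt X n) (hab : ¬a ≤ b) (hba : ¬b ≤ a)
    (hadj : Q.1 a ⋖ Q.1 b ∨ Q.1 b ⋖ Q.1 a) : LinExt X n :=
  ⟨(Equiv.swap a b).trans Q.1, fun x y hxy => by
    rcases eq_or_lt_of_le hxy with rfl | hlt
    · exact le_rfl
    have h₁ : ¬(x = a ∧ y = b) := fun h => hab (h.1 ▸ h.2 ▸ hxy)
    have h₂ : ¬(x = b ∧ y = a) := fun h => hba (h.1 ▸ h.2 ▸ hxy)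
    rcases hadj with hadj | hadj
    · exact ((Q.1.apply_swap_lt_apply_swap_iff hadj h₁ h₂).2 (Q.strictMono hlt)).le
    · rw [Equiv.trans_apply, Equiv.trans_apply, Equiv.swap_comm]
      exact ((Q.1.apply_swap_lt_apply_swap_iff hadj h₂ h₁).2 (Q.strictMono hlt)).le⟩

@[simp]
theorem swap_val (Q : LinExt X n) (hab : ¬a ≤ b) (hba : ¬b ≤ a)
    (hadj : Q.1 a ⋖ Q.1 b ∨ Q.1 b ⋖ Q.1 a) :
    (Q.swap hab hba hadj).1 = (Equiv.swap a b).trans Q.1 := rfl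

open scoped Classical in
noncomputable def swapIfAdjacent (hab : ¬a ≤ b) (hba : ¬b ≤ a) (Q : LinExt X n) : LinExt X n :=
  if hadj : Q.1 a ⋖ Q.1 b ∨ Q.1 b ⋖ Q.1 a then Q.swap hab hba hadj else Q

theorem swapIfAdjacent_of_adj {hab : ¬a ≤ b} {hba : ¬b ≤ a} {Q : LinExt X n}
    (hadj : Q.1 a ⋖ Q.1 b ∨ Q.1 b ⋖ Q.1 a) : swapIfAdjacent hab hba Q = Q.swap hab hba hadj :=
  dif_pos hadj

theorem swapIfAdjacent_of_not_adj {hab : ¬a ≤ b} {hba : ¬b ≤ a} {Q : LinExt X n}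
    (hadj : ¬(Q.1 a ⋖ Q.1 b ∨ Q.1 b ⋖ Q.1 a)) : swapIfAdjacent hab hba Q = Q :=
  dif_neg hadj

theorem swapIfAdjacent_involutive (hab : ¬a ≤ b) (hba : ¬b ≤ a) :
    Function.Involutive (swapIfAdjacent (n := n) hab hba) := by
  intro Q
  by_cases hadj : Q.1 a ⋖ Q.1 b ∨ Q.1 b ⋖ Q.1 a
  · have hadj' : (Q.swap hab hba hadj).1 a ⋖ (Q.swap hab hba hadj).1 b ∨
        (Q.swap hab hba hadj).1 b ⋖ (Q.swap hab hba hadj).1 a := by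
      simpa [Or.comm] using hadj
    rw [swapIfAdjacent_of_adj hadj, swapIfAdjacent_of_adj hadj']
    exact Subtype.ext (Equiv.ext fun x => by simp)
  · rw [swapIfAdjacent_of_not_adj hadj, swapIfAdjacent_of_not_adj hadj]

theorem eps_swap_swapIfAdjacent (P Q : LinExt X n) (hab : ¬a ≤ b) (hba : ¬b ≤ a)
    (hP : P.1 a ⋖ P.1 b) :
    eps (P.swap hab hba (.inl hP)) (swapIfAdjacent hab hba Q) = eps P Q := by
  by_cases hadj : Q.1 a ⋖ Q.1 b ∨ Q.1 b ⋖ Q.1 a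
  · rw [swapIfAdjacent_of_adj hadj, eps_eq_descents, eps_eq_descents]
    exact congrArg descents (funext fun i => by simp)
  · have hcomp : (P.swap hab hba (.inl hP)).1 ∘ Q.1.symm =
        Equiv.swap (P.1 a) (P.1 b) ∘ (P.1 ∘ Q.1.symm) :=
      funext fun i => by simp [P.1.injective.swap_apply]
    rw [swapIfAdjacent_of_not_adj hadj, eps_eq_descents, eps_eq_descents, hcomp,
      descents_swap_comp hP]
    intro i j hij
    simp only [Function.comp_apply, P.1.apply_eq_iff_eq, Q.1.symm_apply_eq]
    constructor <;> rintro ⟨rfl, rfl⟩ <;> tauto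

theorem sum_eps_swap {M : Type*} [AddCommMonoid M] [Fintype (LinExt X n)]
    (f : (Fin (n - 1) → Bool) → M) (P : LinExt X n) (hab : ¬a ≤ b) (hba : ¬b ≤ a)
    (hP : P.1 a ⋖ P.1 b) :
    ∑ Q, f (eps (P.swap hab hba (.inl hP)) Q) = ∑ Q, f (eps P Q) :=
  (Fintype.sum_equiv (swapIfAdjacent_involutive hab hba).toPerm _ _ fun Q =>
    congrArg f (eps_swap_swapIfAdjacent P Q hab hba hP).symm).symm

theorem inversions_swap_ssubset [Fintype X] {P P' : LinExt X n} (hab : ¬a ≤ b) (hba : ¬b ≤ a)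
    (hP : P.1 a ⋖ P.1 b) (hP' : P'.1 b < P'.1 a) :
    inversions (P.swap hab hba (.inl hP)) P' ⊂ inversions P P' := by
  refine (ssubset_iff_of_subset fun p hp => ?_).2 ⟨(a, b), ?_, ?_⟩
  · obtain ⟨x, y⟩ := p
    simp only [inversions, mem_filter_univ] at hp ⊢
    simp only [swap_val, Equiv.trans_apply] at hp
    refine ⟨?_, hp.2⟩
    by_cases h₁ : x = a ∧ y = b
    · obtain ⟨rfl, rfl⟩ := h₁
      exact hP.lt
    by_cases h₂ : x = b ∧ y = a
    · obtain ⟨rfl, rfl⟩ := h₂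
      exact absurd hp.2 hP'.not_gt
    exact (P.1.apply_swap_lt_apply_swap_iff hP h₁ h₂).1 hp.1
  · simp [inversions, hP.lt, hP']
  · simp only [inversions, mem_filter_univ]
    simp [hP.lt.not_gt]

end Swap

theorem eq_of_forall_covBy_le (P P' : LinExt X n) (h : ∀ x y, P.1 x ⋖ P.1 y → P'.1 x ≤ P'.1 y) :
    P = P' := by
  set σ : Fin n ≃ Fin n := P.1.symm.trans P'.1
  have hσ : StrictMono σ := by
    refine Monotone.strictMono_of_injective ((monotone_iff_forall_covBy σ).2 fun i j hij => ?_)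
      σ.injective
    exact h _ _ (by simpa using hij)
  have hσ_id : ∀ i, σ i = i := fun i =>
    congrArg (· i) (Subsingleton.elim (hσ.orderIsoOfSurjective σ σ.surjective) (.refl _))
  exact Subtype.ext (Equiv.ext fun x => by simpa [σ] using (hσ_id (P.1 x)).symm)

theorem sum_eps_eq [Fintype X] [Fintype (LinExt X n)] {M : Type*} [AddCommMonoid M]
    (f : (Fin (n - 1) → Bool) → M) (P P' : LinExt X n) :
    ∑ Q, f (eps P Q) = ∑ Q, f (eps P' Q) := by
  classical
  induction hN : (inversions P P').card using Nat.strong_induction_on generalizing P with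
  | _ N ih =>
    by_cases hdesc : ∃ a b, P.1 a ⋖ P.1 b ∧ P'.1 b < P'.1 a
    · obtain ⟨a, b, hP, hP'⟩ := hdesc
      have hab : ¬a ≤ b := fun h => (P'.2 a b h).not_gt hP'
      have hba : ¬b ≤ a := fun h => (P.2 b a h).not_gt hP.lt
      rw [← sum_eps_swap f P hab hba hP]
      exact ih _ (hN ▸ card_lt_card (inversions_swap_ssubset hab hba hP hP')) _ rfl
    · push Not at hdesc
      rw [eq_of_forall_covBy_le P P' hdesc]

end LinExt

theorem pedMatrix_row_sums_constant_general (X : Type*) [PartialOrder X] [Fintype X] (n : ℕ)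
    [Fintype (LinExt X n)] :
    (∀ P P' : LinExt X n,
      ∑ Q : LinExt X n, (MvPolynomial.X (eps P Q) : MvPolynomial (Fin (n - 1) → Bool) ℤ) =
      ∑ Q : LinExt X n, MvPolynomial.X (eps P' Q)) ∧
    Matrix.mulVec (pedMatrix X n) (fun _ => 1) =
      fun P => ∑ Q : LinExt X n, MvPolynomial.X (eps P Q) :=
  ⟨LinExt.sum_eps_eq MvPolynomial.X, funext fun P => by simp [Matrix.mulVec, dotProduct, pedMatrix]⟩

/-- The row sums of `M^X` do not depend on the row: `Σ_Q a_{ε_{PQ}}` is independent of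
`P`; consequently the all-ones vector is a right eigenvector of `M^X`, with eigenvalue
the pedestal polynomial `Π_X({a_ε}) = Σ_Q a_{ε_{PQ}}`. -/
theorem pedMatrix_row_sums_constant (X : Type*) [PartialOrder X] [Fintype X] (n : ℕ)
    (hn : Fintype.card X = n) [Fintype (LinExt X n)] :
    (∀ P P' : LinExt X n,
      ∑ Q : LinExt X n, (MvPolynomial.X (eps P Q) : MvPolynomial (Fin (n - 1) → Bool) ℤ) =
      ∑ Q : LinExt X n, MvPolynomial.X (eps P' Q)) ∧
    Matrix.mulVec (pedMatrix X n) (fun _ => 1) =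
      fun P => ∑ Q : LinExt X n, MvPolynomial.X (eps P Q) :=
  pedMatrix_row_sums_constant_general X n
end

section
/- Let X be a finite poset with n elements and let P ∈ Tot_X be any linear extension. Then in the ring of formal power series ℤ[[t]] the identity G_X(t) = Π_P(t) · ∏_{l=1}^{n} (1 − t^l)^{−1} holds, where G_X(t) = Σ_{p ∈ 𝒫_X} t^{v(p)} and Π_P(t) = Σ_{Q ∈ Tot_X} t^{v(q_{PQ})}. Equivalently, ∏_{l=1}^{n} (1 − t^l) · G_X(t) = Π_P(t). -/
/-- The pedestal `q_{PQ}` of `Q` with respect to `P`, as a function of the (0-based)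
position `k`: the number of positions `j ≤ k` such that `Q⁻¹(j)` is a
`(P,Q)`-disagreement node. -/
def ped {X : Type*} [PartialOrder X] {n : ℕ} (P Q : LinExt X n) (k : Fin n) : ℕ :=
  (Finset.univ.filter (fun j : Fin n => j ≤ k ∧ 0 < j.1 ∧
    P.1 (Q.1.symm j) <
      P.1 (Q.1.symm ⟨j.1 - 1, Nat.lt_of_le_of_lt (Nat.sub_le _ _) j.2⟩))).card

/-- The generating function `G_X(t) = Σ_{p ∈ 𝒫_X} t^{v(p)}` of the order-preserving
functions `p : X → ℤ_{≥0}`, counted by volume `v(p) = Σ_x p(x)`. -/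
noncomputable def GX (X : Type*) [PartialOrder X] [Fintype X] : PowerSeries ℤ :=
  PowerSeries.mk fun k =>
    (Set.ncard {p : X → ℕ | (∀ a b : X, a ≤ b → p a ≤ p b) ∧ ∑ x : X, p x = k} : ℤ)

/-!
Sorting the elements of `X` lexicographically by `(p x, P x)` attaches to every order-preserving
`p : X → ℕ` a unique linear extension `Q` along which the key increases. Along `Q` the values of
`p` increase weakly, and strictly at the `(P,Q)`-disagreement nodes (there `P` decreases), so
`p = c ∘ Q + q_{PQ}` for a unique monotone `c : Fin n → ℕ`; conversely each such pair `(Q, c)`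
produces an order-preserving `p` sorted by `Q`. Hence `G_X = Π_P · H_n`, where `H_n` counts monotone
sequences of length `n` by their sum. Splitting off sequences starting with `0` gives
`H_{n+1} = H_n + t^{n+1} H_{n+1}`, so `H_n = ∏_{l=1}^n (1 - t^l)⁻¹`.
-/

open PowerSeries Finset Function

theorem Fin.monotone_of_le_of_val_add_one_eq {β : Type*} [Preorder β] {n : ℕ} {f : Fin n → β}
    (h : ∀ j k : Fin n, j.1 + 1 = k.1 → f j ≤ f k) : Monotone f := by
  cases n with
  | zero => exact fun i => i.elim0
  | succ n => exact Fin.monotone_iff_le_succ.2 fun i => h _ _ rfl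

theorem Fin.strictMono_of_lt_of_val_add_one_eq {β : Type*} [Preorder β] {n : ℕ} {f : Fin n → β}
    (h : ∀ j k : Fin n, j.1 + 1 = k.1 → f j < f k) : StrictMono f := by
  cases n with
  | zero => exact fun i => i.elim0
  | succ n => exact Fin.strictMono_iff_lt_succ.2 fun i => h _ _ rfl

theorem Fin.monotone_cons {β : Type*} [Preorder β] {n : ℕ} {x : β} {c : Fin n → β}
    (hc : Monotone c) (hx : ∀ i, x ≤ c i) : Monotone (Fin.cons x c : Fin (n + 1) → β) := by
  intro i j hij
  induction i using Fin.cases with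
  | zero =>
    induction j using Fin.cases with
    | zero => exact le_rfl
    | succ j => exact hx j
  | succ i =>
    obtain ⟨j, rfl⟩ := j.eq_succ_of_ne_zero ((Fin.succ_pos i).trans_le hij).ne'
    exact hc (Fin.succ_le_succ_iff.1 hij)

section WeightGenFun

variable {R : Type*} [Semiring R] {S T : Type*}

variable (R) in
/-- An infinite fibre contributes the junk coefficient `Nat.card _ = 0`, hence the finiteness
hypotheses below. -/
noncomputable def weightGenFun (w : S → ℕ) : R⟦X⟧ :=
  PowerSeries.mk fun m => (Nat.card {s // w s = m} : R)

theorem coeff_weightGenFun (w : S → ℕ) (m : ℕ) :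
    coeff m (weightGenFun R w) = Nat.card {s // w s = m} :=
  coeff_mk _ _

theorem weightGenFun_congr {w : S → ℕ} {w' : T → ℕ} (e : S ≃ T) (h : ∀ s, w' (e s) = w s) :
    weightGenFun R w' = weightGenFun R w := by
  ext m
  rw [coeff_weightGenFun, coeff_weightGenFun,
    Nat.card_congr (e.subtypeEquiv fun s => by rw [h] : {s // w s = m} ≃ {t // w' t = m})]

theorem weightGenFun_const_add (w : S → ℕ) (k : ℕ) :
    weightGenFun R (fun s => k + w s) = X ^ k * weightGenFun R w := by
  ext m
  rw [coeff_X_pow_mul', coeff_weightGenFun]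
  split_ifs with hkm
  · rw [coeff_weightGenFun, Nat.card_congr (Equiv.subtypeEquivRight fun s => by omega :
      {s // k + w s = m} ≃ {s // w s = m - k})]
  · have : IsEmpty {s // k + w s = m} := ⟨fun s => hkm (s.2 ▸ Nat.le_add_right _ _)⟩
    rw [Nat.card_of_isEmpty, Nat.cast_zero]

theorem weightGenFun_of_unique [Unique S] (w : S → ℕ) : weightGenFun R w = X ^ w default := by
  ext m
  rw [coeff_weightGenFun, coeff_X_pow]
  split_ifs with hm
  · rw [Nat.card_eq_one_iff_unique.2 ⟨⟨fun s t => Subtype.ext (Subsingleton.elim _ _)⟩,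
      ⟨⟨default, hm.symm⟩⟩⟩, Nat.cast_one]
  · have : IsEmpty {s // w s = m} := ⟨fun s => hm (s.2 ▸ congrArg w (Unique.uniq _ s.1))⟩
    rw [Nat.card_of_isEmpty, Nat.cast_zero]

theorem weightGenFun_sum {w₁ : S → ℕ} {w₂ : T → ℕ} (h₁ : ∀ m, Finite {s // w₁ s = m})
    (h₂ : ∀ m, Finite {t // w₂ t = m}) :
    weightGenFun R (Sum.elim w₁ w₂) = weightGenFun R w₁ + weightGenFun R w₂ := by
  ext m
  have e : {z // Sum.elim w₁ w₂ z = m} ≃ {s // w₁ s = m} ⊕ {t // w₂ t = m} := Equiv.subtypeSum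
  rw [map_add, coeff_weightGenFun, coeff_weightGenFun, coeff_weightGenFun, Nat.card_congr e,
    Nat.card_sum, Nat.cast_add]

theorem weightGenFun_sigma {ι : Type*} [Fintype ι] {S : ι → Type*} {w : ∀ i, S i → ℕ}
    (hw : ∀ i m, Finite {s // w i s = m}) :
    weightGenFun R (fun z : Σ i, S i => w z.1 z.2) = ∑ i, weightGenFun R (w i) := by
  ext m
  let e : {z : Σ i, S i // w z.1 z.2 = m} ≃ Σ i, {s // w i s = m} :=
    { toFun := fun z => ⟨z.1.1, z.1.2, z.2⟩
      invFun := fun z => ⟨⟨z.1, z.2.1⟩, z.2.2⟩ }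
  simp only [map_sum, coeff_weightGenFun, Nat.card_congr e, Nat.card_sigma, Nat.cast_sum]

theorem finite_fiber_of_sum_le {ι : Type*} [Fintype ι] {f : S → ι → ℕ} (hf : Injective f)
    {w : S → ℕ} (hw : ∀ s, ∑ i, f s i ≤ w s) (m : ℕ) : Finite {s // w s = m} := by
  have hlt (s : {s // w s = m}) (i : ι) : f s.1 i < m + 1 :=
    Nat.lt_succ_of_le ((single_le_sum (fun _ _ => Nat.zero_le _) (mem_univ i)).trans
      ((hw s.1).trans_eq s.2))
  refine Finite.of_injective (fun s i => (⟨f s.1 i, hlt s i⟩ : Fin (m + 1))) fun s t hst => ?_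
  exact Subtype.ext (hf (funext fun i => congrArg Fin.val (congrFun hst i)))

end WeightGenFun

section MonotoneSeq

variable (R : Type*) [Semiring R]

noncomputable abbrev monotoneSeqGenFun (n : ℕ) : R⟦X⟧ :=
  weightGenFun R fun c : {c : Fin n → ℕ // Monotone c} => ∑ i, c.1 i

theorem finite_monotoneSeq_fiber {n : ℕ} {w : {c : Fin n → ℕ // Monotone c} → ℕ}
    (hw : ∀ c, ∑ i, c.1 i ≤ w c) (m : ℕ) : Finite {c // w c = m} :=
  finite_fiber_of_sum_le Subtype.val_injective hw m

def monotoneSeqSplit (n : ℕ) :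
    {c : Fin n → ℕ // Monotone c} ⊕ {c : Fin (n + 1) → ℕ // Monotone c} →
      {c : Fin (n + 1) → ℕ // Monotone c}
  | .inl c => ⟨Fin.cons 0 c.1, Fin.monotone_cons c.2 fun _ => Nat.zero_le _⟩
  | .inr c => ⟨c.1 + 1, c.2.add_const 1⟩

theorem monotoneSeqSplit_bijective (n : ℕ) : Bijective (monotoneSeqSplit n) := by
  refine ⟨?_, fun c => ?_⟩
  · rintro (c | c) (d | d) h <;> simp only [monotoneSeqSplit, Subtype.mk.injEq] at h
    · rw [Subtype.ext (Fin.cons_right_injective 0 h)]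
    · simpa using congrFun h 0
    · simpa using congrFun h 0
    · rw [Subtype.ext (add_left_injective 1 h)]
  · by_cases hc : c.1 0 = 0
    · refine ⟨.inl ⟨Fin.tail c.1, fun i j hij => c.2 (Fin.succ_le_succ_iff.2 hij)⟩, ?_⟩
      exact Subtype.ext (by simp [monotoneSeqSplit, ← hc])
    · refine ⟨.inr ⟨c.1 - 1, fun i j hij => Nat.sub_le_sub_right (c.2 hij) 1⟩, ?_⟩
      have hpos (i) : 1 ≤ c.1 i := (Nat.one_le_iff_ne_zero.2 hc).trans (c.2 (Fin.zero_le i))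
      exact Subtype.ext (funext fun i => Nat.sub_add_cancel (hpos i))

theorem monotoneSeqGenFun_succ (n : ℕ) :
    monotoneSeqGenFun R (n + 1) =
      monotoneSeqGenFun R n + X ^ (n + 1) * monotoneSeqGenFun R (n + 1) := by
  rw [← weightGenFun_const_add, ← weightGenFun_sum (finite_monotoneSeq_fiber fun _ => le_rfl)
    (finite_monotoneSeq_fiber fun _ => Nat.le_add_left _ _)]
  refine weightGenFun_congr (Equiv.ofBijective _ (monotoneSeqSplit_bijective n)) ?_
  rintro (c | c)
  · simp [monotoneSeqSplit, Fin.sum_cons]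
  · simp [monotoneSeqSplit, sum_add_distrib, add_comm]

theorem monotoneSeqGenFun_zero : monotoneSeqGenFun R 0 = 1 := by
  have : Unique {c : Fin 0 → ℕ // Monotone c} :=
    ⟨⟨⟨finZeroElim, fun i => i.elim0⟩⟩, fun c => Subtype.ext (funext fun i => i.elim0)⟩
  rw [monotoneSeqGenFun, weightGenFun_of_unique, Fin.sum_univ_zero, pow_zero]

end MonotoneSeq

theorem prod_mul_monotoneSeqGenFun (R : Type*) [CommRing R] (n : ℕ) :
    (∏ l ∈ range n, (1 - X ^ (l + 1) : R⟦X⟧)) * monotoneSeqGenFun R n = 1 := by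
  induction n with
  | zero => rw [prod_range_zero, one_mul, monotoneSeqGenFun_zero]
  | succ n ih =>
    rw [prod_range_succ, mul_assoc, sub_mul, one_mul, sub_eq_of_eq_add
      (monotoneSeqGenFun_succ R n), ih]

section Sorting

variable {ι β : Type*} [LinearOrder β] {n : ℕ} {f : ι → β}

theorem exists_equivFin_strictMono [Fintype ι] (hf : Injective f) (h : Fintype.card ι = n) :
    ∃ e : ι ≃ Fin n, StrictMono (f ∘ e.symm) := by
  classical
  let o := Fintype.orderIsoFinOfCardEq (Set.range f) ((Set.card_range_of_injective hf).trans h)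
  refine ⟨(Equiv.ofInjective f hf).trans o.symm.toEquiv, fun a b hab => ?_⟩
  simpa [Equiv.apply_ofInjective_symm] using o.strictMono hab

theorem equivFin_eq_of_strictMono {e e' : ι ≃ Fin n} (he : StrictMono (f ∘ e.symm))
    (he' : StrictMono (f ∘ e'.symm)) : e = e' := by
  have hrange : Set.range (f ∘ e.symm) = Set.range (f ∘ e'.symm) := by
    rw [Set.range_comp, Set.range_comp, e.symm.range_eq_univ, e'.symm.range_eq_univ]
  have hcomp := (he.range_inj he').1 hrange
  exact Equiv.ext fun x => he.injective (by simpa using (congrFun hcomp (e' x)).symm)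

theorem monotone_of_strictMono_comp_symm [Preorder ι] (hf : Monotone f) {e : ι ≃ Fin n}
    (he : StrictMono (f ∘ e.symm)) : Monotone e := fun a b hab => by
  rw [← he.le_iff_le]
  simpa using hf hab

end Sorting

section Pedestal

variable {α : Type*} [PartialOrder α] {n : ℕ} (P Q : LinExt α n)

theorem ped_monotone : Monotone (ped P Q) := fun _ _ hkl =>
  card_le_card fun _ hj => by
    rw [mem_filter] at hj ⊢
    exact ⟨hj.1, hj.2.1.trans hkl, hj.2.2⟩

theorem ped_of_val_eq_zero {k : Fin n} (hk : k.1 = 0) : ped P Q k = 0 := by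
  rw [ped, card_eq_zero, filter_eq_empty_iff]
  rintro j - ⟨hjk, hj, -⟩
  exact absurd (Fin.le_def.1 hjk) (by omega)

theorem ped_of_val_add_one_eq {j k : Fin n} (hjk : j.1 + 1 = k.1) :
    ped P Q k = ped P Q j + if P.1 (Q.1.symm k) < P.1 (Q.1.symm j) then 1 else 0 := by
  have hpred : (⟨k.1 - 1, Nat.lt_of_le_of_lt (Nat.sub_le _ _) k.2⟩ : Fin n) = j :=
    Fin.ext (by simp only; omega)
  have hle (i : Fin n) : i ≤ k ↔ i ≤ j ∨ i = k := by
    simp only [Fin.le_def, Fin.ext_iff]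
    omega
  simp only [ped, hle, or_and_right, filter_or]
  rw [card_union_of_disjoint]
  · simp [card_filter, ite_and, hpred, show 0 < k.1 by omega]
  · refine disjoint_filter.2 fun i _ hij hik => ?_
    rw [hik.1, Fin.le_def] at hij
    omega

def sortKey (p : α → ℕ) (x : α) : ℕ ×ₗ Fin n := toLex (p x, P.1 x)

theorem sortKey_injective (p : α → ℕ) : Injective (sortKey P p) := fun _ _ h =>
  P.1.injective (congrArg Prod.snd (toLex.injective h))

theorem sortKey_monotone {p : α → ℕ} (hp : Monotone p) : Monotone (sortKey P p) := fun x y h =>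
  Prod.Lex.toLex_mono ⟨hp h, P.2 x y h⟩

theorem exists_strictMono_sortKey [Fintype α] {p : α → ℕ} (hp : Monotone p) :
    ∃ Q : LinExt α n, StrictMono (sortKey P p ∘ Q.1.symm) := by
  obtain ⟨e, he⟩ := exists_equivFin_strictMono (sortKey_injective P p)
    ((Fintype.card_congr P.1).trans (Fintype.card_fin n))
  exact ⟨⟨e, fun _ _ hab => monotone_of_strictMono_comp_symm (sortKey_monotone P hp) he hab⟩, he⟩

def ofPedestal (c : Fin n → ℕ) (x : α) : ℕ := c (Q.1 x) + ped P Q (Q.1 x)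

variable {P Q}

theorem monotone_ofPedestal {c : Fin n → ℕ} (hc : Monotone c) : Monotone (ofPedestal P Q c) :=
  fun a b hab => add_le_add (hc (Q.2 a b hab)) (ped_monotone P Q (Q.2 a b hab))

theorem sum_ofPedestal [Fintype α] (c : Fin n → ℕ) :
    ∑ x, ofPedestal P Q c x = ∑ k, ped P Q k + ∑ k, c k := by
  rw [add_comm, ← sum_add_distrib]
  exact Equiv.sum_comp Q.1 fun k => c k + ped P Q k

theorem strictMono_sortKey_ofPedestal {c : Fin n → ℕ} (hc : Monotone c) :
    StrictMono (sortKey P (ofPedestal P Q c) ∘ Q.1.symm) := by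
  refine Fin.strictMono_of_lt_of_val_add_one_eq fun j k hjk => ?_
  have hcjk : c j ≤ c k := hc (Fin.le_def.2 (by omega))
  have hjk' : Q.1.symm j ≠ Q.1.symm k := fun h => by
    rw [Q.1.symm.injective h] at hjk
    omega
  simp only [comp_apply, sortKey, ofPedestal, Equiv.apply_symm_apply, Prod.Lex.toLex_lt_toLex,
    ped_of_val_add_one_eq P Q hjk]
  split_ifs with hkj
  · exact Or.inl (by omega)
  · rcases hcjk.lt_or_eq with hlt | heq
    · exact Or.inl (by omega)
    · exact Or.inr ⟨by omega, (not_lt.1 hkj).lt_of_ne (P.1.injective.ne hjk')⟩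

theorem exists_monotone_ofPedestal_eq {p : α → ℕ} (hQ : StrictMono (sortKey P p ∘ Q.1.symm)) :
    ∃ c, Monotone c ∧ ofPedestal P Q c = p := by
  have hstep (j k : Fin n) (hjk : j.1 + 1 = k.1) :
      (p (Q.1.symm j) : ℤ) - ped P Q j ≤ p (Q.1.symm k) - ped P Q k := by
    -- where `P` decreases, the key can only increase through `p`
    have hlt := hQ (Fin.lt_def.2 (by omega) : j < k)
    simp only [comp_apply, sortKey, Prod.Lex.toLex_lt_toLex] at hlt
    rw [ped_of_val_add_one_eq P Q hjk]
    split_ifs with hkj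
    · rcases hlt with hlt | ⟨-, hlt⟩
      · push_cast
        omega
      · exact absurd hkj hlt.not_gt
    · push_cast
      omega
  have hmono := Fin.monotone_of_le_of_val_add_one_eq hstep
  have hped (k : Fin n) : ped P Q k ≤ p (Q.1.symm k) := by
    have h0 := hmono (show ⟨0, k.pos⟩ ≤ k from Fin.le_def.2 (Nat.zero_le _))
    simp only [ped_of_val_eq_zero P Q (rfl : (⟨0, _⟩ : Fin n).1 = 0)] at h0
    omega
  refine ⟨fun k => p (Q.1.symm k) - ped P Q k, fun j k hjk => ?_, funext fun x => ?_⟩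
  · have hmono_jk := hmono hjk
    have := hped j
    have := hped k
    dsimp only at hmono_jk ⊢
    omega
  · have := hped (Q.1 x)
    simp only [ofPedestal, Equiv.symm_apply_apply] at this ⊢
    omega

variable (P) in
def pedestalMap (z : Σ _ : LinExt α n, {c : Fin n → ℕ // Monotone c}) :
    {p : α → ℕ // Monotone p} :=
  ⟨ofPedestal P z.1 z.2.1, monotone_ofPedestal z.2.2⟩

theorem pedestalMap_bijective [Fintype α] (P : LinExt α n) : Bijective (pedestalMap P) := by
  refine ⟨?_, fun ⟨p, hp⟩ => ?_⟩
  · rintro ⟨Q, c, hc⟩ ⟨Q', c', hc'⟩ h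
    have h : ofPedestal P Q c = ofPedestal P Q' c' := congrArg Subtype.val h
    obtain rfl : Q = Q' := Subtype.ext <| equivFin_eq_of_strictMono
      (strictMono_sortKey_ofPedestal hc) (h ▸ strictMono_sortKey_ofPedestal hc')
    obtain rfl : c = c' := funext fun k => by
      simpa [ofPedestal] using congrFun h (Q.1.symm k)
    rfl
  · obtain ⟨Q, hQ⟩ := exists_strictMono_sortKey P hp
    obtain ⟨c, hc, rfl⟩ := exists_monotone_ofPedestal_eq hQ
    exact ⟨⟨Q, c, hc⟩, rfl⟩

end Pedestal

theorem GX_eq_weightGenFun (α : Type*) [PartialOrder α] [Fintype α] :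
    GX α = weightGenFun ℤ fun p : {p : α → ℕ // Monotone p} => ∑ x, p.1 x := by
  ext m
  rw [GX, coeff_mk, coeff_weightGenFun, ← Nat.card_coe_set_eq]
  exact congrArg _ (Nat.card_congr (Equiv.subtypeSubtypeEquivSubtypeInter _ _).symm)

theorem GX_eq_sum_mul_monotoneSeqGenFun {α : Type*} [PartialOrder α] [Fintype α] {n : ℕ}
    [Fintype (LinExt α n)] (P : LinExt α n) :
    GX α = (∑ Q : LinExt α n, X ^ ∑ k, ped P Q k) * monotoneSeqGenFun ℤ n := by
  rw [GX_eq_weightGenFun, weightGenFun_congr (Equiv.ofBijective _ (pedestalMap_bijective P))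
      (w := fun z => ∑ k, ped P z.1 k + ∑ k, z.2.1 k) fun z => sum_ofPedestal z.2.1,
    weightGenFun_sigma (w := fun Q c => ∑ k, ped P Q k + ∑ k, c.1 k)
      fun Q => finite_monotoneSeq_fiber fun _ => Nat.le_add_left _ _, sum_mul]
  simp only [weightGenFun_const_add]

theorem pedestal_generating_function_identity_general (X : Type*) [PartialOrder X] [Fintype X]
    (n : ℕ) [Fintype (LinExt X n)] (P : LinExt X n) :
    (∏ l ∈ Finset.range n, (1 - (PowerSeries.X : PowerSeries ℤ) ^ (l + 1))) * GX X =
      ∑ Q : LinExt X n, (PowerSeries.X : PowerSeries ℤ) ^ (∑ k : Fin n, ped P Q k) := by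
  rw [GX_eq_sum_mul_monotoneSeqGenFun P, mul_left_comm, prod_mul_monotoneSeqGenFun, mul_one]

/-- The identity `G_X(t) = Π_P(t) · Π_{l=1}^n (1-t^l)^{-1}` in `ℤ[[t]]`, in the
equivalent form `Π_{l=1}^n (1-t^l) · G_X(t) = Π_P(t)`, where
`Π_P(t) = Σ_{Q ∈ Tot_X} t^{v(q_{PQ})}`; in particular, it holds for every choice of the
linear extension `P`. -/
theorem pedestal_generating_function_identity (X : Type*) [PartialOrder X] [Fintype X]
    (n : ℕ) (hn : Fintype.card X = n) [Fintype (LinExt X n)] (P : LinExt X n) :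
    (∏ l ∈ Finset.range n, (1 - (PowerSeries.X : PowerSeries ℤ) ^ (l + 1))) * GX X =
      ∑ Q : LinExt X n, (PowerSeries.X : PowerSeries ℤ) ^ (∑ k : Fin n, ped P Q k) :=
  pedestal_generating_function_identity_general X n P
end

section
/- For every finite poset X with n elements, the pedestal generating polynomial Π_P(t) = Σ_{Q ∈ Tot_X} t^{v(q_{PQ})} ∈ ℤ[t] does not depend on the choice of the linear extension P ∈ Tot_X. -/
namespace PedProof
open Finset

variable {X : Type*} [PartialOrder X] {n : ℕ}

def fpred (j : Fin n) : Fin n := ⟨j.1 - 1, Nat.lt_of_le_of_lt (Nat.sub_le _ _) j.2⟩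

def desc (P Q : LinExt X n) (j : Fin n) : Prop :=
  0 < j.1 ∧ P.1 (Q.1.symm j) < P.1 (Q.1.symm (fpred j))

instance (P Q : LinExt X n) : DecidablePred (desc P Q) := fun _ => instDecidableAnd

lemma ped_eq (P Q : LinExt X n) (k : Fin n) :
    ped P Q k = (univ.filter (fun j => j ≤ k ∧ desc P Q j)).card := rfl

lemma ped_zero (P Q : LinExt X n) (k : Fin n) (hk : k.1 = 0) : ped P Q k = 0 := by
  rw [ped_eq, Finset.card_eq_zero, Finset.filter_eq_empty_iff]
  rintro j - ⟨hjk, hj, -⟩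
  have := (Fin.le_def.mp hjk)
  omega

lemma filter_le_succ (p : Fin n → Prop) [DecidablePred p] (k : Fin n) (hk : 0 < k.1) :
    (univ.filter fun j => j ≤ k ∧ p j).card
      = (univ.filter fun j => j ≤ fpred k ∧ p j).card + (if p k then 1 else 0) := by
  by_cases hp : p k
  · have hins : (univ.filter fun j => j ≤ k ∧ p j)
        = insert k (univ.filter fun j => j ≤ fpred k ∧ p j) := by
      ext j
      simp only [mem_insert, mem_filter, mem_univ, true_and, Fin.le_def, fpred]
      constructor
      · rintro ⟨h1, h2⟩
        rcases eq_or_lt_of_le h1 with h | h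
        · exact Or.inl (Fin.ext h)
        · exact Or.inr ⟨by omega, h2⟩
      · rintro (rfl | ⟨h1, h2⟩)
        · exact ⟨le_rfl, hp⟩
        · exact ⟨by omega, h2⟩
    rw [hins, Finset.card_insert_of_notMem, if_pos hp]
    simp only [mem_filter, mem_univ, true_and, Fin.le_def, fpred, not_and]
    intro h; omega
  · rw [if_neg hp, Nat.add_zero]
    congr 1
    ext j
    simp only [mem_filter, mem_univ, true_and, Fin.le_def, fpred, and_congr_left_iff]
    intro hpj
    constructor
    · intro h
      rcases eq_or_lt_of_le h with h | h
      · exact absurd (Fin.ext h ▸ hpj) hp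
      · omega
    · intro h; omega

lemma ped_succ (P Q : LinExt X n) (k : Fin n) (hk : 0 < k.1) :
    ped P Q k = ped P Q (fpred k) + (if desc P Q k then 1 else 0) := by
  rw [ped_eq, ped_eq, filter_le_succ (desc P Q) k hk]

lemma ped_mono (P Q : LinExt X n) {a b : Fin n} (h : a ≤ b) : ped P Q a ≤ ped P Q b := by
  rw [ped_eq, ped_eq]
  apply Finset.card_le_card
  intro j hj
  simp only [mem_filter, mem_univ, true_and] at hj ⊢
  exact ⟨le_trans hj.1 h, hj.2⟩


namespace PedProof
open Finset

variable {X : Type*} [PartialOrder X] {n : ℕ}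

/-- Two-point inequality: for `h` monotone and strictly increasing at descents,
`ped b + h a ≤ ped a + h b` for `a ≤ b`. -/
lemma ped_two_point (P Q : LinExt X n) (h : Fin n → ℕ)
    (Hmono : ∀ a b : Fin n, a ≤ b → h a ≤ h b)
    (Hstrict : ∀ k : Fin n, desc P Q k → h (fpred k) < h k) :
    ∀ a b : Fin n, a ≤ b → ped P Q b + h a ≤ ped P Q a + h b := by
  intro a b hab
  obtain ⟨d, hd⟩ : ∃ d, b.1 = a.1 + d := ⟨b.1 - a.1, by have := Fin.le_def.mp hab; omega⟩
  induction d generalizing b with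
  | zero =>
    have : a = b := Fin.ext (by omega)
    subst this; omega
  | succ d ih =>
    have hb : 0 < b.1 := by omega
    have hb' : (fpred b).1 = a.1 + d := by simp only [fpred]; omega
    have hab' : a ≤ fpred b := Fin.le_def.mpr (by omega)
    have I1 := ih (fpred b) hab' hb'
    have step : ped P Q b + h (fpred b) ≤ ped P Q (fpred b) + h b := by
      rw [ped_succ P Q b hb]
      by_cases hdesc : desc P Q b
      · rw [if_pos hdesc]
        have := Hstrict b hdesc
        omega
      · rw [if_neg hdesc]
        have := Hmono (fpred b) b (Fin.le_def.mpr (by simp only [fpred]; omega))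
        omega
    omega

lemma ped_le (P Q : LinExt X n) (h : Fin n → ℕ)
    (Hmono : ∀ a b : Fin n, a ≤ b → h a ≤ h b)
    (Hstrict : ∀ k : Fin n, desc P Q k → h (fpred k) < h k) (b : Fin n) :
    ped P Q b ≤ h b := by
  have hpos : 0 < n := b.pos
  have h0 : (⟨0, hpos⟩ : Fin n) ≤ b := Fin.le_def.mpr (Nat.zero_le _)
  have := ped_two_point P Q h Hmono Hstrict ⟨0, hpos⟩ b h0
  rw [ped_zero P Q ⟨0, hpos⟩ rfl] at this
  omega

/-- On an interval where `ped + g` is constant (`g` monotone), `P ∘ Q⁻¹` is increasing. -/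
lemma P_lt_of_level (P Q : LinExt X n) (g : Fin n → ℕ) (hg : Monotone g) :
    ∀ a b : Fin n, a < b → ped P Q a + g a = ped P Q b + g b →
      P.1 (Q.1.symm a) < P.1 (Q.1.symm b) := by
  have hmono : ∀ a b : Fin n, a ≤ b → ped P Q a + g a ≤ ped P Q b + g b := fun a b hab =>
    Nat.add_le_add (ped_mono P Q hab) (hg hab)
  have step : ∀ b : Fin n, 0 < b.1 → ped P Q (fpred b) + g (fpred b) = ped P Q b + g b →
      P.1 (Q.1.symm (fpred b)) < P.1 (Q.1.symm b) := by
    intro b hb heq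
    by_cases hdesc : desc P Q b
    · exfalso
      have h1 := ped_succ P Q b hb
      rw [if_pos hdesc] at h1
      have h2 : g (fpred b) ≤ g b := hg (Fin.le_def.mpr (Nat.sub_le _ _))
      omega
    · have hne : fpred b ≠ b := by
        intro hc
        have := congrArg Fin.val hc
        simp only [fpred] at this
        omega
      have hle : ¬ (P.1 (Q.1.symm b) < P.1 (Q.1.symm (fpred b))) := fun hc => hdesc ⟨hb, hc⟩
      have hne2 : P.1 (Q.1.symm (fpred b)) ≠ P.1 (Q.1.symm b) := by
        intro hc
        exact hne (Q.1.symm.injective (P.1.injective hc))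
      exact lt_of_le_of_ne (le_of_not_gt hle) hne2
  intro a b hab
  obtain ⟨d, hd⟩ : ∃ d, b.1 = a.1 + (d + 1) := ⟨b.1 - a.1 - 1, by have := Fin.lt_def.mp hab; omega⟩
  induction d generalizing b with
  | zero =>
    intro heq
    have : fpred b = a := Fin.ext (by simp [fpred]; omega)
    have hb : 0 < b.1 := by omega
    rw [← this]
    exact step b hb (by rw [this]; exact heq)
  | succ d ih =>
    intro heq
    have hb : 0 < b.1 := by omega
    have hb'v : (fpred b).1 = a.1 + (d + 1) := by simp only [fpred]; omega
    have hab' : a < fpred b := Fin.lt_def.mpr (by omega)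
    have hbb' : fpred b ≤ b := Fin.le_def.mpr (by omega)
    have e1 : ped P Q a + g a = ped P Q (fpred b) + g (fpred b) :=
      le_antisymm (hmono a (fpred b) (le_of_lt hab')) (heq ▸ hmono (fpred b) b hbb')
    have e2 : ped P Q (fpred b) + g (fpred b) = ped P Q b + g b := by omega
    exact lt_trans (ih (fpred b) hab' hb'v e1) (step b hb e2)

/-- An equiv to `Fin n` is determined by the order it induces. -/
lemma equiv_eq_of_order [Finite X] (Q Q' : X ≃ Fin n)
    (H : ∀ x y : X, Q x < Q y ↔ Q' x < Q' y) : Q = Q' := by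
  have hsm : StrictMono (fun j : Fin n => Q' (Q.symm j)) := by
    intro i j hij
    exact (H _ _).mp (by simpa using hij)
  have hsurj : Function.Surjective (fun j : Fin n => Q' (Q.symm j)) :=
    Q'.surjective.comp Q.symm.surjective
  have hr : Set.range (fun j : Fin n => Q' (Q.symm j)) = Set.range (id : Fin n → Fin n) := by
    rw [Set.range_id, hsurj.range_eq]
  haveI hwf : WellFoundedLT (Fin n) := inferInstance
  have hid := (@StrictMono.range_inj (Fin n) (Fin n) _ _ hwf _ _ hsm strictMono_id).mp hr
  ext x
  have h2 := congrFun hid (Q x)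
  simp only [Equiv.symm_apply_apply, id_eq] at h2
  rw [h2]

set_option linter.unusedSectionVars false

lemma exists_sortEquiv [Fintype X] (hn : Fintype.card X = n) (e : X → ℕ)
    (he : Function.Injective e) :
    ∃ Q : X ≃ Fin n, ∀ x y : X, Q x < Q y ↔ e x < e y := by
  have hs : (univ.image e).card = n := by
    rw [Finset.card_image_of_injective _ he, card_univ, hn]
  set oi := (univ.image e).orderIsoOfFin hs with hoi
  have hmem : ∀ x : X, e x ∈ univ.image e := fun x => mem_image_of_mem e (mem_univ x)
  set F : X → Fin n := fun x => oi.symm ⟨e x, hmem x⟩ with hF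
  have hinj : Function.Injective F := by
    intro a b hab
    have := oi.symm.injective hab
    exact he (Subtype.mk_eq_mk.mp this)
  have hbij : Function.Bijective F :=
    (Fintype.bijective_iff_injective_and_card F).mpr ⟨hinj, by rw [hn, Fintype.card_fin]⟩
  refine ⟨Equiv.ofBijective F hbij, fun x y => ?_⟩
  simp only [Equiv.ofBijective_apply, hF]
  rw [oi.symm.lt_iff_lt, Subtype.mk_lt_mk]

lemma mul_lt_iff (f : X → ℕ) (P : LinExt X n) (x y : X) :
    n * f x + (P.1 x).1 < n * f y + (P.1 y).1 ↔
      (f x < f y ∨ (f x = f y ∧ (P.1 x).1 < (P.1 y).1)) := by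
  have hx := (P.1 x).2
  have hy := (P.1 y).2
  constructor
  · intro h
    rcases lt_trichotomy (f x) (f y) with h1 | h1 | h1
    · exact Or.inl h1
    · refine Or.inr ⟨h1, ?_⟩
      have he : n * f x = n * f y := by rw [h1]
      omega
    · exfalso
      have h2 : n * (f y + 1) ≤ n * f x := Nat.mul_le_mul_left n (Nat.succ_le_of_lt h1)
      rw [Nat.mul_succ] at h2
      omega
  · rintro (h | ⟨h1, h2⟩)
    · have h2 : n * (f x + 1) ≤ n * f y := Nat.mul_le_mul_left n (Nat.succ_le_of_lt h)
      rw [Nat.mul_succ] at h2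
      omega
    · have he : n * f x = n * f y := by rw [h1]
      omega

lemma mul_inj (f : X → ℕ) (P : LinExt X n) :
    Function.Injective (fun x => n * f x + (P.1 x).1) := by
  intro x y h
  simp only at h
  have hkey : (P.1 x).1 = (P.1 y).1 := by
    rcases lt_trichotomy (f x) (f y) with h1 | h1 | h1
    · have := (mul_lt_iff f P x y).mpr (Or.inl h1); omega
    · have he : n * f x = n * f y := by rw [h1]
      omega
    · have := (mul_lt_iff f P y x).mpr (Or.inl h1); omega
  exact P.1.injective (Fin.ext hkey)

open Finset in
def Tset (X : Type*) [PartialOrder X] [Fintype X] (N : ℕ) : Type _ :=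
  {f : X → ℕ // (∀ a b : X, a ≤ b → f a ≤ f b) ∧ ∑ x, f x = N}

def Sset (X : Type*) [PartialOrder X] (n : ℕ) (P : LinExt X n) (N : ℕ) : Type _ :=
  Σ Q : LinExt X n, {g : Fin n → ℕ // Monotone g ∧ (∑ k, ped P Q k) + ∑ k, g k = N}

variable [Fintype X]

def Phi (P : LinExt X n) (N : ℕ) (s : Sset X n P N) : Tset X N :=
  ⟨fun x => ped P s.1 (s.1.1 x) + s.2.1 (s.1.1 x),
   fun a b hab => Nat.add_le_add (ped_mono P s.1 (s.1.2 a b hab)) (s.2.2.1 (s.1.2 a b hab)),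
   by
     rw [Equiv.sum_comp s.1.1 (fun k => ped P s.1 k + s.2.1 k), Finset.sum_add_distrib]
     exact s.2.2.2⟩

lemma ord_forward (P Q : LinExt X n) (g : Fin n → ℕ) (hg : Monotone g) (x y : X)
    (hlt : Q.1 x < Q.1 y) :
    ped P Q (Q.1 x) + g (Q.1 x) < ped P Q (Q.1 y) + g (Q.1 y)
      ∨ (ped P Q (Q.1 x) + g (Q.1 x) = ped P Q (Q.1 y) + g (Q.1 y) ∧ P.1 x < P.1 y) := by
  have hmono : ped P Q (Q.1 x) + g (Q.1 x) ≤ ped P Q (Q.1 y) + g (Q.1 y) :=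
    Nat.add_le_add (ped_mono P Q (le_of_lt hlt)) (hg (le_of_lt hlt))
  rcases eq_or_lt_of_le hmono with he | hl
  · right
    refine ⟨he, ?_⟩
    have := P_lt_of_level P Q g hg (Q.1 x) (Q.1 y) hlt he
    simpa using this
  · exact Or.inl hl

lemma ord_char (P Q : LinExt X n) (g : Fin n → ℕ) (hg : Monotone g) (x y : X) :
    Q.1 x < Q.1 y ↔
      (ped P Q (Q.1 x) + g (Q.1 x) < ped P Q (Q.1 y) + g (Q.1 y)
        ∨ (ped P Q (Q.1 x) + g (Q.1 x) = ped P Q (Q.1 y) + g (Q.1 y) ∧ P.1 x < P.1 y)) := by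
  constructor
  · exact ord_forward P Q g hg x y
  · intro H
    rcases lt_trichotomy (Q.1 x) (Q.1 y) with h1 | h1 | h1
    · exact h1
    · exfalso
      have hxy : x = y := Q.1.injective h1
      subst hxy
      rcases H with h | ⟨-, h⟩
      · exact lt_irrefl _ h
      · exact lt_irrefl _ h
    · exfalso
      rcases ord_forward P Q g hg y x h1 with h2 | ⟨h2, h3⟩ <;>
        rcases H with h4 | ⟨h4, h5⟩
      · omega
      · omega
      · omega
      · exact lt_asymm h3 h5

lemma Phi_injective (P : LinExt X n) (N : ℕ) : Function.Injective (Phi P N) := by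
  rintro ⟨Q, g, hg, hs⟩ ⟨Q', g', hg', hs'⟩ h
  have hf : ∀ x : X, ped P Q (Q.1 x) + g (Q.1 x) = ped P Q' (Q'.1 x) + g' (Q'.1 x) := by
    intro x
    have := congrArg (fun t : Tset X N => t.1 x) h
    simpa [Phi] using this
  have hiff : ∀ x y : X, Q.1 x < Q.1 y ↔ Q'.1 x < Q'.1 y := by
    intro x y
    rw [ord_char P Q g hg x y, ord_char P Q' g' hg' x y, hf x, hf y]
  have hQ : Q = Q' := Subtype.ext (equiv_eq_of_order Q.1 Q'.1 hiff)
  subst hQ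
  have hgg : g = g' := by
    funext k
    have := hf (Q.1.symm k)
    simp only [Equiv.apply_symm_apply] at this
    omega
  subst hgg
  rfl

lemma Phi_surjective (hn : Fintype.card X = n) (P : LinExt X n) (N : ℕ) :
    Function.Surjective (Phi P N) := by
  rintro ⟨f, hf, hsum⟩
  set e : X → ℕ := fun x => n * f x + (P.1 x).1 with hedef
  obtain ⟨Q0, hQ0⟩ := exists_sortEquiv hn e (mul_inj f P)
  have hQlin : ∀ a b : X, a ≤ b → Q0 a ≤ Q0 b := by
    intro a b hab
    rcases eq_or_ne a b with rfl | hne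
    · exact le_rfl
    · have hPab : P.1 a < P.1 b := lt_of_le_of_ne (P.2 a b hab) (fun hc => hne (P.1.injective hc))
      have hfab : f a ≤ f b := hf a b hab
      have : e a < e b := by
        rw [hedef]
        apply (mul_lt_iff f P a b).mpr
        rcases eq_or_lt_of_le hfab with h1 | h1
        · exact Or.inr ⟨h1, Fin.lt_def.mp hPab⟩
        · exact Or.inl h1
      exact le_of_lt ((hQ0 a b).mpr this)
  set Q : LinExt X n := ⟨Q0, hQlin⟩ with hQdef
  set h : Fin n → ℕ := fun k => f (Q0.symm k) with hhdef
  have Hmono : ∀ a b : Fin n, a ≤ b → h a ≤ h b := by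
    intro a b hab
    rcases eq_or_lt_of_le hab with rfl | hab
    · exact le_rfl
    · have : Q0 (Q0.symm a) < Q0 (Q0.symm b) := by simpa using hab
      have he := (hQ0 _ _).mp this
      rw [hedef] at he
      rcases (mul_lt_iff f P _ _).mp he with h1 | ⟨h1, -⟩
      · exact le_of_lt h1
      · exact le_of_eq h1
  have Hstrict : ∀ k : Fin n, desc P Q k → h (fpred k) < h k := by
    intro k hk
    obtain ⟨hk0, hPk⟩ := hk
    have hlt : (fpred k) < k := Fin.lt_def.mpr (by simp only [fpred]; omega)
    have : Q0 (Q0.symm (fpred k)) < Q0 (Q0.symm k) := by simpa using hlt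
    have he := (hQ0 _ _).mp this
    rw [hedef] at he
    rcases (mul_lt_iff f P _ _).mp he with h1 | ⟨-, h2⟩
    · exact h1
    · exfalso
      have : (P.1 (Q.1.symm k)).1 < (P.1 (Q.1.symm (fpred k))).1 := Fin.lt_def.mp hPk
      simp only [hQdef] at this
      omega
  have hqle : ∀ b : Fin n, ped P Q b ≤ h b := ped_le P Q h Hmono Hstrict
  have htwo := ped_two_point P Q h Hmono Hstrict
  set g : Fin n → ℕ := fun k => h k - ped P Q k with hgdef
  have hgmono : Monotone g := by
    intro a b hab
    have h1 := htwo a b hab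
    have h2 := hqle a
    have h3 := hqle b
    simp only [hgdef]
    omega
  have hsum2 : (∑ k, ped P Q k) + ∑ k, g k = N := by
    have hph : ∀ k, ped P Q k + g k = h k := by
      intro k
      have := hqle k
      simp only [hgdef]
      omega
    calc (∑ k, ped P Q k) + ∑ k, g k = ∑ k, (ped P Q k + g k) := (Finset.sum_add_distrib).symm
    _ = ∑ k, h k := by simp only [hph]
    _ = ∑ x, f x := Equiv.sum_comp Q0.symm f
    _ = N := hsum
  refine ⟨⟨Q, g, hgmono, hsum2⟩, ?_⟩
  apply Subtype.ext
  funext x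
  show ped P Q (Q0 x) + g (Q0 x) = f x
  have hq3 := hqle (Q0 x)
  have hh : h (Q0 x) = f x := by
    simp only [hhdef]
    simp
  simp only [hgdef]
  omega


lemma finite_g (n v N : ℕ) : Finite {g : Fin n → ℕ // Monotone g ∧ v + ∑ k, g k = N} := by
  apply Finite.of_injective (fun s : {g : Fin n → ℕ // Monotone g ∧ v + ∑ k, g k = N} =>
    (fun k => (⟨s.1 k, by
      have h1 : s.1 k ≤ ∑ j, s.1 j :=
        Finset.single_le_sum (fun i _ => Nat.zero_le _) (mem_univ k)
      have h2 := s.2.2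
      omega⟩ : Fin (N + 1))))
  intro a b hab
  apply Subtype.ext
  funext k
  have := congrFun hab k
  simpa using congrArg Fin.val this

lemma finite_T (N : ℕ) : Finite (Tset X N) := by
  apply Finite.of_injective (fun s : Tset X N =>
    (fun x => (⟨s.1 x, by
      have h1 : s.1 x ≤ ∑ y, s.1 y :=
        Finset.single_le_sum (fun i _ => Nat.zero_le _) (mem_univ x)
      have h2 := s.2.2
      omega⟩ : Fin (N + 1))))
  intro a b hab
  apply Subtype.ext
  funext x
  have := congrFun hab x
  simpa using congrArg Fin.val this

/-- number of monotone `g : Fin n → ℕ` with total sum `M` -/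
noncomputable def Dcard (n M : ℕ) : ℕ := Nat.card {g : Fin n → ℕ // Monotone g ∧ ∑ k, g k = M}

lemma Dcard_zero (n : ℕ) : Dcard n 0 = 1 := by
  have : Unique {g : Fin n → ℕ // Monotone g ∧ ∑ k, g k = 0} := by
    refine ⟨⟨⟨fun _ => 0, monotone_const, by simp⟩⟩, ?_⟩
    rintro ⟨g, hg, hs⟩
    apply Subtype.ext
    funext k
    exact (Finset.sum_eq_zero_iff.mp hs) k (mem_univ k)
  exact Nat.card_unique

lemma fiber_card (P Q : LinExt X n) (N : ℕ) :
    Nat.card {g : Fin n → ℕ // Monotone g ∧ (∑ k, ped P Q k) + ∑ k, g k = N}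
      = if (∑ k, ped P Q k) ≤ N then Dcard n (N - ∑ k, ped P Q k) else 0 := by
  by_cases hv : (∑ k, ped P Q k) ≤ N
  · rw [if_pos hv]
    apply Nat.card_congr
    apply Equiv.subtypeEquivRight
    intro g
    constructor
    · rintro ⟨h1, h2⟩; exact ⟨h1, by omega⟩
    · rintro ⟨h1, h2⟩; exact ⟨h1, by omega⟩
  · rw [if_neg hv]
    have : IsEmpty {g : Fin n → ℕ // Monotone g ∧ (∑ k, ped P Q k) + ∑ k, g k = N} :=
      ⟨fun g => hv (by have := g.2.2; omega)⟩
    exact Nat.card_of_isEmpty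

lemma count_eq (hn : Fintype.card X = n) [Fintype (LinExt X n)] (P : LinExt X n) (N : ℕ) :
    ∑ Q : LinExt X n, (if (∑ k, ped P Q k) ≤ N then Dcard n (N - ∑ k, ped P Q k) else 0)
      = Nat.card (Tset X N) := by
  haveI : ∀ Q : LinExt X n,
      Finite {g : Fin n → ℕ // Monotone g ∧ (∑ k, ped P Q k) + ∑ k, g k = N} :=
    fun Q => finite_g n _ N
  letI : ∀ Q : LinExt X n,
      Fintype {g : Fin n → ℕ // Monotone g ∧ (∑ k, ped P Q k) + ∑ k, g k = N} :=
    fun Q => Fintype.ofFinite _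
  have hS : Nat.card (Sset X n P N)
      = ∑ Q : LinExt X n,
          Nat.card {g : Fin n → ℕ // Monotone g ∧ (∑ k, ped P Q k) + ∑ k, g k = N} := by
    have e : Sset X n P N ≃
        Σ Q : LinExt X n, {g : Fin n → ℕ // Monotone g ∧ (∑ k, ped P Q k) + ∑ k, g k = N} :=
      Equiv.refl _
    rw [Nat.card_congr e, Nat.card_eq_fintype_card, Fintype.card_sigma]
    exact Finset.sum_congr rfl fun Q _ => (Nat.card_eq_fintype_card).symm
  have hTS : Nat.card (Sset X n P N) = Nat.card (Tset X N) :=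
    Nat.card_congr (Equiv.ofBijective (Phi P N) ⟨Phi_injective P N, Phi_surjective hn P N⟩)
  calc ∑ Q : LinExt X n, (if (∑ k, ped P Q k) ≤ N then Dcard n (N - ∑ k, ped P Q k) else 0)
      = ∑ Q : LinExt X n,
          Nat.card {g : Fin n → ℕ // Monotone g ∧ (∑ k, ped P Q k) + ∑ k, g k = N} :=
        Finset.sum_congr rfl fun Q _ => (fiber_card P Q N).symm
    _ = Nat.card (Sset X n P N) := hS.symm
    _ = Nat.card (Tset X N) := hTS

lemma count_filter_eq (hn : Fintype.card X = n) [Fintype (LinExt X n)]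
    (P P' : LinExt X n) (N : ℕ) :
    ((univ : Finset (LinExt X n)).filter (fun Q => (∑ k, ped P Q k) = N)).card
      = ((univ : Finset (LinExt X n)).filter (fun Q => (∑ k, ped P' Q k) = N)).card := by
  induction N using Nat.strong_induction_on with
  | _ N ih =>
    have H : ∀ Pa : LinExt X n,
        ∑ Q : LinExt X n, (if (∑ k, ped Pa Q k) ≤ N then Dcard n (N - ∑ k, ped Pa Q k) else 0)
          = ∑ v ∈ Finset.range (N + 1),
              ((univ : Finset (LinExt X n)).filter (fun Q => (∑ k, ped Pa Q k) = v)).card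
                * Dcard n (N - v) := by
      intro Pa
      calc ∑ Q : LinExt X n,
            (if (∑ k, ped Pa Q k) ≤ N then Dcard n (N - ∑ k, ped Pa Q k) else 0)
          = ∑ Q : LinExt X n, ∑ v ∈ Finset.range (N + 1),
              (if (∑ k, ped Pa Q k) = v then Dcard n (N - v) else 0) := by
            apply Finset.sum_congr rfl
            intro Q _
            rw [Finset.sum_ite_eq (Finset.range (N + 1)) (∑ k, ped Pa Q k)
              (fun v => Dcard n (N - v))]
            simp [Nat.lt_succ_iff]
        _ = ∑ v ∈ Finset.range (N + 1), ∑ Q : LinExt X n,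
              (if (∑ k, ped Pa Q k) = v then Dcard n (N - v) else 0) := Finset.sum_comm
        _ = ∑ v ∈ Finset.range (N + 1),
              ((univ : Finset (LinExt X n)).filter (fun Q => (∑ k, ped Pa Q k) = v)).card
                * Dcard n (N - v) := by
            apply Finset.sum_congr rfl
            intro v _
            rw [← Finset.sum_filter, Finset.sum_const, smul_eq_mul]
    have hPP' := (H P).symm.trans ((count_eq hn P N).trans
      ((count_eq hn P' N).symm.trans (H P')))
    rw [Finset.sum_range_succ, Finset.sum_range_succ] at hPP'
    have hsmall : ∑ v ∈ Finset.range N,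
        ((univ : Finset (LinExt X n)).filter (fun Q => (∑ k, ped P Q k) = v)).card
          * Dcard n (N - v)
        = ∑ v ∈ Finset.range N,
        ((univ : Finset (LinExt X n)).filter (fun Q => (∑ k, ped P' Q k) = v)).card
          * Dcard n (N - v) := by
      apply Finset.sum_congr rfl
      intro v hv
      rw [ih v (Finset.mem_range.mp hv)]
    rw [hsmall, Nat.sub_self, Dcard_zero, Nat.mul_one, Nat.mul_one] at hPP'
    omega

end PedProof
end PedProof
open Finset in
/-- The pedestal generating polynomial `Π_P(t) = Σ_{Q ∈ Tot_X} t^{v(q_{PQ})} ∈ ℤ[t]`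
does not depend on the choice of the linear extension `P ∈ Tot_X`. -/
theorem pedestal_polynomial_P_independent (X : Type*) [PartialOrder X] [Fintype X]
    (n : ℕ) (hn : Fintype.card X = n) [Fintype (LinExt X n)] (P P' : LinExt X n) :
    ∑ Q : LinExt X n, (Polynomial.X : Polynomial ℤ) ^ (∑ k : Fin n, ped P Q k) =
      ∑ Q : LinExt X n, (Polynomial.X : Polynomial ℤ) ^ (∑ k : Fin n, ped P' Q k) := by
  apply Polynomial.ext
  intro N
  rw [Polynomial.finset_sum_coeff, Polynomial.finset_sum_coeff]
  have hcoef : ∀ Pa : LinExt X n,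
      ∑ Q : LinExt X n, ((Polynomial.X : Polynomial ℤ) ^ (∑ k : Fin n, ped Pa Q k)).coeff N
        = (((univ : Finset (LinExt X n)).filter
            (fun Q => (∑ k : Fin n, ped Pa Q k) = N)).card : ℤ) := by
    intro Pa
    have : ∀ Q : LinExt X n,
        ((Polynomial.X : Polynomial ℤ) ^ (∑ k : Fin n, ped Pa Q k)).coeff N
          = if (∑ k : Fin n, ped Pa Q k) = N then (1 : ℤ) else 0 := by
      intro Q
      rw [Polynomial.coeff_X_pow]
      simp [eq_comm]
    rw [Finset.sum_congr rfl fun Q _ => this Q, Finset.sum_boole]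
  rw [hcoef P, hcoef P', PedProof.PedProof.count_filter_eq hn P P' N]
end
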